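/- arXiv:1907.03690 — 6 statements merged into one kernel-verified Lean document; each statement's English description precedes it below -/
import Mathlib

section
/- Let L be a commutative Lie algebra over a field K of characteristic 2 and M an L-module. For x ∈ L define i(x) : Sym^n(L,M) → Sym^{n−1}(L,M) by (i(x)f)(x_1,…,x_{n−1}) = f(x,x_1,…,x_{n−1}), and θ(x) : Sym^n(L,M) → Sym^n(L,M) by (θ(x)f)(x_1,…,x_n) = x•f(x_1,…,x_n) + Σ_{i=1}^n f(x_1,…,[x,x_i],…,x_n). Then for all x, y ∈ L the Cartan formulas hold: (1) θ(x)∘i(y) + i(y)∘θ(x) = i([x,y]); (2) i(x)∘δ + δ∘i(x) = θ(x); (3) θ(x)∘δ = δ∘θ(x). -/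
/-!
STATEMENT 1: Cartan formulas for the commutative differential in characteristic 2:
(1) θ(x)∘i(y) + i(y)∘θ(x) = i([x,y]);
(2) i(x)∘δ + δ∘i(x) = θ(x);
(3) θ(x)∘δ = δ∘θ(x),
as identities of operators on symmetric multilinear cochains `Sym^•(L,M)` of a
commutative Lie algebra `L` (bracket `br`) with coefficients in an `L`-module `M`
(action `ρ`).  Formula (2) is also stated in degree 0, where `δ∘i(x)` is absent.
-/

def IsSym {L M : Type*} (n : ℕ) (f : (Fin n → L) → M) : Prop :=
  ∀ (σ : Equiv.Perm (Fin n)) (v : Fin n → L), f (v ∘ σ) = f v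

def cdiff {K L M : Type*} [CommSemiring K] [AddCommMonoid L] [Module K L]
    [AddCommMonoid M] [Module K M]
    (br : L →ₗ[K] L →ₗ[K] L) (ρ : L →ₗ[K] M →ₗ[K] M) (n : ℕ)
    (φ : (Fin n → L) → M) : (Fin (n + 1) → L) → M := fun x =>
  (∑ p ∈ Finset.univ.filter (fun p : Fin (n + 1) × Fin (n + 1) => p.1 < p.2),
      φ (Function.update x p.1 (br (x p.1) (x p.2)) ∘ p.2.succAbove)) +
  ∑ i : Fin (n + 1), ρ (x i) (φ (x ∘ i.succAbove))

/-- Insertion operator `i(x) : Sym^{n+1}(L,M) → Sym^n(L,M)`,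
`(i(x)f)(x_1,…,x_n) = f(x,x_1,…,x_n)`. -/
def iota {L M : Type*} (x : L) (n : ℕ) (f : (Fin (n + 1) → L) → M) :
    (Fin n → L) → M := fun v => f (Fin.cons x v)

/-- The natural (Lie-derivative) action `θ(x)` of `L` on cochains:
`(θ(x)f)(x_1,…,x_n) = x•f(x_1,…,x_n) + Σ_i f(x_1,…,[x,x_i],…,x_n)`. -/
def theta {K L M : Type*} [CommSemiring K] [AddCommMonoid L] [Module K L]
    [AddCommMonoid M] [Module K M]
    (br : L →ₗ[K] L →ₗ[K] L) (ρ : L →ₗ[K] M →ₗ[K] M) (n : ℕ) (x : L)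
    (f : (Fin n → L) → M) : (Fin n → L) → M := fun v =>
  ρ x (f v) + ∑ i : Fin n, f (Function.update v i (br x (v i)))

section Helpers

lemma char2_self_add (K : Type*) [Field K] [CharP K 2] {A : Type*} [AddCommGroup A]
    [Module K A] (a : A) : a + a = 0 := by
  have h2 : (2 : K) = 0 := by
    have := CharP.cast_eq_zero K 2
    exact_mod_cast this
  calc a + a = (2 : K) • a := (two_smul K a).symm
    _ = 0 := by rw [h2, zero_smul]


lemma update_comp_succAbove {α : Type*} {n : ℕ} (v : Fin (n + 1) → α) (i : Fin (n + 1))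
    (m : Fin n) (a : α) :
    Function.update v (i.succAbove m) a ∘ i.succAbove = Function.update (v ∘ i.succAbove) m a := by
  funext l
  rcases eq_or_ne l m with rfl | h
  · simp [Function.comp]
  · have h' : i.succAbove l ≠ i.succAbove m := fun hc => h (Fin.succAbove_right_injective hc)
    simp [Function.comp, Function.update_of_ne h, Function.update_of_ne h']

lemma update_self_comp_succAbove {α : Type*} {n : ℕ} (v : Fin (n + 1) → α) (i : Fin (n + 1))
    (a : α) : Function.update v i a ∘ i.succAbove = v ∘ i.succAbove := by
  funext l
  simp [Function.comp, Function.update_of_ne (Fin.succAbove_ne i l)]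

lemma cons_comp_succ_succAbove {α : Type*} {n : ℕ} (a : α) (w : Fin (n + 1) → α)
    (j : Fin (n + 1)) :
    Fin.cons a w ∘ (j.succ).succAbove = Fin.cons a (w ∘ j.succAbove) := by
  funext k
  refine Fin.cases ?_ (fun m => ?_) k
  · simp
  · simp [Fin.succ_succAbove_succ]

lemma cons_comp_succ {α : Type*} {n : ℕ} (a : α) (w : Fin n → α) :
    Fin.cons a w ∘ Fin.succ = w := by
  funext k; simp

lemma isSym_cons_eq {L M : Type*} {n : ℕ} {f : (Fin (n + 1) → L) → M}
    (hf : IsSym (n + 1) f) (a : L) (v : Fin (n + 1) → L) (j : Fin (n + 1)) :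
    f (Fin.cons a (v ∘ j.succAbove)) = f (Function.update v j a) := by
  have h : Function.update v j a
      = (Fin.cons a (v ∘ j.succAbove)) ∘ (j.cycleRange : Equiv.Perm (Fin (n + 1))) := by
    funext k
    rcases eq_or_ne k j with rfl | hk
    · simp [Fin.cycleRange_self]
    · obtain ⟨m, rfl⟩ := Fin.exists_succAbove_eq hk
      simp [Function.update_of_ne hk, Fin.cycleRange_succAbove, Function.comp]
  rw [h, hf]

lemma sum_pairs_succ {β : Type*} [AddCommMonoid β] (N : ℕ) (F : Fin (N + 1) → Fin (N + 1) → β) :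
    ∑ p ∈ Finset.univ.filter (fun p : Fin (N + 1) × Fin (N + 1) => p.1 < p.2), F p.1 p.2
      = (∑ j : Fin N, F 0 j.succ)
        + ∑ p ∈ Finset.univ.filter (fun p : Fin N × Fin N => p.1 < p.2), F p.1.succ p.2.succ := by
  rw [Finset.sum_filter, Finset.sum_filter, Fintype.sum_prod_type, Fintype.sum_prod_type]
  rw [Fin.sum_univ_succ]
  congr 1
  · rw [Fin.sum_univ_succ]
    simp [Fin.succ_pos]
  · apply Finset.sum_congr rfl
    intro i _
    rw [Fin.sum_univ_succ]
    have h0 : ¬ (i.succ < (0 : Fin (N + 1))) := by simp [Fin.not_lt_zero]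
    simp [h0, Fin.succ_lt_succ_iff]

lemma jacobi_sum {K L M : Type*} [Field K] [CharP K 2]
    [AddCommGroup L] [Module K L] [AddCommGroup M] [Module K M]
    (br : L →ₗ[K] L →ₗ[K] L)
    (hcomm : ∀ x y : L, br x y = br y x)
    (hjac : ∀ x y z : L, br (br x y) z + br (br z x) y + br (br y z) x = 0)
    {n : ℕ} (f : MultilinearMap K (fun _ : Fin n => L) M)
    (x : L) (v : Fin (n + 1) → L) (i j : Fin (n + 1)) (hij : i ≠ j) :
    (∑ k : Fin (n + 1), f (Function.update (Function.update v k (br x (v k))) i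
        (br (Function.update v k (br x (v k)) i) (Function.update v k (br x (v k)) j))
          ∘ j.succAbove))
      = ∑ m : Fin n, f (Function.update
          (Function.update v i (br (v i) (v j)) ∘ j.succAbove) m
          (br x ((Function.update v i (br (v i) (v j)) ∘ j.succAbove) m))) := by
  obtain ⟨m₀, hm₀⟩ := Fin.exists_succAbove_eq hij
  set b : L := br (v i) (v j) with hb
  set w : Fin (n + 1) → L := Function.update v i b with hw
  -- RHS = ∑ k G' k - f (w ∘ j.succAbove)
  have eR : ∀ m : Fin n, Function.update (w ∘ j.succAbove) m (br x ((w ∘ j.succAbove) m))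
      = Function.update w (j.succAbove m) (br x (w (j.succAbove m))) ∘ j.succAbove := by
    intro m
    rw [update_comp_succAbove]
    rfl
  have hRHS : (∑ m : Fin n, f (Function.update (w ∘ j.succAbove) m (br x ((w ∘ j.succAbove) m))))
      = (∑ k : Fin (n + 1), f (Function.update w k (br x (w k)) ∘ j.succAbove))
        - f (w ∘ j.succAbove) := by
    simp only [eR]
    rw [Fin.sum_univ_succAbove (fun k => f (Function.update w k (br x (w k)) ∘ j.succAbove)) j,
      update_self_comp_succAbove]
    abel
  rw [hRHS]
  rw [Fin.sum_univ_succAbove (fun k => f (Function.update (Function.update v k (br x (v k))) i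
        (br (Function.update v k (br x (v k)) i) (Function.update v k (br x (v k)) j))
          ∘ j.succAbove)) j,
    Fin.sum_univ_succAbove (fun k => f (Function.update w k (br x (w k)) ∘ j.succAbove)) j]
  rw [update_self_comp_succAbove]
  -- difference of the two inner sums concentrates at m₀
  have hdiff : (∑ m : Fin n,
        (f (Function.update (Function.update v (j.succAbove m) (br x (v (j.succAbove m)))) i
            (br (Function.update v (j.succAbove m) (br x (v (j.succAbove m))) i)
               (Function.update v (j.succAbove m) (br x (v (j.succAbove m))) j))
              ∘ j.succAbove)
          - f (Function.update w (j.succAbove m) (br x (w (j.succAbove m))) ∘ j.succAbove)))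
      = f (Function.update (Function.update v i (br x (v i))) i
            (br (Function.update v i (br x (v i)) i) (Function.update v i (br x (v i)) j))
              ∘ j.succAbove)
        - f (Function.update w i (br x (w i)) ∘ j.succAbove) := by
    rw [Finset.sum_eq_single_of_mem m₀ (Finset.mem_univ m₀)]
    · rw [hm₀]
    · intro m _ hm
      have hk1 : j.succAbove m ≠ i := by
        intro h
        exact hm (Fin.succAbove_right_injective (p := j) (by rw [hm₀, h]))
      have hk2 : j.succAbove m ≠ j := Fin.succAbove_ne j m
      have e1 : Function.update v (j.succAbove m) (br x (v (j.succAbove m))) i = v i :=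
        Function.update_of_ne (Ne.symm hk1) _ v
      have e2 : Function.update v (j.succAbove m) (br x (v (j.succAbove m))) j = v j :=
        Function.update_of_ne (Ne.symm hk2) _ v
      have e3 : w (j.succAbove m) = v (j.succAbove m) := Function.update_of_ne hk1 _ v
      rw [e1, e2, e3, sub_eq_zero]
      congr 1
      rw [hw, ← hb, Function.update_comm hk1]
  -- compute the three special values
  have eA : (Function.update (Function.update v i (br x (v i))) i
        (br (Function.update v i (br x (v i)) i) (Function.update v i (br x (v i)) j))
          ∘ j.succAbove)
      = Function.update (v ∘ j.succAbove) m₀ (br (br x (v i)) (v j)) := by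
    rw [Function.update_self, Function.update_of_ne (Ne.symm hij), Function.update_idem,
      ← hm₀, update_comp_succAbove]
  have eB : (Function.update (Function.update v j (br x (v j))) i
        (br (Function.update v j (br x (v j)) i) (Function.update v j (br x (v j)) j))
          ∘ j.succAbove)
      = Function.update (v ∘ j.succAbove) m₀ (br (v i) (br x (v j))) := by
    rw [Function.update_self, Function.update_of_ne hij,
      Function.update_comm (Ne.symm hij), update_self_comp_succAbove, ← hm₀,
      update_comp_succAbove]
  have eR' : (Function.update w i (br x (w i)) ∘ j.succAbove)
      = Function.update (v ∘ j.succAbove) m₀ (br x b) := by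
    rw [hw, Function.update_self, Function.update_idem, ← hm₀, update_comp_succAbove]
  have key : f (Function.update (v ∘ j.succAbove) m₀ (br (v i) (br x (v j))))
        + f (Function.update (v ∘ j.succAbove) m₀ (br (br x (v i)) (v j)))
      = f (Function.update (v ∘ j.succAbove) m₀ (br x b)) := by
    rw [← f.map_update_add]
    have h2L : ∀ a : L, a + a = 0 := char2_self_add K
    have hj := hjac x (v i) (v j)
    rw [hcomm (v j) x, hcomm (br x (v j)) (v i), hcomm (br (v i) (v j)) x, ← hb] at hj
    have hbr : br (v i) (br x (v j)) + br (br x (v i)) (v j) = br x b := calc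
      br (v i) (br x (v j)) + br (br x (v i)) (v j)
        = br (v i) (br x (v j)) + br (br x (v i)) (v j) + (br x b + br x b) := by
          rw [h2L, add_zero]
      _ = (br (br x (v i)) (v j) + br (v i) (br x (v j)) + br x b) + br x b := by abel
      _ = 0 + br x b := by rw [hj]
      _ = br x b := zero_add _
    rw [hbr]
  rw [Finset.sum_sub_distrib] at hdiff
  rw [eA, eR'] at hdiff
  rw [eB]
  rw [sub_eq_iff_eq_add] at hdiff
  rw [hdiff, ← key]
  abel

end Helpers

theorem cartan_formulas {K L M : Type*} [Field K] [CharP K 2]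
    [AddCommGroup L] [Module K L] [AddCommGroup M] [Module K M]
    (br : L →ₗ[K] L →ₗ[K] L)
    (hcomm : ∀ x y : L, br x y = br y x)
    (hjac : ∀ x y z : L, br (br x y) z + br (br z x) y + br (br y z) x = 0)
    (ρ : L →ₗ[K] M →ₗ[K] M)
    (hmod : ∀ (x y : L) (m : M), ρ (br x y) m = ρ x (ρ y m) + ρ y (ρ x m))
    (x y : L) :
    -- (1)  θ(x) i(y) + i(y) θ(x) = i([x,y])
    (∀ (n : ℕ) (f : MultilinearMap K (fun _ : Fin (n + 1) => L) M), IsSym (n + 1) ⇑f →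
      theta br ρ n x (iota y n ⇑f) + iota y n (theta br ρ (n + 1) x ⇑f)
        = iota (br x y) n ⇑f) ∧
    -- (2)  i(x) δ + δ i(x) = θ(x)  (in positive degrees)
    (∀ (n : ℕ) (f : MultilinearMap K (fun _ : Fin (n + 1) => L) M), IsSym (n + 1) ⇑f →
      iota x (n + 1) (cdiff br ρ (n + 1) ⇑f) + cdiff br ρ n (iota x n ⇑f)
        = theta br ρ (n + 1) x ⇑f) ∧
    -- (2')  i(x) δ = θ(x) in degree 0
    (∀ f : (Fin 0 → L) → M, iota x 0 (cdiff br ρ 0 f) = theta br ρ 0 x f) ∧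
    -- (3)  θ(x) δ = δ θ(x)
    (∀ (n : ℕ) (f : MultilinearMap K (fun _ : Fin n => L) M), IsSym n ⇑f →
      theta br ρ (n + 1) x (cdiff br ρ n ⇑f) = cdiff br ρ n (theta br ρ n x ⇑f)) := by
  have hM : ∀ m : M, m + m = 0 := char2_self_add K
  refine ⟨?_, ?_, ?_, ?_⟩
  · -- part (1)
    intro n f hf
    funext v
    simp only [theta, iota, Pi.add_apply]
    have hsum : (∑ j : Fin (n + 1),
          f (Function.update (Fin.cons y v : Fin (n+1) → L) j (br x ((Fin.cons y v : Fin (n+1) → L) j))))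
        = f (Fin.cons (br x y) v)
          + ∑ i : Fin n, f (Fin.cons y (Function.update v i (br x (v i)))) := by
      rw [Fin.sum_univ_succ]
      congr 1
      · rw [Fin.cons_zero, Fin.update_cons_zero]
      · apply Finset.sum_congr rfl
        intro i _
        rw [Fin.cons_succ, ← Fin.cons_update]
    rw [hsum]
    generalize ρ x (f (Fin.cons y v)) = a
    generalize (∑ i : Fin n, f (Fin.cons y (Function.update v i (br x (v i))))) = s
    generalize f (Fin.cons (br x y) v) = t
    rw [← sub_eq_zero]
    have h : a + s + (a + (t + s)) - t = (a + a) + (s + s) := by abel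
    rw [h, hM, hM, add_zero]
  · -- part (2)
    intro n f hf
    funext v
    simp only [Pi.add_apply, iota, cdiff, theta]
    rw [sum_pairs_succ (n + 1) (fun a b =>
      f (Function.update (Fin.cons x v : Fin (n + 2) → L) a
        (br ((Fin.cons x v : Fin (n + 2) → L) a) ((Fin.cons x v : Fin (n + 2) → L) b))
          ∘ b.succAbove))]
    have hA : ∀ j : Fin (n + 1),
        f (Function.update (Fin.cons x v : Fin (n + 2) → L) 0
            (br ((Fin.cons x v : Fin (n + 2) → L) 0) ((Fin.cons x v : Fin (n + 2) → L) j.succ))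
              ∘ (j.succ).succAbove)
          = f (Function.update v j (br x (v j))) := by
      intro j
      simp only [Fin.cons_zero, Fin.cons_succ, Fin.update_cons_zero, cons_comp_succ_succAbove]
      exact isSym_cons_eq hf _ v j
    have hB : ∀ a b : Fin (n + 1),
        f (Function.update (Fin.cons x v : Fin (n + 2) → L) a.succ
            (br ((Fin.cons x v : Fin (n + 2) → L) a.succ) ((Fin.cons x v : Fin (n + 2) → L) b.succ))
              ∘ (b.succ).succAbove)
          = f (Fin.cons x (Function.update v a (br (v a) (v b)) ∘ b.succAbove)) := by
      intro a b
      rw [Fin.cons_succ, Fin.cons_succ, ← Fin.cons_update, cons_comp_succ_succAbove]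
    have hC : (∑ i : Fin (n + 1 + 1), ρ ((Fin.cons x v : Fin (n + 2) → L) i)
          (f ((Fin.cons x v : Fin (n + 2) → L) ∘ i.succAbove)))
        = ρ x (f v) + ∑ j : Fin (n + 1), ρ (v j) (f (Fin.cons x (v ∘ j.succAbove))) := by
      rw [Fin.sum_univ_succ, Fin.succAbove_zero, cons_comp_succ, Fin.cons_zero]
      congr 1
      apply Finset.sum_congr rfl
      intro j _
      rw [Fin.cons_succ, cons_comp_succ_succAbove]
    simp only [hA, hB]
    rw [hC]
    generalize (∑ j : Fin (n + 1), f (Function.update v j (br x (v j)))) = S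
    generalize (∑ p ∈ Finset.univ.filter (fun p : Fin (n + 1) × Fin (n + 1) => p.1 < p.2),
      f (Fin.cons x (Function.update v p.1 (br (v p.1) (v p.2)) ∘ p.2.succAbove))) = Q
    generalize (ρ x) (f v) = a
    generalize (∑ j : Fin (n + 1), ρ (v j) (f (Fin.cons x (v ∘ j.succAbove)))) = R
    rw [← sub_eq_zero]
    have h : S + Q + (a + R) + (Q + R) - (a + S) = (Q + Q) + (R + R) := by abel
    rw [h, hM, hM, add_zero]
  · -- part (2')
    intro f
    funext v
    simp only [iota, cdiff, theta]
    have h1 : (Finset.univ.filter (fun p : Fin 1 × Fin 1 => p.1 < p.2)) = ∅ := by decide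
    rw [h1]
    simp only [Finset.sum_empty, zero_add]
    rw [Fin.sum_univ_one]
    have h2 : ∀ w : Fin 0 → L, w = (Fin.cons x v ∘ (0 : Fin 1).succAbove) := by
      intro w; funext k; exact k.elim0
    rw [Fin.cons_zero, ← h2 v]
    have h3 : (∑ i : Fin 0, f (Function.update v i (br x (v i)))) = 0 := rfl
    rw [h3, add_zero]
  · -- part (3)
    intro n f hf
    funext v
    simp only [theta, cdiff, Pi.add_apply]
    have h3 : ∀ k : Fin (n + 1),
        (∑ i : Fin (n + 1), ρ (Function.update v k (br x (v k)) i)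
            (f (Function.update v k (br x (v k)) ∘ i.succAbove)))
          = (∑ i : Fin (n + 1), ρ (v i) (f (Function.update v k (br x (v k)) ∘ i.succAbove)))
            + ρ (br x (v k)) (f (v ∘ k.succAbove)) - ρ (v k) (f (v ∘ k.succAbove)) := by
      intro k
      have e3 : ∀ m : Fin n,
          Function.update v k (br x (v k)) (k.succAbove m) = v (k.succAbove m) :=
        fun m => Function.update_of_ne (Fin.succAbove_ne k m) _ v
      rw [Fin.sum_univ_succAbove (fun i => ρ (Function.update v k (br x (v k)) i)
            (f (Function.update v k (br x (v k)) ∘ i.succAbove))) k,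
        Fin.sum_univ_succAbove (fun i => ρ (v i)
            (f (Function.update v k (br x (v k)) ∘ i.succAbove))) k]
      simp only [e3, Function.update_self, update_self_comp_succAbove]
      abel
    simp only [h3]
    have h4 : ∀ i : Fin (n + 1),
        (∑ m : Fin n, f (Function.update (v ∘ i.succAbove) m (br x ((v ∘ i.succAbove) m))))
          = (∑ k : Fin (n + 1), f (Function.update v k (br x (v k)) ∘ i.succAbove))
            - f (v ∘ i.succAbove) := by
      intro i
      have e : ∀ m : Fin n, Function.update (v ∘ i.succAbove) m (br x ((v ∘ i.succAbove) m))
          = Function.update v (i.succAbove m) (br x (v (i.succAbove m))) ∘ i.succAbove := by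
        intro m; rw [update_comp_succAbove]; rfl
      simp only [e]
      rw [Fin.sum_univ_succAbove (fun k => f (Function.update v k (br x (v k)) ∘ i.succAbove)) i,
        update_self_comp_succAbove]
      abel
    simp only [h4]
    simp only [map_add, map_sub, map_sum, Finset.sum_add_distrib, Finset.sum_sub_distrib]
    have h5 : (∑ k : Fin (n + 1),
          ∑ p ∈ Finset.filter (fun p : Fin (n + 1) × Fin (n + 1) => p.1 < p.2) Finset.univ,
            f (Function.update (Function.update v k (br x (v k))) p.1
                (br (Function.update v k (br x (v k)) p.1) (Function.update v k (br x (v k)) p.2))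
                  ∘ p.2.succAbove))
        = ∑ p ∈ Finset.filter (fun p : Fin (n + 1) × Fin (n + 1) => p.1 < p.2) Finset.univ,
            ∑ m : Fin n, f (Function.update
              (Function.update v p.1 (br (v p.1) (v p.2)) ∘ p.2.succAbove) m
              (br x ((Function.update v p.1 (br (v p.1) (v p.2)) ∘ p.2.succAbove) m))) := by
      rw [Finset.sum_comm]
      apply Finset.sum_congr rfl
      intro p hp
      exact jacobi_sum br hcomm hjac f x v p.1 p.2 (ne_of_lt (Finset.mem_filter.mp hp).2)
    rw [h5]
    have h6 : (∑ k : Fin (n + 1), ρ (br x (v k)) (f (v ∘ k.succAbove)))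
        = (∑ k : Fin (n + 1), ρ x (ρ (v k) (f (v ∘ k.succAbove))))
          + ∑ k : Fin (n + 1), ρ (v k) (ρ x (f (v ∘ k.succAbove))) := by
      rw [← Finset.sum_add_distrib]
      exact Finset.sum_congr rfl fun k _ => hmod x (v k) _
    rw [h6]
    have hswap : (∑ k : Fin (n + 1), ∑ i : Fin (n + 1),
          ρ (v i) (f (Function.update v k (br x (v k)) ∘ i.succAbove)))
        = ∑ i : Fin (n + 1), ∑ k : Fin (n + 1),
          ρ (v i) (f (Function.update v k (br x (v k)) ∘ i.succAbove)) := Finset.sum_comm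
    rw [hswap]
    generalize (∑ p ∈ Finset.filter (fun p : Fin (n + 1) × Fin (n + 1) => p.1 < p.2) Finset.univ,
      (ρ x) (f (Function.update v p.1 (br (v p.1) (v p.2)) ∘ p.2.succAbove))) = P1
    generalize (∑ k : Fin (n + 1), (ρ x) ((ρ (v k)) (f (v ∘ k.succAbove)))) = A2
    generalize (∑ p ∈ Finset.filter (fun p : Fin (n + 1) × Fin (n + 1) => p.1 < p.2) Finset.univ,
      ∑ m : Fin n, f (Function.update
        (Function.update v p.1 (br (v p.1) (v p.2)) ∘ p.2.succAbove) m
        (br x ((Function.update v p.1 (br (v p.1) (v p.2)) ∘ p.2.succAbove) m)))) = P2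
    generalize (∑ i : Fin (n + 1), ∑ k : Fin (n + 1),
      (ρ (v i)) (f (Function.update v k (br x (v k)) ∘ i.succAbove))) = D
    generalize (∑ k : Fin (n + 1), (ρ (v k)) ((ρ x) (f (v ∘ k.succAbove)))) = B2
    generalize (∑ i : Fin (n + 1), (ρ (v i)) (f (v ∘ i.succAbove))) = A6
    rw [← sub_eq_zero]
    have e : P1 + A2 + (P2 + (D + (A2 + B2) - A6)) - (P1 + P2 + (B2 + (D - A6)))
        = A2 + A2 := by abel
    rw [e, hM]
end

section
/- Every simple commutative Lie algebra over a field K of characteristic 2 is a Lie algebra: if L is a commutative Lie algebra with [L,L] ≠ 0 whose only ideals are 0 and L, then [x,x] = 0 for all x ∈ L. -/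
/-!
STATEMENT 4: Every simple commutative Lie algebra over a field of characteristic 2
is a Lie algebra: if `L` is a commutative Lie algebra with `[L,L] ≠ 0` whose only
ideals are `0` and `L`, then `[x,x] = 0` for all `x ∈ L`.
-/

theorem simple_commutative_lie_is_lie {K L : Type*} [Field K] [CharP K 2]
    [AddCommGroup L] [Module K L]
    (br : L →ₗ[K] L →ₗ[K] L)
    (hcomm : ∀ x y : L, br x y = br y x)
    (hjac : ∀ x y z : L, br (br x y) z + br (br z x) y + br (br y z) x = 0)
    -- `[L,L] ≠ 0`:
    (hnonab : ∃ x y : L, br x y ≠ 0)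
    -- the only ideals of `L` are `0` and `L`:
    (hsimple : ∀ I : Submodule K L, (∀ a ∈ I, ∀ y : L, br a y ∈ I) → I = ⊥ ∨ I = ⊤) :
    ∀ x : L, br x x = 0 := by
  -- In characteristic 2, `v + v = 0` for all `v : L`.
  have h2 : ∀ v : L, v + v = 0 := by
    intro v
    have : ((2 : K)) • v = v + v := by
      rw [show (2 : K) = 1 + 1 by norm_num, add_smul, one_smul]
    rw [← this, show (2 : K) = 0 from CharP.cast_eq_zero K 2, zero_smul]
  -- The "center" ideal
  set Z : Submodule K L := ⨅ y : L, LinearMap.ker (br.flip y) with hZ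
  have memZ : ∀ z : L, z ∈ Z ↔ ∀ y : L, br z y = 0 := by
    intro z
    simp [hZ, Submodule.mem_iInf, LinearMap.mem_ker]
  -- Z is an ideal
  have hideal : ∀ a ∈ Z, ∀ y : L, br a y ∈ Z := by
    intro a ha y
    rw [memZ] at ha ⊢
    intro w
    rw [ha y]
    simp
  -- br x x ∈ Z by Jacobi
  have hq : ∀ x : L, br x x ∈ Z := by
    intro x
    rw [memZ]
    intro y
    have := hjac x x y
    rw [hcomm y x] at this
    rwa [add_assoc, h2 (br (br x y) x), add_zero] at this
  rcases hsimple Z hideal with hbot | htop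
  · intro x
    have := hq x
    rw [hbot, Submodule.mem_bot] at this
    exact this
  · exfalso
    obtain ⟨x, y, hxy⟩ := hnonab
    have : x ∈ Z := htop ▸ Submodule.mem_top
    exact hxy ((memZ x).mp this y)
end

section
/- Let L be a commutative Lie algebra over a field K of characteristic 2. For φ ∈ Sym^p(L,K) and ψ ∈ Sym^q(L,K), define the cup product (φ ⌣ ψ)(x_1,…,x_{p+q}) = Σ_{IJ} φ(x_{i_1},…,x_{i_p})·ψ(x_{j_1},…,x_{j_q}), the sum over all shuffles, i.e. partitions of {1,…,p+q} into disjoint increasing subsequences I = {i_1 < … < i_p} and J = {j_1 < … < j_q}. Then the commutative differential δ is a derivation with respect to ⌣: for all such φ, ψ, δ(φ ⌣ ψ) = (δφ) ⌣ ψ + φ ⌣ (δψ). -/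
/-- The shuffle cup product `(φ ⌣ ψ)(x_1,…,x_n) = Σ_{IJ} φ(x_I)·ψ(x_J)`, the sum being
over all partitions of `{1,…,n}` into disjoint increasing subsequences `I` of size `p`
and `J` of size `q` (nonzero only when `p + q = n`). -/
def cup (K : Type*) {L : Type*} [Field K] [AddCommGroup L] [Module K L]
    (p q n : ℕ) (φ : (Fin p → L) → K) (ψ : (Fin q → L) → K) :
    (Fin n → L) → K := fun x =>
  ∑ S : Finset (Fin n),
    if h : S.card = p ∧ Sᶜ.card = q then
      φ (fun i => x ((S.orderIsoOfFin h.1 i : Fin n))) *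
      ψ (fun j => x ((Sᶜ.orderIsoOfFin h.2 j : Fin n)))
    else 0

open Finset Function

namespace CdiffCup

variable {N : ℕ}

/-- position of `t` in `T` (junk `0` otherwise) -/
def posIn (r : ℕ) (T : Finset (Fin (N+1))) (t : Fin (N+1)) : Fin (r+1) :=
  if h : T.card = r + 1 ∧ t ∈ T then (T.orderIsoOfFin h.1).symm ⟨t, h.2⟩ else 0

/-- `a`-th element of `T` (junk `0` otherwise) -/
def enumIn {k : ℕ} (T : Finset (Fin (N+1))) (a : Fin k) : Fin (N+1) :=
  if h : T.card = k then T.orderEmbOfFin h a else 0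

lemma enumIn_eq {k : ℕ} (T : Finset (Fin (N+1))) (h : T.card = k) (a : Fin k) :
    enumIn T a = T.orderEmbOfFin h a := dif_pos h

lemma posIn_lt_posIn {r : ℕ} {T : Finset (Fin (N+1))} (h : T.card = r+1)
    {t u : Fin (N+1)} (ht : t ∈ T) (hu : u ∈ T) (htu : t < u) :
    posIn r T t < posIn r T u := by
  rw [posIn, dif_pos ⟨h, ht⟩, posIn, dif_pos ⟨h, hu⟩]
  exact (T.orderIsoOfFin h).symm.lt_iff_lt.2 htu

lemma enumIn_posIn {r : ℕ} {T : Finset (Fin (N+1))} (h : T.card = r+1)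
    {t : Fin (N+1)} (ht : t ∈ T) : enumIn T (posIn r T t) = t := by
  rw [posIn, dif_pos ⟨h, ht⟩, enumIn, dif_pos h, ← Finset.coe_orderIsoOfFin_apply,
    OrderIso.apply_symm_apply]

lemma posIn_enumIn {r : ℕ} {T : Finset (Fin (N+1))} (h : T.card = r+1) (a : Fin (r+1)) :
    posIn r T (enumIn T a) = a := by
  rw [enumIn, dif_pos h, posIn, dif_pos ⟨h, T.orderEmbOfFin_mem h a⟩]
  have : (⟨T.orderEmbOfFin h a, T.orderEmbOfFin_mem h a⟩ : {y // y ∈ T}) = T.orderIsoOfFin h a :=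
    Subtype.ext (Finset.coe_orderIsoOfFin_apply T h a).symm
  rw [this, OrderIso.symm_apply_apply]

/-- image of `S` under `succAbove j` -/
def push (j : Fin (N+1)) (S : Finset (Fin N)) : Finset (Fin (N+1)) :=
  S.image j.succAbove

/-- preimage of `T` under `succAbove j` -/
def pull (j : Fin (N+1)) (T : Finset (Fin (N+1))) : Finset (Fin N) :=
  Finset.univ.filter (fun k => j.succAbove k ∈ T)

lemma mem_push {j : Fin (N+1)} {S : Finset (Fin N)} {k : Fin N} :
    j.succAbove k ∈ push j S ↔ k ∈ S :=
  Fin.succAbove_right_injective.mem_finset_image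

lemma mem_pull {j : Fin (N+1)} {T : Finset (Fin (N+1))} {k : Fin N} :
    k ∈ pull j T ↔ j.succAbove k ∈ T := by simp [pull]

lemma push_card {j : Fin (N+1)} (S : Finset (Fin N)) : (push j S).card = S.card :=
  Finset.card_image_of_injective _ Fin.succAbove_right_injective

lemma notmem_push {j : Fin (N+1)} (S : Finset (Fin N)) : j ∉ push j S := fun h => by
  obtain ⟨k, -, hk⟩ := Finset.mem_image.1 h
  exact Fin.succAbove_ne j k hk

lemma pull_insert_push (j : Fin (N+1)) (S : Finset (Fin N)) :
    pull j (insert j (push j S)) = S := by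
  ext k
  simp only [mem_pull, Finset.mem_insert]
  have := Fin.succAbove_ne j k
  simp [this, mem_push]

lemma push_pull {j : Fin (N+1)} {T : Finset (Fin (N+1))} :
    push j (pull j T) = T.erase j := by
  ext t
  simp only [push, Finset.mem_image, mem_pull, Finset.mem_erase]
  constructor
  · rintro ⟨k, hk, rfl⟩; exact ⟨Fin.succAbove_ne j k, hk⟩
  · rintro ⟨hne, ht⟩
    obtain ⟨k, rfl⟩ := Fin.exists_succAbove_eq hne
    exact ⟨k, ht, rfl⟩

lemma insert_push_pull {j : Fin (N+1)} {T : Finset (Fin (N+1))} (hj : j ∈ T) :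
    insert j (push j (pull j T)) = T := by
  rw [push_pull, Finset.insert_erase hj]

lemma pull_compl {j : Fin (N+1)} {T : Finset (Fin (N+1))} :
    pull j Tᶜ = (pull j T)ᶜ := by
  ext k; simp [mem_pull]

lemma pull_card {j : Fin (N+1)} {T : Finset (Fin (N+1))} (hj : j ∈ T) :
    (pull j T).card + 1 = T.card := by
  have h1 : (pull j T).card = (T.erase j).card := by rw [← push_pull, push_card]; 
  rw [h1, Finset.card_erase_of_mem hj]
  exact Nat.succ_pred_eq_of_pos (Finset.card_pos.2 ⟨j, hj⟩)

/-- Key compatibility of enumerations between `S` and `T = insert j (push j S)`. -/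
lemma enum_compat {r : ℕ} {T : Finset (Fin (N+1))} (hT : T.card = r + 1)
    {S : Finset (Fin N)} (hS : S.card = r) {j : Fin (N+1)} {b : Fin (r+1)}
    (hjb : T.orderEmbOfFin hT b = j) (hpush : push j S = T.erase j) (k : Fin r) :
    j.succAbove (S.orderEmbOfFin hS k) = T.orderEmbOfFin hT (b.succAbove k) := by
  have hjT : j ∈ T := hjb ▸ T.orderEmbOfFin_mem hT b
  have hcard : (T.erase j).card = r := by
    rw [Finset.card_erase_of_mem hjT, hT]; rfl
  have h1 : (fun k => j.succAbove (S.orderEmbOfFin hS k)) = ⇑((T.erase j).orderEmbOfFin hcard) := by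
    apply Finset.orderEmbOfFin_unique
    · intro k
      rw [← hpush]
      exact Finset.mem_image_of_mem _ (S.orderEmbOfFin_mem hS k)
    · exact (Fin.strictMono_succAbove j).comp (S.orderEmbOfFin hS).strictMono
  have h2 : (fun k => T.orderEmbOfFin hT (b.succAbove k)) = ⇑((T.erase j).orderEmbOfFin hcard) := by
    apply Finset.orderEmbOfFin_unique
    · intro k
      refine Finset.mem_erase.2 ⟨?_, T.orderEmbOfFin_mem hT _⟩
      rw [← hjb]
      intro hcontra
      exact Fin.succAbove_ne b k ((T.orderEmbOfFin hT).injective hcontra)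
    · exact (T.orderEmbOfFin hT).strictMono.comp (Fin.strictMono_succAbove b)
  rw [congrFun h1 k, congrFun h2 k]

/-- Complement compatibility: `succAbove j` carries the enumeration of `Sᶜ` to that of `Tᶜ`. -/
lemma enum_compat_compl {s' : ℕ} {T : Finset (Fin (N+1))} {S : Finset (Fin N)}
    (hTc : Tᶜ.card = s') (hSc : Sᶜ.card = s') {j : Fin (N+1)}
    (hpull : pull j T = S) (k : Fin s') :
    j.succAbove (Sᶜ.orderEmbOfFin hSc k) = Tᶜ.orderEmbOfFin hTc k := by
  have h1 : (fun k => j.succAbove (Sᶜ.orderEmbOfFin hSc k)) = ⇑(Tᶜ.orderEmbOfFin hTc) := by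
    apply Finset.orderEmbOfFin_unique
    · intro k
      have hk : Sᶜ.orderEmbOfFin hSc k ∈ Sᶜ := Sᶜ.orderEmbOfFin_mem hSc k
      rw [Finset.mem_compl] at hk ⊢
      intro hT
      have h2 := mem_pull.2 hT
      rw [hpull] at h2
      exact hk h2
    · exact (Fin.strictMono_succAbove j).comp (Sᶜ.orderEmbOfFin hSc).strictMono
  exact congrFun h1 k


lemma enum_congr {α : Type*} [LinearOrder α] {s t : Finset α} (hst : s = t) {k : ℕ}
    (hs : s.card = k) (ht : t.card = k) (a : Fin k) :
    s.orderEmbOfFin hs a = t.orderEmbOfFin ht a := by subst hst; rfl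

lemma mem_push_compl {j : Fin (N+1)} {S : Finset (Fin N)} {i : Fin (N+1)} (hij : i ≠ j) :
    i ∈ push j Sᶜ ↔ i ∉ push j S := by
  obtain ⟨k, rfl⟩ := Fin.exists_succAbove_eq hij
  rw [mem_push, mem_push, Finset.mem_compl]

lemma fwd_card {r : ℕ} {j : Fin (N+1)} {S : Finset (Fin N)} (hS : S.card = r) :
    (insert j (push j S)).card = r + 1 := by
  rw [Finset.card_insert_of_notMem (notmem_push S), push_card, hS]

lemma value_eq {K L : Type*} [Field K] [AddCommGroup L] [Module K L]
    {r s m : ℕ} (hm : r + s = m)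
    (br : L →ₗ[K] L →ₗ[K] L) (x : Fin (m+1) → L)
    (H : (Fin r → L) → (Fin s → L) → K)
    {i j : Fin (m+1)} {S : Finset (Fin m)}
    (hij : i < j) (hS : S.card = r) (hmem : i ∈ push j S) :
    (if h : S.card = r ∧ Sᶜ.card = s then
      (if i ∈ push j S then
        H (fun k => (Function.update x i (br (x i) (x j)) ∘ j.succAbove)
              (S.orderEmbOfFin h.1 k))
          (fun k => (Function.update x i (br (x i) (x j)) ∘ j.succAbove)
              (Sᶜ.orderEmbOfFin h.2 k))
       else 0)
     else 0)
  = (if h : (insert j (push j S)).card = r + 1 ∧ (insert j (push j S))ᶜ.card = s then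
      H (Function.update (fun k => x ((insert j (push j S)).orderEmbOfFin h.1 k))
           (posIn r (insert j (push j S)) i)
           (br (x ((insert j (push j S)).orderEmbOfFin h.1 (posIn r (insert j (push j S)) i)))
              (x ((insert j (push j S)).orderEmbOfFin h.1 (posIn r (insert j (push j S)) j))))
          ∘ (posIn r (insert j (push j S)) j).succAbove)
        (fun k => x ((insert j (push j S))ᶜ.orderEmbOfFin h.2 k))
     else 0) := by
  have hSc : Sᶜ.card = s := by
    rw [Finset.card_compl, Fintype.card_fin, hS]; omega
  have hT : (insert j (push j S)).card = r + 1 := fwd_card hS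
  have hTc : (insert j (push j S))ᶜ.card = s := by
    rw [Finset.card_compl, Fintype.card_fin, hT]; omega
  rw [dif_pos ⟨hS, hSc⟩, if_pos hmem, dif_pos ⟨hT, hTc⟩]
  set T := insert j (push j S) with hTdef
  set a := posIn r T i with hadef
  set b := posIn r T j with hbdef
  have hiT : i ∈ T := Finset.mem_insert_of_mem hmem
  have hjT : j ∈ T := Finset.mem_insert_self _ _
  have ha : T.orderEmbOfFin hT a = i := by
    rw [hadef, ← enumIn_eq T hT]; exact enumIn_posIn hT hiT
  have hb : T.orderEmbOfFin hT b = j := by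
    rw [hbdef, ← enumIn_eq T hT]; exact enumIn_posIn hT hjT
  refine congrArg₂ H ?_ ?_
  · funext k
    have hcomp : j.succAbove (S.orderEmbOfFin hS k) = T.orderEmbOfFin hT (b.succAbove k) :=
      enum_compat hT hS hb (by rw [hTdef, Finset.erase_insert (notmem_push S)]) k
    rw [Function.comp_apply, Function.comp_apply, hcomp]
    rcases eq_or_ne (b.succAbove k) a with hk | hk
    · rw [hk, ha, hb, Function.update_self, Function.update_self]
    · have hne : T.orderEmbOfFin hT (b.succAbove k) ≠ i := by
        rw [← ha]; exact fun hc => hk ((T.orderEmbOfFin hT).injective hc)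
      rw [Function.update_of_ne hne, Function.update_of_ne hk]
  · funext k
    have hcomp : j.succAbove (Sᶜ.orderEmbOfFin hSc k) = Tᶜ.orderEmbOfFin hTc k :=
      enum_compat_compl hTc hSc (by rw [hTdef]; exact pull_insert_push j S) k
    rw [Function.comp_apply, hcomp]
    refine Function.update_of_ne ?_ _ _
    have hmem2 : Tᶜ.orderEmbOfFin hTc k ∈ Tᶜ := Tᶜ.orderEmbOfFin_mem hTc k
    intro hc
    rw [hc] at hmem2
    exact (Finset.mem_compl.1 hmem2) hiT

lemma key {K L : Type*} [Field K] [AddCommGroup L] [Module K L]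
    {r s m : ℕ} (hm : r + s = m)
    (br : L →ₗ[K] L →ₗ[K] L) (x : Fin (m+1) → L)
    (H : (Fin r → L) → (Fin s → L) → K) :
    (∑ pr ∈ Finset.univ.filter (fun pr : Fin (m+1) × Fin (m+1) => pr.1 < pr.2),
      ∑ S : Finset (Fin m),
        if h : S.card = r ∧ Sᶜ.card = s then
          (if pr.1 ∈ push pr.2 S then
            H (fun k => (Function.update x pr.1 (br (x pr.1) (x pr.2)) ∘ pr.2.succAbove)
                  (S.orderEmbOfFin h.1 k))
              (fun k => (Function.update x pr.1 (br (x pr.1) (x pr.2)) ∘ pr.2.succAbove)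
                  (Sᶜ.orderEmbOfFin h.2 k))
           else 0)
        else 0)
  = ∑ T : Finset (Fin (m+1)),
      if h : T.card = r + 1 ∧ Tᶜ.card = s then
        ∑ ab ∈ Finset.univ.filter (fun ab : Fin (r+1) × Fin (r+1) => ab.1 < ab.2),
          H (Function.update (fun k => x (T.orderEmbOfFin h.1 k)) ab.1
               (br (x (T.orderEmbOfFin h.1 ab.1)) (x (T.orderEmbOfFin h.1 ab.2)))
              ∘ ab.2.succAbove)
            (fun k => x (Tᶜ.orderEmbOfFin h.2 k))
      else 0 := by
  classical
  -- the two summands as functions on product types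
  set f : (Fin (m+1) × Fin (m+1)) × Finset (Fin m) → K := fun z =>
    if h : z.2.card = r ∧ z.2ᶜ.card = s then
      (if z.1.1 ∈ push z.1.2 z.2 then
        H (fun k => (Function.update x z.1.1 (br (x z.1.1) (x z.1.2)) ∘ z.1.2.succAbove)
              (z.2.orderEmbOfFin h.1 k))
          (fun k => (Function.update x z.1.1 (br (x z.1.1) (x z.1.2)) ∘ z.1.2.succAbove)
              (z.2ᶜ.orderEmbOfFin h.2 k))
       else 0)
    else 0 with hf
  set g : Finset (Fin (m+1)) × (Fin (r+1) × Fin (r+1)) → K := fun w =>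
    if h : w.1.card = r + 1 ∧ w.1ᶜ.card = s then
      H (Function.update (fun k => x (w.1.orderEmbOfFin h.1 k)) w.2.1
           (br (x (w.1.orderEmbOfFin h.1 w.2.1)) (x (w.1.orderEmbOfFin h.1 w.2.2)))
          ∘ w.2.2.succAbove)
        (fun k => x (w.1ᶜ.orderEmbOfFin h.2 k))
    else 0 with hg
  have step1 : (∑ pr ∈ Finset.univ.filter (fun pr : Fin (m+1) × Fin (m+1) => pr.1 < pr.2),
      ∑ S : Finset (Fin m),
        if h : S.card = r ∧ Sᶜ.card = s then
          (if pr.1 ∈ push pr.2 S then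
            H (fun k => (Function.update x pr.1 (br (x pr.1) (x pr.2)) ∘ pr.2.succAbove)
                  (S.orderEmbOfFin h.1 k))
              (fun k => (Function.update x pr.1 (br (x pr.1) (x pr.2)) ∘ pr.2.succAbove)
                  (Sᶜ.orderEmbOfFin h.2 k))
           else 0)
        else 0)
      = ∑ z ∈ (Finset.univ.filter (fun pr : Fin (m+1) × Fin (m+1) => pr.1 < pr.2)) ×ˢ
          (Finset.univ : Finset (Finset (Fin m))), f z := by
    rw [Finset.sum_product' _ _ (fun pr S => f (pr, S))]
  have step2 : (∑ T : Finset (Fin (m+1)),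
      if h : T.card = r + 1 ∧ Tᶜ.card = s then
        ∑ ab ∈ Finset.univ.filter (fun ab : Fin (r+1) × Fin (r+1) => ab.1 < ab.2),
          H (Function.update (fun k => x (T.orderEmbOfFin h.1 k)) ab.1
               (br (x (T.orderEmbOfFin h.1 ab.1)) (x (T.orderEmbOfFin h.1 ab.2)))
              ∘ ab.2.succAbove)
            (fun k => x (Tᶜ.orderEmbOfFin h.2 k))
      else 0)
      = ∑ w ∈ (Finset.univ : Finset (Finset (Fin (m+1)))) ×ˢ
          (Finset.univ.filter (fun ab : Fin (r+1) × Fin (r+1) => ab.1 < ab.2)), g w := by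
    rw [Finset.sum_product' _ _ (fun T ab => g (T, ab))]
    refine Finset.sum_congr rfl fun T _ => ?_
    by_cases h : T.card = r + 1 ∧ Tᶜ.card = s
    · rw [dif_pos h]
      refine Finset.sum_congr rfl fun ab _ => ?_
      simp only [hg]
      rw [dif_pos h]
    · rw [dif_neg h]
      refine (Finset.sum_eq_zero fun ab _ => ?_).symm
      simp only [hg]
      rw [dif_neg h]
  rw [step1, step2]
  -- restrict to the support sets
  set sA : Finset ((Fin (m+1) × Fin (m+1)) × Finset (Fin m)) :=
    Finset.univ.filter (fun z => z.1.1 < z.1.2 ∧ z.2.card = r ∧ z.1.1 ∈ push z.1.2 z.2) with hsA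
  set tB : Finset (Finset (Fin (m+1)) × (Fin (r+1) × Fin (r+1))) :=
    Finset.univ.filter (fun w => w.1.card = r + 1 ∧ w.2.1 < w.2.2) with htB
  have step3 : ∑ z ∈ (Finset.univ.filter (fun pr : Fin (m+1) × Fin (m+1) => pr.1 < pr.2)) ×ˢ
          (Finset.univ : Finset (Finset (Fin m))), f z = ∑ z ∈ sA, f z := by
    refine (Finset.sum_subset ?_ ?_).symm
    · intro z hz
      rw [hsA, Finset.mem_filter] at hz
      rw [Finset.mem_product, Finset.mem_filter]
      exact ⟨⟨Finset.mem_univ _, hz.2.1⟩, Finset.mem_univ _⟩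
    · intro z hzp hz
      rw [hsA, Finset.mem_filter] at hz
      have hlt : z.1.1 < z.1.2 :=
        (Finset.mem_filter.1 (Finset.mem_product.1 hzp).1).2
      simp only [hf]
      by_cases h1 : z.2.card = r ∧ z.2ᶜ.card = s
      · rw [dif_pos h1]
        by_cases h2 : z.1.1 ∈ push z.1.2 z.2
        · exact absurd ⟨Finset.mem_univ _, hlt, h1.1, h2⟩ hz
        · rw [if_neg h2]
      · rw [dif_neg h1]
  have step4 : ∑ w ∈ (Finset.univ : Finset (Finset (Fin (m+1)))) ×ˢ
          (Finset.univ.filter (fun ab : Fin (r+1) × Fin (r+1) => ab.1 < ab.2)), g w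
      = ∑ w ∈ tB, g w := by
    refine (Finset.sum_subset ?_ ?_).symm
    · intro w hw
      rw [htB, Finset.mem_filter] at hw
      rw [Finset.mem_product, Finset.mem_filter]
      exact ⟨Finset.mem_univ _, Finset.mem_univ _, hw.2.2⟩
    · intro w hwp hw
      rw [htB, Finset.mem_filter] at hw
      have hlt : w.2.1 < w.2.2 :=
        (Finset.mem_filter.1 (Finset.mem_product.1 hwp).2).2
      simp only [hg]
      by_cases h1 : w.1.card = r + 1 ∧ w.1ᶜ.card = s
      · exact absurd ⟨Finset.mem_univ _, h1.1, hlt⟩ hw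
      · rw [dif_neg h1]
  rw [step3, step4]
  refine Finset.sum_bij'
    (fun z _ => (insert z.1.2 (push z.1.2 z.2),
      (posIn r (insert z.1.2 (push z.1.2 z.2)) z.1.1,
       posIn r (insert z.1.2 (push z.1.2 z.2)) z.1.2)))
    (fun w _ => ((enumIn w.1 w.2.1, enumIn w.1 w.2.2), pull (enumIn w.1 w.2.2) w.1))
    ?_ ?_ ?_ ?_ ?_
  · -- maps into tB
    intro z hz
    rw [hsA, Finset.mem_filter] at hz
    obtain ⟨-, hlt, hS, hmem⟩ := hz
    have hT := fwd_card (j := z.1.2) hS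
    rw [htB, Finset.mem_filter]
    exact ⟨Finset.mem_univ _, hT,
      posIn_lt_posIn hT (Finset.mem_insert_of_mem hmem) (Finset.mem_insert_self _ _) hlt⟩
  · -- maps into sA
    intro w hw
    rw [htB, Finset.mem_filter] at hw
    obtain ⟨-, hT, hab⟩ := hw
    have hi1 : enumIn w.1 w.2.1 = w.1.orderEmbOfFin hT w.2.1 := enumIn_eq w.1 hT w.2.1
    have hj1 : enumIn w.1 w.2.2 = w.1.orderEmbOfFin hT w.2.2 := enumIn_eq w.1 hT w.2.2
    have hjT : enumIn w.1 w.2.2 ∈ w.1 := by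
      rw [hj1]; exact w.1.orderEmbOfFin_mem hT w.2.2
    have hlt : enumIn w.1 w.2.1 < enumIn w.1 w.2.2 := by
      rw [hi1, hj1]; exact (w.1.orderEmbOfFin hT).strictMono hab
    rw [hsA, Finset.mem_filter]
    refine ⟨Finset.mem_univ _, hlt, ?_, ?_⟩
    · show (pull (enumIn w.1 w.2.2) w.1).card = r
      have hpc := pull_card hjT
      omega
    · show enumIn w.1 w.2.1 ∈ push (enumIn w.1 w.2.2) (pull (enumIn w.1 w.2.2) w.1)
      rw [push_pull]
      exact Finset.mem_erase.2 ⟨ne_of_lt hlt, by rw [hi1]; exact w.1.orderEmbOfFin_mem hT w.2.1⟩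
  · -- left inverse
    intro z hz
    rw [hsA, Finset.mem_filter] at hz
    obtain ⟨-, hlt, hS, hmem⟩ := hz
    have hT := fwd_card (j := z.1.2) hS
    have e1 : enumIn (insert z.1.2 (push z.1.2 z.2))
        (posIn r (insert z.1.2 (push z.1.2 z.2)) z.1.1) = z.1.1 :=
      enumIn_posIn hT (Finset.mem_insert_of_mem hmem)
    have e2 : enumIn (insert z.1.2 (push z.1.2 z.2))
        (posIn r (insert z.1.2 (push z.1.2 z.2)) z.1.2) = z.1.2 :=
      enumIn_posIn hT (Finset.mem_insert_self _ _)
    simp only [e1, e2, pull_insert_push]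
  · -- right inverse
    intro w hw
    rw [htB, Finset.mem_filter] at hw
    obtain ⟨-, hT, hab⟩ := hw
    have hjT : enumIn w.1 w.2.2 ∈ w.1 := by
      rw [enumIn_eq w.1 hT]; exact w.1.orderEmbOfFin_mem hT w.2.2
    have hins : insert (enumIn w.1 w.2.2) (push (enumIn w.1 w.2.2) (pull (enumIn w.1 w.2.2) w.1))
        = w.1 := insert_push_pull hjT
    simp only [hins, posIn_enumIn hT]
  · -- values
    intro z hz
    rw [hsA, Finset.mem_filter] at hz
    obtain ⟨-, hlt, hS, hmem⟩ := hz
    simp only [hf, hg]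
    exact value_eq hm br x H hlt hS hmem


end CdiffCup

open CdiffCup in
theorem cdiff_cup_derivation {K L : Type*} [Field K] [CharP K 2]
    [AddCommGroup L] [Module K L]
    (br : L →ₗ[K] L →ₗ[K] L)
    (hcomm : ∀ x y : L, br x y = br y x)
    (hjac : ∀ x y z : L, br (br x y) z + br (br z x) y + br (br y z) x = 0)
    (p q : ℕ)
    (φ : MultilinearMap K (fun _ : Fin p => L) K) (hφ : IsSym p ⇑φ)
    (ψ : MultilinearMap K (fun _ : Fin q => L) K) (hψ : IsSym q ⇑ψ) :
    cdiff br 0 (p + q) (cup K p q (p + q) ⇑φ ⇑ψ)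
      = cup K (p + 1) q (p + q + 1) (cdiff br 0 p ⇑φ) ⇑ψ
        + cup K p (q + 1) (p + q + 1) ⇑φ (cdiff br 0 q ⇑ψ) := by
  classical
  funext x
  show (∑ pr ∈ Finset.univ.filter (fun pr : Fin (p+q+1) × Fin (p+q+1) => pr.1 < pr.2),
      ∑ S : Finset (Fin (p+q)),
        if h : S.card = p ∧ Sᶜ.card = q then
          φ (fun k => (Function.update x pr.1 (br (x pr.1) (x pr.2)) ∘ pr.2.succAbove) (S.orderEmbOfFin h.1 k)) * ψ (fun k => (Function.update x pr.1 (br (x pr.1) (x pr.2)) ∘ pr.2.succAbove) (Sᶜ.orderEmbOfFin h.2 k))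
        else 0)
    + (∑ i : Fin (p+q+1), ((0 : L →ₗ[K] K →ₗ[K] K) (x i))
        (cup K p q (p+q) ⇑φ ⇑ψ (x ∘ i.succAbove)))
    = (∑ T : Finset (Fin (p+q+1)),
      if h : T.card = p + 1 ∧ Tᶜ.card = q then
        ((∑ ab ∈ Finset.univ.filter (fun ab : Fin (p+1) × Fin (p+1) => ab.1 < ab.2),
            φ (Function.update (fun k => x (T.orderEmbOfFin h.1 k)) ab.1
               (br (x (T.orderEmbOfFin h.1 ab.1)) (x (T.orderEmbOfFin h.1 ab.2)))
              ∘ ab.2.succAbove))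
          + ∑ i : Fin (p+1), ((0 : L →ₗ[K] K →ₗ[K] K) (x (T.orderEmbOfFin h.1 i)))
              (φ ((fun k => x (T.orderEmbOfFin h.1 k)) ∘ i.succAbove))) *
        ψ (fun k => x (Tᶜ.orderEmbOfFin h.2 k))
      else 0)
    + (∑ T : Finset (Fin (p+q+1)),
      if h : T.card = p ∧ Tᶜ.card = q + 1 then
        φ (fun k => x (T.orderEmbOfFin h.1 k)) *
        ((∑ ab ∈ Finset.univ.filter (fun ab : Fin (q+1) × Fin (q+1) => ab.1 < ab.2),
            ψ (Function.update (fun k => x (Tᶜ.orderEmbOfFin h.2 k)) ab.1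
               (br (x (Tᶜ.orderEmbOfFin h.2 ab.1)) (x (Tᶜ.orderEmbOfFin h.2 ab.2)))
              ∘ ab.2.succAbove))
          + ∑ i : Fin (q+1), ((0 : L →ₗ[K] K →ₗ[K] K) (x (Tᶜ.orderEmbOfFin h.2 i)))
              (ψ ((fun k => x (Tᶜ.orderEmbOfFin h.2 k)) ∘ i.succAbove)))
      else 0)
  have hA : (∑ pr ∈ Finset.univ.filter (fun pr : Fin (p+q+1) × Fin (p+q+1) => pr.1 < pr.2),
      ∑ S : Finset (Fin (p+q)),
        if h : S.card = p ∧ Sᶜ.card = q then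
          (if pr.1 ∈ push pr.2 S then φ (fun k => (Function.update x pr.1 (br (x pr.1) (x pr.2)) ∘ pr.2.succAbove) (S.orderEmbOfFin h.1 k)) * ψ (fun k => (Function.update x pr.1 (br (x pr.1) (x pr.2)) ∘ pr.2.succAbove) (Sᶜ.orderEmbOfFin h.2 k)) else 0)
        else 0)
      = (∑ T : Finset (Fin (p+q+1)),
      if h : T.card = p + 1 ∧ Tᶜ.card = q then
        ∑ ab ∈ Finset.univ.filter (fun ab : Fin (p+1) × Fin (p+1) => ab.1 < ab.2),
          φ (Function.update (fun k => x (T.orderEmbOfFin h.1 k)) ab.1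
               (br (x (T.orderEmbOfFin h.1 ab.1)) (x (T.orderEmbOfFin h.1 ab.2)))
              ∘ ab.2.succAbove) * ψ (fun k => x (Tᶜ.orderEmbOfFin h.2 k))
      else 0) :=
    key rfl br x (fun u w => φ u * ψ w)
  have hB0 : (∑ pr ∈ Finset.univ.filter (fun pr : Fin (p+q+1) × Fin (p+q+1) => pr.1 < pr.2),
      ∑ S : Finset (Fin (p+q)),
        if h : S.card = q ∧ Sᶜ.card = p then
          (if pr.1 ∈ push pr.2 S then φ (fun k => (Function.update x pr.1 (br (x pr.1) (x pr.2)) ∘ pr.2.succAbove) (Sᶜ.orderEmbOfFin h.2 k)) * ψ (fun k => (Function.update x pr.1 (br (x pr.1) (x pr.2)) ∘ pr.2.succAbove) (S.orderEmbOfFin h.1 k)) else 0)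
        else 0)
      = (∑ T : Finset (Fin (p+q+1)),
      if h : T.card = q + 1 ∧ Tᶜ.card = p then
        ∑ ab ∈ Finset.univ.filter (fun ab : Fin (q+1) × Fin (q+1) => ab.1 < ab.2),
          φ (fun k => x (Tᶜ.orderEmbOfFin h.2 k)) * ψ (Function.update (fun k => x (T.orderEmbOfFin h.1 k)) ab.1
               (br (x (T.orderEmbOfFin h.1 ab.1)) (x (T.orderEmbOfFin h.1 ab.2)))
              ∘ ab.2.succAbove)
      else 0) :=
    key (Nat.add_comm q p) br x (fun u w => φ w * ψ u)
  have hzero : (∑ i : Fin (p+q+1), ((0 : L →ₗ[K] K →ₗ[K] K) (x i))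
        (cup K p q (p+q) ⇑φ ⇑ψ (x ∘ i.succAbove))) = 0 := by simp
  have hsplit : (∑ pr ∈ Finset.univ.filter (fun pr : Fin (p+q+1) × Fin (p+q+1) => pr.1 < pr.2),
      ∑ S : Finset (Fin (p+q)),
        if h : S.card = p ∧ Sᶜ.card = q then
          φ (fun k => (Function.update x pr.1 (br (x pr.1) (x pr.2)) ∘ pr.2.succAbove) (S.orderEmbOfFin h.1 k)) * ψ (fun k => (Function.update x pr.1 (br (x pr.1) (x pr.2)) ∘ pr.2.succAbove) (Sᶜ.orderEmbOfFin h.2 k))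
        else 0)
      = (∑ pr ∈ Finset.univ.filter (fun pr : Fin (p+q+1) × Fin (p+q+1) => pr.1 < pr.2),
      ∑ S : Finset (Fin (p+q)),
        if h : S.card = p ∧ Sᶜ.card = q then
          (if pr.1 ∈ push pr.2 S then φ (fun k => (Function.update x pr.1 (br (x pr.1) (x pr.2)) ∘ pr.2.succAbove) (S.orderEmbOfFin h.1 k)) * ψ (fun k => (Function.update x pr.1 (br (x pr.1) (x pr.2)) ∘ pr.2.succAbove) (Sᶜ.orderEmbOfFin h.2 k)) else 0)
        else 0)
      + (∑ pr ∈ Finset.univ.filter (fun pr : Fin (p+q+1) × Fin (p+q+1) => pr.1 < pr.2),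
      ∑ S : Finset (Fin (p+q)),
        if h : S.card = p ∧ Sᶜ.card = q then
          (if pr.1 ∈ push pr.2 S then 0 else φ (fun k => (Function.update x pr.1 (br (x pr.1) (x pr.2)) ∘ pr.2.succAbove) (S.orderEmbOfFin h.1 k)) * ψ (fun k => (Function.update x pr.1 (br (x pr.1) (x pr.2)) ∘ pr.2.succAbove) (Sᶜ.orderEmbOfFin h.2 k)))
        else 0) := by
    calc (∑ pr ∈ Finset.univ.filter (fun pr : Fin (p+q+1) × Fin (p+q+1) => pr.1 < pr.2),
      ∑ S : Finset (Fin (p+q)),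
        if h : S.card = p ∧ Sᶜ.card = q then
          φ (fun k => (Function.update x pr.1 (br (x pr.1) (x pr.2)) ∘ pr.2.succAbove) (S.orderEmbOfFin h.1 k)) * ψ (fun k => (Function.update x pr.1 (br (x pr.1) (x pr.2)) ∘ pr.2.succAbove) (Sᶜ.orderEmbOfFin h.2 k))
        else 0)
        = (∑ pr ∈ Finset.univ.filter (fun pr : Fin (p+q+1) × Fin (p+q+1) => pr.1 < pr.2),
      ∑ S : Finset (Fin (p+q)),
            ((if h : S.card = p ∧ Sᶜ.card = q then
              (if pr.1 ∈ push pr.2 S then φ (fun k => (Function.update x pr.1 (br (x pr.1) (x pr.2)) ∘ pr.2.succAbove) (S.orderEmbOfFin h.1 k)) * ψ (fun k => (Function.update x pr.1 (br (x pr.1) (x pr.2)) ∘ pr.2.succAbove) (Sᶜ.orderEmbOfFin h.2 k)) else 0)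
            else 0)
            + (if h : S.card = p ∧ Sᶜ.card = q then
              (if pr.1 ∈ push pr.2 S then 0 else φ (fun k => (Function.update x pr.1 (br (x pr.1) (x pr.2)) ∘ pr.2.succAbove) (S.orderEmbOfFin h.1 k)) * ψ (fun k => (Function.update x pr.1 (br (x pr.1) (x pr.2)) ∘ pr.2.succAbove) (Sᶜ.orderEmbOfFin h.2 k)))
            else 0))) := by
          refine Finset.sum_congr rfl fun pr _ => Finset.sum_congr rfl fun S _ => ?_
          by_cases hc : S.card = p ∧ Sᶜ.card = q
          · rw [dif_pos hc, dif_pos hc, dif_pos hc]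
            by_cases hmem : pr.1 ∈ push pr.2 S
            · rw [if_pos hmem, if_pos hmem, add_zero]
            · rw [if_neg hmem, if_neg hmem, zero_add]
          · rw [dif_neg hc, dif_neg hc, dif_neg hc, add_zero]
      _ = _ := by
          rw [← Finset.sum_add_distrib]
          exact Finset.sum_congr rfl fun pr _ => Finset.sum_add_distrib
  have hG2 : (∑ pr ∈ Finset.univ.filter (fun pr : Fin (p+q+1) × Fin (p+q+1) => pr.1 < pr.2),
      ∑ S : Finset (Fin (p+q)),
        if h : S.card = p ∧ Sᶜ.card = q then
          (if pr.1 ∈ push pr.2 S then 0 else φ (fun k => (Function.update x pr.1 (br (x pr.1) (x pr.2)) ∘ pr.2.succAbove) (S.orderEmbOfFin h.1 k)) * ψ (fun k => (Function.update x pr.1 (br (x pr.1) (x pr.2)) ∘ pr.2.succAbove) (Sᶜ.orderEmbOfFin h.2 k)))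
        else 0)
      = (∑ pr ∈ Finset.univ.filter (fun pr : Fin (p+q+1) × Fin (p+q+1) => pr.1 < pr.2),
      ∑ S : Finset (Fin (p+q)),
        if h : S.card = q ∧ Sᶜ.card = p then
          (if pr.1 ∈ push pr.2 S then φ (fun k => (Function.update x pr.1 (br (x pr.1) (x pr.2)) ∘ pr.2.succAbove) (Sᶜ.orderEmbOfFin h.2 k)) * ψ (fun k => (Function.update x pr.1 (br (x pr.1) (x pr.2)) ∘ pr.2.succAbove) (S.orderEmbOfFin h.1 k)) else 0)
        else 0) := by
    refine Finset.sum_congr rfl fun pr hpr => ?_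
    have hne : pr.1 ≠ pr.2 := ne_of_lt (Finset.mem_filter.1 hpr).2
    calc (∑ S : Finset (Fin (p+q)),
          if h : S.card = p ∧ Sᶜ.card = q then
            (if pr.1 ∈ push pr.2 S then 0 else φ (fun k => (Function.update x pr.1 (br (x pr.1) (x pr.2)) ∘ pr.2.succAbove) (S.orderEmbOfFin h.1 k)) * ψ (fun k => (Function.update x pr.1 (br (x pr.1) (x pr.2)) ∘ pr.2.succAbove) (Sᶜ.orderEmbOfFin h.2 k)))
          else 0)
        = ∑ S : Finset (Fin (p+q)),
            (if h : Sᶜ.card = p ∧ Sᶜᶜ.card = q then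
              (if pr.1 ∈ push pr.2 Sᶜ then 0 else
                φ (fun k => (Function.update x pr.1 (br (x pr.1) (x pr.2)) ∘ pr.2.succAbove) (Sᶜ.orderEmbOfFin h.1 k)) *
                ψ (fun k => (Function.update x pr.1 (br (x pr.1) (x pr.2)) ∘ pr.2.succAbove) (Sᶜᶜ.orderEmbOfFin h.2 k)))
            else 0) :=
          (Equiv.sum_comp (Function.Involutive.toPerm _
            (fun S : Finset (Fin (p+q)) => compl_compl S))
            (fun S : Finset (Fin (p+q)) =>
              if h : S.card = p ∧ Sᶜ.card = q then
                (if pr.1 ∈ push pr.2 S then 0 else φ (fun k => (Function.update x pr.1 (br (x pr.1) (x pr.2)) ∘ pr.2.succAbove) (S.orderEmbOfFin h.1 k)) * ψ (fun k => (Function.update x pr.1 (br (x pr.1) (x pr.2)) ∘ pr.2.succAbove) (Sᶜ.orderEmbOfFin h.2 k)))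
              else 0)).symm
      _ = _ := by
          refine Finset.sum_congr rfl fun S _ => ?_
          by_cases hq : S.card = q
          · have hp : Sᶜ.card = p := by
              rw [Finset.card_compl, Fintype.card_fin, hq]; omega
            have hqq : Sᶜᶜ.card = q := by rw [compl_compl]; exact hq
            rw [dif_pos ⟨hp, hqq⟩, dif_pos ⟨hq, hp⟩]
            by_cases hmem : pr.1 ∈ push pr.2 S
            · rw [if_neg (fun hc => (mem_push_compl hne).1 hc hmem), if_pos hmem]
              refine congrArg₂ (· * ·) rfl (congrArg ψ ?_)
              funext k
              exact congrArg _ (enum_congr (compl_compl S) hqq hq k)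
            · rw [if_pos ((mem_push_compl hne).2 hmem), if_neg hmem]
          · have hn1 : ¬(Sᶜ.card = p ∧ Sᶜᶜ.card = q) := by
              rintro ⟨h1, h2⟩; rw [compl_compl] at h2; exact hq h2
            rw [dif_neg hn1, dif_neg (fun hc => hq hc.1)]
  have hG3 : (∑ T : Finset (Fin (p+q+1)),
      if h : T.card = p + 1 ∧ Tᶜ.card = q then
        ((∑ ab ∈ Finset.univ.filter (fun ab : Fin (p+1) × Fin (p+1) => ab.1 < ab.2),
            φ (Function.update (fun k => x (T.orderEmbOfFin h.1 k)) ab.1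
               (br (x (T.orderEmbOfFin h.1 ab.1)) (x (T.orderEmbOfFin h.1 ab.2)))
              ∘ ab.2.succAbove))
          + ∑ i : Fin (p+1), ((0 : L →ₗ[K] K →ₗ[K] K) (x (T.orderEmbOfFin h.1 i)))
              (φ ((fun k => x (T.orderEmbOfFin h.1 k)) ∘ i.succAbove))) *
        ψ (fun k => x (Tᶜ.orderEmbOfFin h.2 k))
      else 0)
      = (∑ T : Finset (Fin (p+q+1)),
      if h : T.card = p + 1 ∧ Tᶜ.card = q then
        ∑ ab ∈ Finset.univ.filter (fun ab : Fin (p+1) × Fin (p+1) => ab.1 < ab.2),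
          φ (Function.update (fun k => x (T.orderEmbOfFin h.1 k)) ab.1
               (br (x (T.orderEmbOfFin h.1 ab.1)) (x (T.orderEmbOfFin h.1 ab.2)))
              ∘ ab.2.succAbove) * ψ (fun k => x (Tᶜ.orderEmbOfFin h.2 k))
      else 0) := by
    refine Finset.sum_congr rfl fun T _ => ?_
    by_cases h : T.card = p + 1 ∧ Tᶜ.card = q
    · rw [dif_pos h, dif_pos h]
      simp only [LinearMap.zero_apply, Finset.sum_const_zero, add_zero, Finset.sum_mul]
    · rw [dif_neg h, dif_neg h]
  have hG4 : (∑ T : Finset (Fin (p+q+1)),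
      if h : T.card = p ∧ Tᶜ.card = q + 1 then
        φ (fun k => x (T.orderEmbOfFin h.1 k)) *
        ((∑ ab ∈ Finset.univ.filter (fun ab : Fin (q+1) × Fin (q+1) => ab.1 < ab.2),
            ψ (Function.update (fun k => x (Tᶜ.orderEmbOfFin h.2 k)) ab.1
               (br (x (Tᶜ.orderEmbOfFin h.2 ab.1)) (x (Tᶜ.orderEmbOfFin h.2 ab.2)))
              ∘ ab.2.succAbove))
          + ∑ i : Fin (q+1), ((0 : L →ₗ[K] K →ₗ[K] K) (x (Tᶜ.orderEmbOfFin h.2 i)))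
              (ψ ((fun k => x (Tᶜ.orderEmbOfFin h.2 k)) ∘ i.succAbove)))
      else 0)
      = (∑ T : Finset (Fin (p+q+1)),
      if h : T.card = q + 1 ∧ Tᶜ.card = p then
        ∑ ab ∈ Finset.univ.filter (fun ab : Fin (q+1) × Fin (q+1) => ab.1 < ab.2),
          φ (fun k => x (Tᶜ.orderEmbOfFin h.2 k)) * ψ (Function.update (fun k => x (T.orderEmbOfFin h.1 k)) ab.1
               (br (x (T.orderEmbOfFin h.1 ab.1)) (x (T.orderEmbOfFin h.1 ab.2)))
              ∘ ab.2.succAbove)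
      else 0) := by
    calc (∑ T : Finset (Fin (p+q+1)),
      if h : T.card = p ∧ Tᶜ.card = q + 1 then
        φ (fun k => x (T.orderEmbOfFin h.1 k)) *
        ((∑ ab ∈ Finset.univ.filter (fun ab : Fin (q+1) × Fin (q+1) => ab.1 < ab.2),
            ψ (Function.update (fun k => x (Tᶜ.orderEmbOfFin h.2 k)) ab.1
               (br (x (Tᶜ.orderEmbOfFin h.2 ab.1)) (x (Tᶜ.orderEmbOfFin h.2 ab.2)))
              ∘ ab.2.succAbove))
          + ∑ i : Fin (q+1), ((0 : L →ₗ[K] K →ₗ[K] K) (x (Tᶜ.orderEmbOfFin h.2 i)))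
              (ψ ((fun k => x (Tᶜ.orderEmbOfFin h.2 k)) ∘ i.succAbove)))
      else 0)
        = ∑ T : Finset (Fin (p+q+1)),
            (if h : Tᶜ.card = p ∧ Tᶜᶜ.card = q + 1 then
              φ (fun k => x (Tᶜ.orderEmbOfFin h.1 k)) *
              ((∑ ab ∈ Finset.univ.filter (fun ab : Fin (q+1) × Fin (q+1) => ab.1 < ab.2),
                  ψ (Function.update (fun k => x (Tᶜᶜ.orderEmbOfFin h.2 k)) ab.1
                       (br (x (Tᶜᶜ.orderEmbOfFin h.2 ab.1)) (x (Tᶜᶜ.orderEmbOfFin h.2 ab.2)))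
                      ∘ ab.2.succAbove))
                + ∑ i : Fin (q+1), ((0 : L →ₗ[K] K →ₗ[K] K) (x (Tᶜᶜ.orderEmbOfFin h.2 i)))
                    (ψ ((fun k => x (Tᶜᶜ.orderEmbOfFin h.2 k)) ∘ i.succAbove)))
            else 0) :=
          (Equiv.sum_comp (Function.Involutive.toPerm _
            (fun T : Finset (Fin (p+q+1)) => compl_compl T))
            (fun T : Finset (Fin (p+q+1)) =>
              if h : T.card = p ∧ Tᶜ.card = q + 1 then
                φ (fun k => x (T.orderEmbOfFin h.1 k)) *
                ((∑ ab ∈ Finset.univ.filter (fun ab : Fin (q+1) × Fin (q+1) => ab.1 < ab.2),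
                    ψ (Function.update (fun k => x (Tᶜ.orderEmbOfFin h.2 k)) ab.1
               (br (x (Tᶜ.orderEmbOfFin h.2 ab.1)) (x (Tᶜ.orderEmbOfFin h.2 ab.2)))
              ∘ ab.2.succAbove))
                  + ∑ i : Fin (q+1), ((0 : L →ₗ[K] K →ₗ[K] K) (x (Tᶜ.orderEmbOfFin h.2 i)))
                      (ψ ((fun k => x (Tᶜ.orderEmbOfFin h.2 k)) ∘ i.succAbove)))
              else 0)).symm
      _ = _ := by
          refine Finset.sum_congr rfl fun T _ => ?_
          by_cases h : T.card = q + 1 ∧ Tᶜ.card = p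
          · have hcc : Tᶜᶜ = T := compl_compl T
            have h2 : Tᶜᶜ.card = q + 1 := by rw [hcc]; exact h.1
            rw [dif_pos ⟨h.2, h2⟩, dif_pos h]
            simp only [LinearMap.zero_apply, Finset.sum_const_zero, add_zero, Finset.mul_sum]
            refine Finset.sum_congr rfl fun ab _ => ?_
            refine congrArg₂ (· * ·) rfl (congrArg ψ ?_)
            have hfun : (fun k => x (Tᶜᶜ.orderEmbOfFin h2 k))
                = (fun k => x (T.orderEmbOfFin h.1 k)) :=
              funext fun k => congrArg x (enum_congr hcc h2 h.1 k)
            have hv1 : x (Tᶜᶜ.orderEmbOfFin h2 ab.1) = x (T.orderEmbOfFin h.1 ab.1) :=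
              congrArg x (enum_congr hcc h2 h.1 ab.1)
            have hv2 : x (Tᶜᶜ.orderEmbOfFin h2 ab.2) = x (T.orderEmbOfFin h.1 ab.2) :=
              congrArg x (enum_congr hcc h2 h.1 ab.2)
            rw [hfun, hv1, hv2]
          · have hn1 : ¬(Tᶜ.card = p ∧ Tᶜᶜ.card = q + 1) := by
              rintro ⟨h1, h2⟩; rw [compl_compl] at h2; exact h ⟨h2, h1⟩
            rw [dif_neg hn1, dif_neg h]
  rw [hzero, add_zero, hsplit, hG3, hG4]
  exact congrArg₂ (· + ·) hA ((hG2.trans hB0))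
end

section
/- Let L be a commutative Lie algebra over a field K of characteristic 2, and equip Sym^•(L,K) = ⊕_{n≥0} Sym^n(L,K) with the shuffle cup product ⌣. Then: (i) the space Z^•_comm(L,K) of commutative cocycles is a subring of (Sym^•(L,K), ⌣); (ii) the space B^•_comm(L,K) of commutative coboundaries is a (two-sided) ideal of the ring Z^•_comm(L,K); (iii) consequently the commutative cohomology H^•_comm(L,K) = Z^•_comm(L,K)/B^•_comm(L,K) is a graded associative ring with respect to ⌣. -/
def IsMultilin (K : Type*) {L M : Type*} [CommSemiring K] [AddCommMonoid L] [Module K L]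
    [AddCommMonoid M] [Module K M] (n : ℕ) (f : (Fin n → L) → M) : Prop :=
  (∀ (v : Fin n → L) (i : Fin n) (a b : L),
    f (Function.update v i (a + b)) = f (Function.update v i a) + f (Function.update v i b)) ∧
  (∀ (v : Fin n → L) (i : Fin n) (c : K) (a : L),
    f (Function.update v i (c • a)) = c • f (Function.update v i a))

theorem cdiff_add {K L M : Type*} [Field K] [AddCommGroup L] [Module K L]
    [AddCommGroup M] [Module K M]
    (br : L →ₗ[K] L →ₗ[K] L) (ρ : L →ₗ[K] M →ₗ[K] M) (n : ℕ)
    (f g : (Fin n → L) → M) :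
    cdiff br ρ n (f + g) = cdiff br ρ n f + cdiff br ρ n g := by
  funext x
  simp only [cdiff, Pi.add_apply, map_add, Finset.sum_add_distrib]
  abel

theorem cdiff_smul {K L M : Type*} [Field K] [AddCommGroup L] [Module K L]
    [AddCommGroup M] [Module K M]
    (br : L →ₗ[K] L →ₗ[K] L) (ρ : L →ₗ[K] M →ₗ[K] M) (n : ℕ)
    (c : K) (f : (Fin n → L) → M) :
    cdiff br ρ n (c • f) = c • cdiff br ρ n f := by
  funext x
  simp only [cdiff, Pi.smul_apply, map_smul, Finset.smul_sum, smul_add]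

def Sc (K : Type*) (L M : Type*) [Field K] [AddCommGroup L] [Module K L]
    [AddCommGroup M] [Module K M] (n : ℕ) : Submodule K ((Fin n → L) → M) where
  carrier := {f | IsMultilin K n f ∧ IsSym n f}
  add_mem' := by
    rintro f g ⟨⟨hfa, hfs⟩, hfsym⟩ ⟨⟨hga, hgs⟩, hgsym⟩
    refine ⟨⟨fun v i a b => ?_, fun v i c a => ?_⟩, fun σ v => ?_⟩
    · simp only [Pi.add_apply, hfa, hga]; abel
    · simp only [Pi.add_apply, hfs, hgs, smul_add]
    · simp only [Pi.add_apply, hfsym σ v, hgsym σ v]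
  zero_mem' := by
    refine ⟨⟨fun v i a b => ?_, fun v i c a => ?_⟩, fun σ v => ?_⟩
    · show (0 : M) = 0 + 0; rw [add_zero]
    · show (0 : M) = c • 0; rw [smul_zero]
    · rfl
  smul_mem' := by
    rintro c f ⟨⟨hfa, hfs⟩, hfsym⟩
    refine ⟨⟨fun v i a b => ?_, fun v i c' a => ?_⟩, fun σ v => ?_⟩
    · show c • f (Function.update v i (a + b))
        = c • f (Function.update v i a) + c • f (Function.update v i b)
      rw [hfa, smul_add]
    · show c • f (Function.update v i (c' • a)) = c' • (c • f (Function.update v i a))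
      rw [hfs, smul_comm]
    · show c • f (v ∘ σ) = c • f v
      rw [hfsym σ v]

def Zc (K : Type*) (L M : Type*) [Field K] [AddCommGroup L] [Module K L]
    [AddCommGroup M] [Module K M]
    (br : L →ₗ[K] L →ₗ[K] L) (ρ : L →ₗ[K] M →ₗ[K] M) (n : ℕ) :
    Submodule K ((Fin n → L) → M) where
  carrier := {f | IsMultilin K n f ∧ IsSym n f ∧ cdiff br ρ n f = 0}
  add_mem' := by
    rintro f g ⟨hf1, hf2, hf3⟩ ⟨hg1, hg2, hg3⟩
    have h := (Sc K L M n).add_mem (by exact ⟨hf1, hf2⟩) (by exact ⟨hg1, hg2⟩)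
    exact ⟨h.1, h.2, by rw [cdiff_add, hf3, hg3, add_zero]⟩
  zero_mem' := by
    have h := (Sc K L M n).zero_mem
    exact ⟨h.1, h.2, by rw [show (0 : (Fin n → L) → M) = (0:K) • 0 by simp, cdiff_smul]; simp⟩
  smul_mem' := by
    rintro c f ⟨hf1, hf2, hf3⟩
    have h := (Sc K L M n).smul_mem c (by exact ⟨hf1, hf2⟩)
    exact ⟨h.1, h.2, by rw [cdiff_smul, hf3, smul_zero]⟩

/-- The space `B^n_comm(L,M)` of symmetric `n`-coboundaries. -/
def Bc (K : Type*) (L M : Type*) [Field K] [AddCommGroup L] [Module K L]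
    [AddCommGroup M] [Module K M]
    (br : L →ₗ[K] L →ₗ[K] L) (ρ : L →ₗ[K] M →ₗ[K] M) :
    (n : ℕ) → Submodule K ((Fin n → L) → M)
  | 0 => ⊥
  | n + 1 => Submodule.span K
      {g | ∃ f : (Fin n → L) → M, IsMultilin K n f ∧ IsSym n f ∧ g = cdiff br ρ n f}

/-- The commutative cohomology `H^n_comm(L,M) = Z^n_comm(L,M) / B^n_comm(L,M)`. -/
abbrev Hcomm (K : Type*) (L M : Type*) [Field K] [AddCommGroup L] [Module K L]
    [AddCommGroup M] [Module K M]
    (br : L →ₗ[K] L →ₗ[K] L) (ρ : L →ₗ[K] M →ₗ[K] M) (n : ℕ) :=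
  Zc K L M br ρ n ⧸ ((Bc K L M br ρ n).comap (Zc K L M br ρ n).subtype)

section Aux
variable {K L : Type*} [Field K] [AddCommGroup L] [Module K L]

noncomputable def ct (K : Type*) {L : Type*} [Field K] [AddCommGroup L] [Module K L]
    (p q n : ℕ) (φ : (Fin p → L) → K) (ψ : (Fin q → L) → K)
    (x : Fin n → L) (S : Finset (Fin n)) : K :=
  if h : S.card = p ∧ Sᶜ.card = q then
    φ (x ∘ S.orderEmbOfFin h.1) * ψ (x ∘ Sᶜ.orderEmbOfFin h.2)
  else 0

theorem cup_eq (p q n : ℕ) (φ : (Fin p → L) → K) (ψ : (Fin q → L) → K) (x : Fin n → L) :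
    cup K p q n φ ψ x = ∑ S : Finset (Fin n), ct K p q n φ ψ x S := rfl

theorem comp_orderEmbOfFin_image {n m p : ℕ} {e : Fin n → Fin m} (he : StrictMono e)
    (S : Finset (Fin n)) (h : S.card = p) (h2 : (S.image e).card = p) :
    ⇑((S.image e).orderEmbOfFin h2) = e ∘ S.orderEmbOfFin h :=
  (Finset.orderEmbOfFin_unique h2
    (fun x => Finset.mem_image_of_mem e (Finset.orderEmbOfFin_mem S h x))
    (he.comp (S.orderEmbOfFin h).strictMono)).symm

theorem orderEmbOfFin_image_univ {n p : ℕ} (S : Finset (Fin n)) (h : S.card = p) :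
    Finset.univ.image (S.orderEmbOfFin h) = S := by
  ext a
  simp only [Finset.mem_image, Finset.mem_univ, true_and]
  constructor
  · rintro ⟨i, rfl⟩; exact Finset.orderEmbOfFin_mem S h i
  · intro ha
    exact ⟨(S.orderIsoOfFin h).symm ⟨a, ha⟩, by
      rw [← Finset.coe_orderIsoOfFin_apply, OrderIso.apply_symm_apply]⟩

theorem image_compl_perm {n : ℕ} (σ : Equiv.Perm (Fin n)) (S : Finset (Fin n)) :
    (S.image σ)ᶜ = Sᶜ.image σ := by
  ext a
  simp only [Finset.mem_compl, Finset.mem_image, not_exists]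
  constructor
  · intro h
    refine ⟨σ.symm a, fun hs => (h (σ.symm a) ⟨hs, σ.apply_symm_apply a⟩).elim,
      σ.apply_symm_apply a⟩
  · rintro ⟨b, hb, rfl⟩ c ⟨hc, hcb⟩
    exact hb (σ.injective hcb ▸ hc)

/-- Lemma A: a symmetric function doesn't care which injective parametrization of `T` we use. -/
theorem sym_reindex {p n : ℕ} {φ : (Fin p → L) → K} (hφ : IsSym p φ) (x : Fin n → L)
    (e : Fin p → Fin n) (he : Function.Injective e) (T : Finset (Fin n)) (hT : T.card = p)
    (hrange : ∀ k, e k ∈ T) : φ (x ∘ e) = φ (x ∘ T.orderEmbOfFin hT) := by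
  set π : Fin p → Fin p := fun k => (T.orderIsoOfFin hT).symm ⟨e k, hrange k⟩ with hπ
  have hπinj : Function.Injective π := by
    intro a b hab
    apply he
    have := congrArg (fun z => ((T.orderIsoOfFin hT) z : Fin n)) hab
    simpa only [hπ, OrderIso.apply_symm_apply] using this
  have hπbij : Function.Bijective π := Finite.injective_iff_bijective.mp hπinj
  set σ : Equiv.Perm (Fin p) := Equiv.ofBijective π hπbij with hσ
  have key : (x ∘ T.orderEmbOfFin hT) ∘ σ = x ∘ e := by
    funext k
    show x (T.orderEmbOfFin hT (π k)) = x (e k)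
    congr 1
    rw [hπ]
    rw [← Finset.coe_orderIsoOfFin_apply, OrderIso.apply_symm_apply]
  rw [← key, hφ σ]

theorem update_comp_emb {n p : ℕ} (v : Fin n → L) (S : Finset (Fin n)) (h : S.card = p)
    {i : Fin n} (hi : i ∈ S) (c : L) :
    Function.update v i c ∘ S.orderEmbOfFin h
      = Function.update (v ∘ S.orderEmbOfFin h) ((S.orderIsoOfFin h).symm ⟨i, hi⟩) c := by
  have hei : S.orderEmbOfFin h ((S.orderIsoOfFin h).symm ⟨i, hi⟩) = i := by
    rw [← Finset.coe_orderIsoOfFin_apply, OrderIso.apply_symm_apply]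
  conv_lhs => rw [← hei]
  exact Function.update_comp_eq_of_injective v (S.orderEmbOfFin h).injective _ c

theorem update_comp_emb_not {n p : ℕ} (v : Fin n → L) (S : Finset (Fin n)) (h : S.card = p)
    {i : Fin n} (hi : i ∉ S) (c : L) :
    Function.update v i c ∘ S.orderEmbOfFin h = v ∘ S.orderEmbOfFin h :=
  Function.update_comp_eq_of_forall_ne v c
    (fun k => fun hk => hi (hk ▸ Finset.orderEmbOfFin_mem S h k))

theorem emb_congr {n p : ℕ} (x : Fin n → L) {S T : Finset (Fin n)} (hST : S = T)
    (h1 : S.card = p) (h2 : T.card = p) :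
    x ∘ S.orderEmbOfFin h1 = x ∘ T.orderEmbOfFin h2 := by subst hST; rfl

theorem ct_sym {p q n : ℕ} {f : (Fin p → L) → K} {g : (Fin q → L) → K}
    (hf : IsSym p f) (hg : IsSym q g) (σ : Equiv.Perm (Fin n)) (v : Fin n → L)
    (S : Finset (Fin n)) :
    ct K p q n f g (v ∘ σ) S = ct K p q n f g v (S.image ⇑σ) := by
  unfold ct
  have hcS : (S.image ⇑σ).card = S.card := Finset.card_image_of_injective _ σ.injective
  have hcomp : (S.image ⇑σ)ᶜ = Sᶜ.image ⇑σ := image_compl_perm σ S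
  have hcSc : (S.image ⇑σ)ᶜ.card = Sᶜ.card := by
    rw [hcomp]; exact Finset.card_image_of_injective _ σ.injective
  by_cases h : S.card = p ∧ Sᶜ.card = q
  · rw [dif_pos h, dif_pos (by rw [hcS, hcSc]; exact h)]
    congr 1
    · have h1 : (v ∘ ⇑σ) ∘ S.orderEmbOfFin h.1 = v ∘ (⇑σ ∘ S.orderEmbOfFin h.1) := rfl
      rw [h1, sym_reindex hf v _ (σ.injective.comp (S.orderEmbOfFin h.1).injective)
        (S.image ⇑σ) (hcS.trans h.1)
        (fun k => Finset.mem_image_of_mem _ (Finset.orderEmbOfFin_mem S h.1 k))]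
    · have h1 : (v ∘ ⇑σ) ∘ Sᶜ.orderEmbOfFin h.2 = v ∘ (⇑σ ∘ Sᶜ.orderEmbOfFin h.2) := rfl
      rw [h1, sym_reindex hg v _ (σ.injective.comp (Sᶜ.orderEmbOfFin h.2).injective)
        (Sᶜ.image ⇑σ) ((Finset.card_image_of_injective _ σ.injective).trans h.2)
        (fun k => Finset.mem_image_of_mem _ (Finset.orderEmbOfFin_mem Sᶜ h.2 k))]
      exact congrArg g (emb_congr v hcomp.symm _ _)
  · rw [dif_neg h, dif_neg (by rw [hcS, hcSc]; exact h)]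

theorem cup_sym {p q n : ℕ} {f : (Fin p → L) → K} {g : (Fin q → L) → K}
    (hf : IsSym p f) (hg : IsSym q g) : IsSym n (cup K p q n f g) := by
  intro σ v
  rw [cup_eq, cup_eq]
  rw [Finset.sum_congr rfl (fun S _ => ct_sym hf hg σ v S)]
  exact Fintype.sum_equiv σ.finsetCongr _ _
    (fun S => by rw [Equiv.finsetCongr_apply, Finset.map_eq_image]; rfl)

theorem cup_multilin {p q n : ℕ} {f : (Fin p → L) → K} {g : (Fin q → L) → K}
    (hf : IsMultilin K p f) (hg : IsMultilin K q g) :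
    IsMultilin K n (cup K p q n f g) := by
  constructor
  · intro v i a b
    rw [cup_eq, cup_eq, cup_eq, ← Finset.sum_add_distrib]
    refine Finset.sum_congr rfl (fun S _ => ?_)
    unfold ct
    by_cases h : S.card = p ∧ Sᶜ.card = q
    · rw [dif_pos h, dif_pos h, dif_pos h]
      by_cases hi : i ∈ S
      · rw [update_comp_emb v S h.1 hi, update_comp_emb v S h.1 hi,
          update_comp_emb v S h.1 hi,
          update_comp_emb_not v Sᶜ h.2 (by simp [hi]),
          update_comp_emb_not v Sᶜ h.2 (by simp [hi]),
          update_comp_emb_not v Sᶜ h.2 (by simp [hi]), hf.1, add_mul]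
      · have hic : i ∈ Sᶜ := Finset.mem_compl.mpr hi
        rw [update_comp_emb_not v S h.1 hi, update_comp_emb_not v S h.1 hi,
          update_comp_emb_not v S h.1 hi,
          update_comp_emb v Sᶜ h.2 hic, update_comp_emb v Sᶜ h.2 hic,
          update_comp_emb v Sᶜ h.2 hic, hg.1, mul_add]
    · rw [dif_neg h, dif_neg h, dif_neg h, add_zero]
  · intro v i c a
    rw [cup_eq, cup_eq, Finset.smul_sum]
    refine Finset.sum_congr rfl (fun S _ => ?_)
    unfold ct
    by_cases h : S.card = p ∧ Sᶜ.card = q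
    · rw [dif_pos h, dif_pos h]
      by_cases hi : i ∈ S
      · rw [update_comp_emb v S h.1 hi, update_comp_emb v S h.1 hi,
          update_comp_emb_not v Sᶜ h.2 (by simp [hi]),
          update_comp_emb_not v Sᶜ h.2 (by simp [hi]), hf.2, smul_mul_assoc]
      · have hic : i ∈ Sᶜ := Finset.mem_compl.mpr hi
        rw [update_comp_emb_not v S h.1 hi, update_comp_emb_not v S h.1 hi,
          update_comp_emb v Sᶜ h.2 hic, update_comp_emb v Sᶜ h.2 hic, hg.2, mul_smul_comm]
    · rw [dif_neg h, dif_neg h, smul_zero]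

theorem cup_zero_right (p q n : ℕ) (f : (Fin p → L) → K) :
    cup K p q n f (0 : (Fin q → L) → K) = 0 := by
  funext x
  rw [cup_eq]
  refine Finset.sum_eq_zero (fun S _ => ?_)
  unfold ct; split <;> simp

theorem cup_zero_left (p q n : ℕ) (g : (Fin q → L) → K) :
    cup K p q n (0 : (Fin p → L) → K) g = 0 := by
  funext x
  rw [cup_eq]
  refine Finset.sum_eq_zero (fun S _ => ?_)
  unfold ct; split <;> simp

theorem cup_add_right (p q n : ℕ) (f : (Fin p → L) → K) (g₁ g₂ : (Fin q → L) → K) :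
    cup K p q n f (g₁ + g₂) = cup K p q n f g₁ + cup K p q n f g₂ := by
  funext x
  show cup K p q n f (g₁ + g₂) x = cup K p q n f g₁ x + cup K p q n f g₂ x
  rw [cup_eq, cup_eq, cup_eq, ← Finset.sum_add_distrib]
  refine Finset.sum_congr rfl (fun S _ => ?_)
  unfold ct; split <;> simp [mul_add]

theorem cup_add_left (p q n : ℕ) (f₁ f₂ : (Fin p → L) → K) (g : (Fin q → L) → K) :
    cup K p q n (f₁ + f₂) g = cup K p q n f₁ g + cup K p q n f₂ g := by
  funext x
  show cup K p q n (f₁ + f₂) g x = cup K p q n f₁ g x + cup K p q n f₂ g x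
  rw [cup_eq, cup_eq, cup_eq, ← Finset.sum_add_distrib]
  refine Finset.sum_congr rfl (fun S _ => ?_)
  unfold ct; split <;> simp [add_mul]

theorem cup_smul_right (p q n : ℕ) (c : K) (f : (Fin p → L) → K) (g : (Fin q → L) → K) :
    cup K p q n f (c • g) = c • cup K p q n f g := by
  funext x
  show cup K p q n f (c • g) x = c • cup K p q n f g x
  rw [cup_eq, cup_eq, Finset.smul_sum]
  refine Finset.sum_congr rfl (fun S _ => ?_)
  unfold ct; split
  · simp only [Pi.smul_apply, smul_eq_mul]; ring
  · simp

theorem cup_smul_left (p q n : ℕ) (c : K) (f : (Fin p → L) → K) (g : (Fin q → L) → K) :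
    cup K p q n (c • f) g = c • cup K p q n f g := by
  funext x
  show cup K p q n (c • f) g x = c • cup K p q n f g x
  rw [cup_eq, cup_eq, Finset.smul_sum]
  refine Finset.sum_congr rfl (fun S _ => ?_)
  unfold ct; split
  · simp only [Pi.smul_apply, smul_eq_mul]; ring
  · simp

theorem sum_image_eq {a b : ℕ} {e : Fin a → Fin b} (he : Function.Injective e)
    (F : Finset (Fin b) → K) (hF : ∀ T, ¬ T ⊆ Finset.univ.image e → F T = 0) :
    ∑ T : Finset (Fin b), F T = ∑ S : Finset (Fin a), F (S.image e) := by
  rw [← Finset.sum_filter_add_sum_filter_not Finset.univ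
    (fun T => T ⊆ Finset.univ.image e) F]
  rw [Finset.sum_eq_zero (fun T hT => hF T (Finset.mem_filter.mp hT).2), add_zero]
  have left_inv : ∀ T ∈ Finset.univ.filter (fun T => T ⊆ Finset.univ.image e),
      (Finset.univ.filter (fun k => e k ∈ T)).image e = T := by
    intro T hT
    have hT' := (Finset.mem_filter.mp hT).2
    have hfi := Finset.filter_image (s := (Finset.univ : Finset (Fin a))) (f := e)
      (p := (· ∈ T))
    rw [← hfi, Finset.filter_mem_eq_inter, Finset.inter_eq_right.mpr hT']
  refine Finset.sum_bij' (fun T _ => Finset.univ.filter (fun k => e k ∈ T))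
    (fun S _ => S.image e) (fun T hT => Finset.mem_univ _)
    (fun S _ => Finset.mem_filter.mpr ⟨Finset.mem_univ _,
      Finset.image_subset_image (Finset.subset_univ S)⟩)
    left_inv ?_ ?_
  · intro S _
    ext k
    simp only [Finset.mem_filter, Finset.mem_univ, true_and, Finset.mem_image]
    exact ⟨fun ⟨x, hx, hxe⟩ => he hxe ▸ hx, fun hk => ⟨k, hk, rfl⟩⟩
  · intro T hT
    rw [left_inv T hT]

theorem sum_shift {ι : Type*} [Fintype ι] [DecidableEq ι] (B : Finset ι)
    (F G : Finset ι → K) (hF : ∀ A, ¬ B ⊆ A → F A = 0)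
    (hG : ∀ C, ¬ Disjoint B C → G C = 0)
    (hFG : ∀ C, Disjoint B C → F (B ∪ C) = G C) :
    ∑ A : Finset ι, F A = ∑ C : Finset ι, G C := by
  rw [← Finset.sum_filter_add_sum_filter_not Finset.univ (fun A => B ⊆ A) F,
    Finset.sum_eq_zero (fun A hA => hF A (Finset.mem_filter.mp hA).2), add_zero,
    ← Finset.sum_filter_add_sum_filter_not Finset.univ (fun C => Disjoint B C) G,
    Finset.sum_eq_zero (fun C hC => hG C (Finset.mem_filter.mp hC).2), add_zero]
  refine Finset.sum_bij' (fun A _ => A \ B) (fun C _ => B ∪ C)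
    (fun A hA => Finset.mem_filter.mpr ⟨Finset.mem_univ _, Finset.disjoint_sdiff⟩)
    (fun C hC => Finset.mem_filter.mpr ⟨Finset.mem_univ _, Finset.subset_union_left⟩)
    (fun A hA => Finset.union_sdiff_of_subset (Finset.mem_filter.mp hA).2)
    (fun C hC => Finset.union_sdiff_cancel_left (Finset.mem_filter.mp hC).2)
    (fun A hA => by
      rw [← hFG _ Finset.disjoint_sdiff,
        Finset.union_sdiff_of_subset (Finset.mem_filter.mp hA).2])

theorem image_compl_emb {n m : ℕ} (A : Finset (Fin n)) (hA : A.card = m)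
    (S : Finset (Fin m)) :
    Sᶜ.image (A.orderEmbOfFin hA) = A \ S.image (A.orderEmbOfFin hA) := by
  have hu : S.image (A.orderEmbOfFin hA) ∪ Sᶜ.image (A.orderEmbOfFin hA) = A := by
    rw [← Finset.image_union, Finset.union_compl, orderEmbOfFin_image_univ]
  have hd : Disjoint (S.image (A.orderEmbOfFin hA)) (Sᶜ.image (A.orderEmbOfFin hA)) :=
    (Finset.disjoint_image (A.orderEmbOfFin hA).injective).mpr disjoint_compl_right
  have h2 := Finset.union_sdiff_cancel_left hd
  rw [hu] at h2
  exact h2.symm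

noncomputable def mid3 (p q r n : ℕ) (f : (Fin p → L) → K) (g : (Fin q → L) → K)
    (h : (Fin r → L) → K) (x : Fin n → L) (B C : Finset (Fin n)) : K :=
  if hc : B.card = p ∧ C.card = q ∧ Disjoint B C ∧ (B ∪ C)ᶜ.card = r then
    f (x ∘ B.orderEmbOfFin hc.1) * g (x ∘ C.orderEmbOfFin hc.2.1) *
      h (x ∘ (B ∪ C)ᶜ.orderEmbOfFin hc.2.2.2)
  else 0

noncomputable def t2 (p q r n : ℕ) (f : (Fin p → L) → K) (g : (Fin q → L) → K)
    (h : (Fin r → L) → K) (x : Fin n → L) (A B : Finset (Fin n)) : K :=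
  if hc : (A.card = p + q ∧ Aᶜ.card = r) ∧ B ⊆ A ∧ B.card = p ∧ (A \ B).card = q then
    f (x ∘ B.orderEmbOfFin hc.2.2.1) * g (x ∘ (A \ B).orderEmbOfFin hc.2.2.2) *
      h (x ∘ Aᶜ.orderEmbOfFin hc.1.2)
  else 0

theorem ct_left_expand (p q r n : ℕ) (f : (Fin p → L) → K) (g : (Fin q → L) → K)
    (h : (Fin r → L) → K) (x : Fin n → L) (A : Finset (Fin n)) :
    ct K (p + q) r n (cup K p q (p + q) f g) h x A
      = ∑ B : Finset (Fin n), t2 p q r n f g h x A B := by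
  by_cases hA : A.card = p + q ∧ Aᶜ.card = r
  · rw [show ct K (p + q) r n (cup K p q (p + q) f g) h x A
        = cup K p q (p + q) f g (x ∘ A.orderEmbOfFin hA.1) * h (x ∘ Aᶜ.orderEmbOfFin hA.2)
      from by unfold ct; rw [dif_pos hA]]
    rw [cup_eq, Finset.sum_mul]
    rw [sum_image_eq (A.orderEmbOfFin hA.1).injective (t2 p q r n f g h x A)
      (fun T hT => by
        unfold t2; rw [dif_neg]
        rw [orderEmbOfFin_image_univ A hA.1] at hT
        exact fun hc => hT hc.2.1)]
    refine Finset.sum_congr rfl (fun S _ => ?_)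
    have hsub : S.image (A.orderEmbOfFin hA.1) ⊆ A := fun a ha => by
      obtain ⟨i, _, rfl⟩ := Finset.mem_image.mp ha
      exact Finset.orderEmbOfFin_mem A hA.1 i
    have hcardB : (S.image (A.orderEmbOfFin hA.1)).card = S.card :=
      Finset.card_image_of_injective _ (A.orderEmbOfFin hA.1).injective
    have hsd : A \ S.image (A.orderEmbOfFin hA.1) = Sᶜ.image (A.orderEmbOfFin hA.1) :=
      (image_compl_emb A hA.1 S).symm
    have hcardC : (A \ S.image (A.orderEmbOfFin hA.1)).card = Sᶜ.card := by
      rw [hsd]; exact Finset.card_image_of_injective _ (A.orderEmbOfFin hA.1).injective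
    unfold ct t2
    by_cases hS : S.card = p ∧ Sᶜ.card = q
    · rw [dif_pos hS, dif_pos ⟨hA, hsub, hcardB.trans hS.1, hcardC.trans hS.2⟩]
      have hf1 : (x ∘ A.orderEmbOfFin hA.1) ∘ S.orderEmbOfFin hS.1
          = x ∘ (S.image (A.orderEmbOfFin hA.1)).orderEmbOfFin (hcardB.trans hS.1) := by
        rw [comp_orderEmbOfFin_image (A.orderEmbOfFin hA.1).strictMono S hS.1]
        rfl
      have hg1 : (x ∘ A.orderEmbOfFin hA.1) ∘ Sᶜ.orderEmbOfFin hS.2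
          = x ∘ (A \ S.image (A.orderEmbOfFin hA.1)).orderEmbOfFin (hcardC.trans hS.2) := by
        rw [emb_congr x hsd (hcardC.trans hS.2)
          ((Finset.card_image_of_injective _ (A.orderEmbOfFin hA.1).injective).trans hS.2),
          comp_orderEmbOfFin_image (A.orderEmbOfFin hA.1).strictMono Sᶜ hS.2]
        rfl
      rw [hf1, hg1]
    · rw [dif_neg hS, dif_neg (fun hc => hS ⟨hcardB.symm.trans hc.2.2.1,
        hcardC.symm.trans hc.2.2.2⟩), zero_mul]
  · rw [show ct K (p + q) r n (cup K p q (p + q) f g) h x A = 0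
      from by unfold ct; rw [dif_neg hA]]
    symm
    refine Finset.sum_eq_zero (fun B _ => ?_)
    unfold t2; rw [dif_neg (fun hc => hA hc.1)]

theorem ct_right_expand (p q r n : ℕ) (f : (Fin p → L) → K) (g : (Fin q → L) → K)
    (h : (Fin r → L) → K) (x : Fin n → L) (B : Finset (Fin n)) :
    ct K p (q + r) n f (cup K q r (q + r) g h) x B
      = ∑ C : Finset (Fin n), mid3 p q r n f g h x B C := by
  by_cases hB : B.card = p ∧ Bᶜ.card = q + r
  · rw [show ct K p (q + r) n f (cup K q r (q + r) g h) x B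
        = f (x ∘ B.orderEmbOfFin hB.1) * cup K q r (q + r) g h (x ∘ Bᶜ.orderEmbOfFin hB.2)
      from by unfold ct; rw [dif_pos hB]]
    rw [cup_eq, Finset.mul_sum]
    rw [sum_image_eq (Bᶜ.orderEmbOfFin hB.2).injective (mid3 p q r n f g h x B)
      (fun T hT => by
        unfold mid3; rw [dif_neg]
        rw [orderEmbOfFin_image_univ Bᶜ hB.2] at hT
        exact fun hc => hT (fun a ha => Finset.mem_compl.mpr
          (Finset.disjoint_right.mp hc.2.2.1 ha)))]
    refine Finset.sum_congr rfl (fun S _ => ?_)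
    have hsub : S.image (Bᶜ.orderEmbOfFin hB.2) ⊆ Bᶜ := fun a ha => by
      obtain ⟨i, _, rfl⟩ := Finset.mem_image.mp ha
      exact Finset.orderEmbOfFin_mem Bᶜ hB.2 i
    have hdisj : Disjoint B (S.image (Bᶜ.orderEmbOfFin hB.2)) :=
      Finset.disjoint_right.mpr (fun a ha => Finset.mem_compl.mp (hsub ha))
    have hcardC : (S.image (Bᶜ.orderEmbOfFin hB.2)).card = S.card :=
      Finset.card_image_of_injective _ (Bᶜ.orderEmbOfFin hB.2).injective
    have hset : Sᶜ.image (Bᶜ.orderEmbOfFin hB.2) = (B ∪ S.image (Bᶜ.orderEmbOfFin hB.2))ᶜ := by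
      rw [image_compl_emb Bᶜ hB.2 S, Finset.compl_union, sdiff_eq]; rfl
    have hcardU : (B ∪ S.image (Bᶜ.orderEmbOfFin hB.2))ᶜ.card = Sᶜ.card := by
      rw [← hset]; exact Finset.card_image_of_injective _ (Bᶜ.orderEmbOfFin hB.2).injective
    unfold ct mid3
    by_cases hS : S.card = q ∧ Sᶜ.card = r
    · rw [dif_pos hS, dif_pos ⟨hB.1, hcardC.trans hS.1, hdisj, hcardU.trans hS.2⟩]
      have hg1 : (x ∘ Bᶜ.orderEmbOfFin hB.2) ∘ S.orderEmbOfFin hS.1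
          = x ∘ (S.image (Bᶜ.orderEmbOfFin hB.2)).orderEmbOfFin (hcardC.trans hS.1) := by
        rw [comp_orderEmbOfFin_image (Bᶜ.orderEmbOfFin hB.2).strictMono S hS.1]
        rfl
      have hh1 : (x ∘ Bᶜ.orderEmbOfFin hB.2) ∘ Sᶜ.orderEmbOfFin hS.2
          = x ∘ (B ∪ S.image (Bᶜ.orderEmbOfFin hB.2))ᶜ.orderEmbOfFin (hcardU.trans hS.2) := by
        rw [← emb_congr x hset
          ((Finset.card_image_of_injective _ (Bᶜ.orderEmbOfFin hB.2).injective).trans hS.2)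
          (hcardU.trans hS.2),
          comp_orderEmbOfFin_image (Bᶜ.orderEmbOfFin hB.2).strictMono Sᶜ hS.2]
        rfl
      rw [hg1, hh1, mul_assoc]
    · rw [dif_neg hS, dif_neg (fun hc => hS ⟨hcardC.symm.trans hc.2.1,
        hcardU.symm.trans hc.2.2.2⟩), mul_zero]
  · rw [show ct K p (q + r) n f (cup K q r (q + r) g h) x B = 0
      from by unfold ct; rw [dif_neg hB]]
    symm
    refine Finset.sum_eq_zero (fun C _ => ?_)
    unfold mid3
    rw [dif_neg]
    intro hc
    apply hB
    refine ⟨hc.1, ?_⟩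
    have hsub : C ⊆ Bᶜ := fun a ha => Finset.mem_compl.mpr
      (Finset.disjoint_right.mp hc.2.2.1 ha)
    have h1 : (Bᶜ \ C).card + C.card = Bᶜ.card := Finset.card_sdiff_add_card_eq_card hsub
    have h2 : Bᶜ \ C = (B ∪ C)ᶜ := by rw [Finset.compl_union, sdiff_eq]; rfl
    rw [h2, hc.2.2.2, hc.2.1] at h1
    omega

theorem cup_assoc (p q r n : ℕ) (f : (Fin p → L) → K) (g : (Fin q → L) → K)
    (h : (Fin r → L) → K) :
    cup K (p + q) r n (cup K p q (p + q) f g) h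
      = cup K p (q + r) n f (cup K q r (q + r) g h) := by
  funext x
  rw [cup_eq, cup_eq]
  rw [Finset.sum_congr rfl (fun A _ => ct_left_expand p q r n f g h x A),
    Finset.sum_congr rfl (fun B _ => ct_right_expand p q r n f g h x B),
    Finset.sum_comm]
  refine Finset.sum_congr rfl (fun B _ => ?_)
  refine sum_shift B (fun A => t2 p q r n f g h x A B) (mid3 p q r n f g h x B)
    (fun A hA => by simp only [t2]; rw [dif_neg (fun hc => hA hc.2.1)])
    (fun C hC => by simp only [mid3]; rw [dif_neg (fun hc => hC hc.2.2.1)])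
    (fun C hd => ?_)
  simp only [t2, mid3]
  have hBC : (B ∪ C) \ B = C := Finset.union_sdiff_cancel_left hd
  by_cases hm : B.card = p ∧ C.card = q ∧ Disjoint B C ∧ (B ∪ C)ᶜ.card = r
  · have hcU : (B ∪ C).card = p + q := by
      rw [Finset.card_union_of_disjoint hd, hm.1, hm.2.1]
    rw [dif_pos hm, dif_pos ⟨⟨hcU, hm.2.2.2⟩, Finset.subset_union_left,
      hm.1, by rw [hBC]; exact hm.2.1⟩]
    rw [emb_congr x hBC (by rw [hBC]; exact hm.2.1) hm.2.1]
  · rw [dif_neg hm, dif_neg]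
    intro hc
    apply hm
    exact ⟨hc.2.2.1, by rw [← hBC]; exact hc.2.2.2, hd, hc.1.2⟩

theorem orderEmbOfFin_congr {m k : ℕ} {S T : Finset (Fin m)} (hST : S = T)
    (h1 : S.card = k) (h2 : T.card = k) :
    ⇑(S.orderEmbOfFin h1) = ⇑(T.orderEmbOfFin h2) := by subst hST; rfl

theorem emb_symm {m k : ℕ} (A : Finset (Fin m)) (h : A.card = k) (a : Fin m) (ha : a ∈ A) :
    A.orderEmbOfFin h ((A.orderIsoOfFin h).symm ⟨a, ha⟩) = a := by
  rw [← Finset.coe_orderIsoOfFin_apply, OrderIso.apply_symm_apply]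

theorem symm_emb {m k : ℕ} (A : Finset (Fin m)) (h : A.card = k) (w : Fin k)
    (mem : A.orderEmbOfFin h w ∈ A) :
    (A.orderIsoOfFin h).symm ⟨A.orderEmbOfFin h w, mem⟩ = w := by
  rw [OrderIso.symm_apply_eq]
  exact Subtype.ext (Finset.coe_orderIsoOfFin_apply A h w).symm

theorem symm_lt {m k : ℕ} (A : Finset (Fin m)) (h : A.card = k) {a b : Fin m}
    (ha : a ∈ A) (hb : b ∈ A) (hab : a < b) :
    (A.orderIsoOfFin h).symm ⟨a, ha⟩ < (A.orderIsoOfFin h).symm ⟨b, hb⟩ :=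
  (A.orderIsoOfFin h).symm.lt_iff_lt.mpr (Subtype.mk_lt_mk.mpr hab)

theorem image_compl_inj {a b : ℕ} {e : Fin a → Fin b} (he : Function.Injective e)
    (S : Finset (Fin a)) :
    Sᶜ.image e = (Finset.univ.image e) \ S.image e := by
  have hu : S.image e ∪ Sᶜ.image e = Finset.univ.image e := by
    rw [← Finset.image_union, Finset.union_compl]
  have hd : Disjoint (S.image e) (Sᶜ.image e) :=
    (Finset.disjoint_image he).mpr disjoint_compl_right
  have h2 := Finset.union_sdiff_cancel_left hd
  rw [hu] at h2
  exact h2.symm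

theorem image_univ_succAbove {n : ℕ} (j : Fin (n + 1)) :
    Finset.univ.image j.succAbove = {j}ᶜ := by
  ext a
  simp only [Finset.mem_image, Finset.mem_univ, true_and, Finset.mem_compl,
    Finset.mem_singleton]
  exact ⟨fun ⟨k, hk⟩ => hk ▸ Fin.succAbove_ne j k, fun ha => Fin.exists_succAbove_eq ha⟩

theorem insert_compl_image {n : ℕ} (j : Fin (n + 1)) (S : Finset (Fin n)) :
    (insert j (S.image j.succAbove))ᶜ = Sᶜ.image j.succAbove := by
  ext a
  simp only [Finset.mem_compl, Finset.mem_insert, not_or, Finset.mem_image]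
  constructor
  · rintro ⟨ha2, haT⟩
    obtain ⟨k, hk⟩ := Fin.exists_succAbove_eq ha2
    refine ⟨k, ?_, hk⟩
    intro hkS
    exact haT ⟨k, hkS, hk⟩
  · rintro ⟨k, hk, rfl⟩
    refine ⟨Fin.succAbove_ne j k, ?_⟩
    rintro ⟨k', hk', hke⟩
    exact hk (Fin.succAbove_right_injective hke ▸ hk')

noncomputable def mtf (p q : ℕ) (br : L →ₗ[K] L →ₗ[K] L) (f : (Fin p → L) → K)
    (g : (Fin q → L) → K) (x : Fin (p + q + 1) → L)
    (z : Fin (p + q + 1) × Fin (p + q + 1)) (T : Finset (Fin (p + q + 1))) : K :=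
  if hc : z.1 < z.2 ∧ z.2 ∉ T ∧ z.1 ∈ T ∧ T.card = p ∧ (insert z.2 T)ᶜ.card = q then
    f (Function.update x z.1 (br (x z.1) (x z.2)) ∘ T.orderEmbOfFin hc.2.2.2.1) *
      g (x ∘ (insert z.2 T)ᶜ.orderEmbOfFin hc.2.2.2.2)
  else 0

noncomputable def mtg (p q : ℕ) (br : L →ₗ[K] L →ₗ[K] L) (f : (Fin p → L) → K)
    (g : (Fin q → L) → K) (x : Fin (p + q + 1) → L)
    (z : Fin (p + q + 1) × Fin (p + q + 1)) (T : Finset (Fin (p + q + 1))) : K :=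
  if hc : z.1 < z.2 ∧ z.2 ∉ T ∧ z.1 ∉ T ∧ T.card = p ∧ (insert z.2 T)ᶜ.card = q then
    f (x ∘ T.orderEmbOfFin hc.2.2.2.1) *
      g (Function.update x z.1 (br (x z.1) (x z.2))
          ∘ (insert z.2 T)ᶜ.orderEmbOfFin hc.2.2.2.2)
  else 0

theorem step1 (p q : ℕ) (br : L →ₗ[K] L →ₗ[K] L) (f : (Fin p → L) → K)
    (g : (Fin q → L) → K) (x : Fin (p + q + 1) → L)
    (z : Fin (p + q + 1) × Fin (p + q + 1)) (hz : z.1 < z.2) :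
    cup K p q (p + q) f g
        (Function.update x z.1 (br (x z.1) (x z.2)) ∘ z.2.succAbove)
      = ∑ T : Finset (Fin (p + q + 1)),
          (mtf p q br f g x z T + mtg p q br f g x z T) := by
  rw [cup_eq]
  rw [sum_image_eq (Fin.succAbove_right_injective (p := z.2))
    (fun T => mtf p q br f g x z T + mtg p q br f g x z T)
    (fun T hT => by
      have hz2 : z.2 ∈ T := by
        by_contra hn
        exact hT (fun a ha => by
          rw [image_univ_succAbove]
          exact Finset.mem_compl.mpr (Finset.mem_singleton.not.mpr
            (fun he => hn (he ▸ ha))))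
      show mtf p q br f g x z T + mtg p q br f g x z T = 0
      rw [show mtf p q br f g x z T = 0 from by
          unfold mtf; rw [dif_neg (fun hc => hc.2.1 hz2)],
        show mtg p q br f g x z T = 0 from by
          unfold mtg; rw [dif_neg (fun hc => hc.2.1 hz2)], add_zero])]
  refine Finset.sum_congr rfl (fun S _ => ?_)
  have hinj : Function.Injective z.2.succAbove := Fin.succAbove_right_injective
  have hz2T : z.2 ∉ S.image z.2.succAbove := fun hm => by
    obtain ⟨k, _, hk⟩ := Finset.mem_image.mp hm
    exact Fin.succAbove_ne z.2 k hk
  have hcompl : (insert z.2 (S.image z.2.succAbove))ᶜ = Sᶜ.image z.2.succAbove :=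
    insert_compl_image z.2 S
  have hcT : (S.image z.2.succAbove).card = S.card :=
    Finset.card_image_of_injective _ hinj
  have hcC : (insert z.2 (S.image z.2.succAbove))ᶜ.card = Sᶜ.card := by
    rw [hcompl]; exact Finset.card_image_of_injective _ hinj
  unfold ct mtf mtg
  by_cases hS : S.card = p ∧ Sᶜ.card = q
  · rw [dif_pos hS]
    by_cases h1 : z.1 ∈ S.image z.2.succAbove
    · rw [dif_pos ⟨hz, hz2T, h1, hcT.trans hS.1, hcC.trans hS.2⟩,
        dif_neg (fun hc => hc.2.2.1 h1), add_zero]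
      have hfa : (Function.update x z.1 (br (x z.1) (x z.2)) ∘ z.2.succAbove)
            ∘ S.orderEmbOfFin hS.1
          = Function.update x z.1 (br (x z.1) (x z.2))
            ∘ (S.image z.2.succAbove).orderEmbOfFin (hcT.trans hS.1) := by
        rw [comp_orderEmbOfFin_image (Fin.strictMono_succAbove z.2) S hS.1]
        rfl
      have hga : (Function.update x z.1 (br (x z.1) (x z.2)) ∘ z.2.succAbove)
            ∘ Sᶜ.orderEmbOfFin hS.2
          = x ∘ (insert z.2 (S.image z.2.succAbove))ᶜ.orderEmbOfFin (hcC.trans hS.2) := by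
        have e1 : (Function.update x z.1 (br (x z.1) (x z.2)) ∘ z.2.succAbove)
              ∘ Sᶜ.orderEmbOfFin hS.2
            = Function.update x z.1 (br (x z.1) (x z.2))
              ∘ (Sᶜ.image z.2.succAbove).orderEmbOfFin
                ((Finset.card_image_of_injective _ hinj).trans hS.2) := by
          rw [comp_orderEmbOfFin_image (Fin.strictMono_succAbove z.2) Sᶜ hS.2]
          rfl
        rw [e1, orderEmbOfFin_congr hcompl.symm
          ((Finset.card_image_of_injective _ hinj).trans hS.2) (hcC.trans hS.2)]
        exact update_comp_emb_not x _ (hcC.trans hS.2)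
          (fun hmem => (Finset.mem_compl.mp hmem) (Finset.mem_insert_of_mem h1))
          (br (x z.1) (x z.2))
      rw [hfa, hga]
    · rw [dif_neg (show ¬(z.1 < z.2 ∧ z.2 ∉ S.image z.2.succAbove
          ∧ z.1 ∈ S.image z.2.succAbove ∧ (S.image z.2.succAbove).card = p
          ∧ (insert z.2 (S.image z.2.succAbove))ᶜ.card = q) from fun hc => h1 hc.2.2.1),
        dif_pos ⟨hz, hz2T, h1, hcT.trans hS.1, hcC.trans hS.2⟩, zero_add]
      have hfa : (Function.update x z.1 (br (x z.1) (x z.2)) ∘ z.2.succAbove)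
            ∘ S.orderEmbOfFin hS.1
          = x ∘ (S.image z.2.succAbove).orderEmbOfFin (hcT.trans hS.1) := by
        rw [show (Function.update x z.1 (br (x z.1) (x z.2)) ∘ z.2.succAbove)
              ∘ S.orderEmbOfFin hS.1
            = Function.update x z.1 (br (x z.1) (x z.2))
              ∘ (S.image z.2.succAbove).orderEmbOfFin (hcT.trans hS.1) from by
          rw [comp_orderEmbOfFin_image (Fin.strictMono_succAbove z.2) S hS.1]; rfl]
        exact update_comp_emb_not x _ (hcT.trans hS.1) h1 (br (x z.1) (x z.2))
      have hga : (Function.update x z.1 (br (x z.1) (x z.2)) ∘ z.2.succAbove)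
            ∘ Sᶜ.orderEmbOfFin hS.2
          = Function.update x z.1 (br (x z.1) (x z.2))
            ∘ (insert z.2 (S.image z.2.succAbove))ᶜ.orderEmbOfFin (hcC.trans hS.2) := by
        rw [orderEmbOfFin_congr hcompl (hcC.trans hS.2)
            ((Finset.card_image_of_injective _ hinj).trans hS.2),
          comp_orderEmbOfFin_image (Fin.strictMono_succAbove z.2) Sᶜ hS.2]
        rfl
      rw [hfa, hga]
  · rw [dif_neg hS,
      dif_neg (fun hc => hS ⟨hcT.symm.trans hc.2.2.2.1, hcC.symm.trans hc.2.2.2.2⟩),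
      dif_neg (fun hc => hS ⟨hcT.symm.trans hc.2.2.2.1, hcC.symm.trans hc.2.2.2.2⟩),
      add_zero]

noncomputable def tf (p q : ℕ) (br : L →ₗ[K] L →ₗ[K] L) (f : (Fin p → L) → K)
    (g : (Fin q → L) → K) (x : Fin (p + q + 1) → L)
    (A : Finset (Fin (p + q + 1))) (w : Fin (p + 1) × Fin (p + 1)) : K :=
  if hc : (A.card = p + 1 ∧ Aᶜ.card = q) ∧ w.1 < w.2 then
    f (Function.update x (A.orderEmbOfFin hc.1.1 w.1)
        (br ((x ∘ A.orderEmbOfFin hc.1.1) w.1) ((x ∘ A.orderEmbOfFin hc.1.1) w.2))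
        ∘ (A.erase (A.orderEmbOfFin hc.1.1 w.2)).orderEmbOfFin
          (by rw [Finset.card_erase_of_mem (Finset.orderEmbOfFin_mem A hc.1.1 w.2), hc.1.1]; omega))
      * g (x ∘ Aᶜ.orderEmbOfFin hc.1.2)
  else 0

noncomputable def tg (p q : ℕ) (br : L →ₗ[K] L →ₗ[K] L) (f : (Fin p → L) → K)
    (g : (Fin q → L) → K) (x : Fin (p + q + 1) → L)
    (B : Finset (Fin (p + q + 1))) (w : Fin (q + 1) × Fin (q + 1)) : K :=
  if hc : (B.card = p ∧ Bᶜ.card = q + 1) ∧ w.1 < w.2 then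
    f (x ∘ B.orderEmbOfFin hc.1.1) *
      g (Function.update x (Bᶜ.orderEmbOfFin hc.1.2 w.1)
          (br ((x ∘ Bᶜ.orderEmbOfFin hc.1.2) w.1) ((x ∘ Bᶜ.orderEmbOfFin hc.1.2) w.2))
          ∘ (Bᶜ.erase (Bᶜ.orderEmbOfFin hc.1.2 w.2)).orderEmbOfFin
            (by rw [Finset.card_erase_of_mem (Finset.orderEmbOfFin_mem Bᶜ hc.1.2 w.2),
              hc.1.2]; omega))
  else 0

theorem erase_emb_comp {m k : ℕ} (A : Finset (Fin (m + 1))) (hA : A.card = k + 1)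
    (w2 : Fin (k + 1)) (pf : (A.erase (A.orderEmbOfFin hA w2)).card = k) :
    ⇑((A.erase (A.orderEmbOfFin hA w2)).orderEmbOfFin pf)
      = ⇑(A.orderEmbOfFin hA) ∘ w2.succAbove :=
  (Finset.orderEmbOfFin_unique pf
    (fun m => Finset.mem_erase.mpr
      ⟨(A.orderEmbOfFin hA).injective.ne (Fin.succAbove_ne w2 m),
        Finset.orderEmbOfFin_mem A hA _⟩)
    ((A.orderEmbOfFin hA).strictMono.comp (Fin.strictMono_succAbove w2))).symm

theorem step2a (p q : ℕ) (br : L →ₗ[K] L →ₗ[K] L) (f : (Fin p → L) → K)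
    (g : (Fin q → L) → K) (x : Fin (p + q + 1) → L) (A : Finset (Fin (p + q + 1))) :
    ct K (p + 1) q (p + q + 1) (cdiff br (0 : L →ₗ[K] K →ₗ[K] K) p f) g x A
      = ∑ w : Fin (p + 1) × Fin (p + 1), tf p q br f g x A w := by
  unfold ct
  by_cases hA : A.card = p + 1 ∧ Aᶜ.card = q
  · rw [dif_pos hA]
    have hcd : cdiff br (0 : L →ₗ[K] K →ₗ[K] K) p f (x ∘ A.orderEmbOfFin hA.1)
        = ∑ w ∈ Finset.univ.filter (fun w : Fin (p + 1) × Fin (p + 1) => w.1 < w.2),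
            f (Function.update (x ∘ A.orderEmbOfFin hA.1) w.1
                (br ((x ∘ A.orderEmbOfFin hA.1) w.1) ((x ∘ A.orderEmbOfFin hA.1) w.2))
              ∘ w.2.succAbove) := by
      unfold cdiff
      simp only [LinearMap.zero_apply, Finset.sum_const_zero, add_zero]
    rw [hcd, Finset.sum_mul]
    rw [show ∑ w : Fin (p + 1) × Fin (p + 1), tf p q br f g x A w
        = ∑ w ∈ Finset.univ.filter (fun w : Fin (p + 1) × Fin (p + 1) => w.1 < w.2),
            tf p q br f g x A w from
      (Finset.sum_subset (Finset.filter_subset _ _) (fun w _ hw => by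
        unfold tf
        rw [dif_neg (fun hc => hw (Finset.mem_filter.mpr ⟨Finset.mem_univ _, hc.2⟩))])).symm]
    refine Finset.sum_congr rfl (fun w hw => ?_)
    have hlt := (Finset.mem_filter.mp hw).2
    unfold tf
    rw [dif_pos ⟨hA, hlt⟩]
    congr 1
    have hcomp : ⇑((A.erase (A.orderEmbOfFin hA.1 w.2)).orderEmbOfFin
          (by rw [Finset.card_erase_of_mem (Finset.orderEmbOfFin_mem A hA.1 w.2), hA.1]; omega))
        = ⇑(A.orderEmbOfFin hA.1) ∘ w.2.succAbove := erase_emb_comp A hA.1 w.2 _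
    rw [hcomp]
    rw [← Function.update_comp_eq_of_injective x (A.orderEmbOfFin hA.1).injective w.1
      (br ((x ∘ A.orderEmbOfFin hA.1) w.1) ((x ∘ A.orderEmbOfFin hA.1) w.2))]
    rfl
  · rw [dif_neg hA]
    symm
    refine Finset.sum_eq_zero (fun w _ => ?_)
    unfold tf
    rw [dif_neg (fun hc => hA hc.1)]

theorem step3a (p q : ℕ) (br : L →ₗ[K] L →ₗ[K] L) (f : (Fin p → L) → K)
    (g : (Fin q → L) → K) (x : Fin (p + q + 1) → L) (B : Finset (Fin (p + q + 1))) :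
    ct K p (q + 1) (p + q + 1) f (cdiff br (0 : L →ₗ[K] K →ₗ[K] K) q g) x B
      = ∑ w : Fin (q + 1) × Fin (q + 1), tg p q br f g x B w := by
  unfold ct
  by_cases hB : B.card = p ∧ Bᶜ.card = q + 1
  · rw [dif_pos hB]
    have hcd : cdiff br (0 : L →ₗ[K] K →ₗ[K] K) q g (x ∘ Bᶜ.orderEmbOfFin hB.2)
        = ∑ w ∈ Finset.univ.filter (fun w : Fin (q + 1) × Fin (q + 1) => w.1 < w.2),
            g (Function.update (x ∘ Bᶜ.orderEmbOfFin hB.2) w.1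
                (br ((x ∘ Bᶜ.orderEmbOfFin hB.2) w.1) ((x ∘ Bᶜ.orderEmbOfFin hB.2) w.2))
              ∘ w.2.succAbove) := by
      unfold cdiff
      simp only [LinearMap.zero_apply, Finset.sum_const_zero, add_zero]
    rw [hcd, Finset.mul_sum]
    rw [show ∑ w : Fin (q + 1) × Fin (q + 1), tg p q br f g x B w
        = ∑ w ∈ Finset.univ.filter (fun w : Fin (q + 1) × Fin (q + 1) => w.1 < w.2),
            tg p q br f g x B w from
      (Finset.sum_subset (Finset.filter_subset _ _) (fun w _ hw => by
        unfold tg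
        rw [dif_neg (fun hc => hw (Finset.mem_filter.mpr ⟨Finset.mem_univ _, hc.2⟩))])).symm]
    refine Finset.sum_congr rfl (fun w hw => ?_)
    have hlt := (Finset.mem_filter.mp hw).2
    unfold tg
    rw [dif_pos ⟨hB, hlt⟩]
    congr 1
    have hcomp : ⇑((Bᶜ.erase (Bᶜ.orderEmbOfFin hB.2 w.2)).orderEmbOfFin
          (by rw [Finset.card_erase_of_mem (Finset.orderEmbOfFin_mem Bᶜ hB.2 w.2), hB.2]; omega))
        = ⇑(Bᶜ.orderEmbOfFin hB.2) ∘ w.2.succAbove := erase_emb_comp Bᶜ hB.2 w.2 _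
    rw [hcomp]
    rw [← Function.update_comp_eq_of_injective x (Bᶜ.orderEmbOfFin hB.2).injective w.1
      (br ((x ∘ Bᶜ.orderEmbOfFin hB.2) w.1) ((x ∘ Bᶜ.orderEmbOfFin hB.2) w.2))]
    rfl
  · rw [dif_neg hB]
    symm
    refine Finset.sum_eq_zero (fun w _ => ?_)
    unfold tg
    rw [dif_neg (fun hc => hB hc.1)]

theorem symm_congr {m k : ℕ} {S T : Finset (Fin m)} (hST : S = T)
    (h1 : S.card = k) (h2 : T.card = k) (a : Fin m) (ha : a ∈ S) (ha2 : a ∈ T) :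
    (S.orderIsoOfFin h1).symm ⟨a, ha⟩ = (T.orderIsoOfFin h2).symm ⟨a, ha2⟩ := by
  subst hST; rfl

noncomputable def imapf (p q : ℕ) (zT : (Fin (p+q+1) × Fin (p+q+1)) × Finset (Fin (p+q+1))) :
    Finset (Fin (p+q+1)) × (Fin (p+1) × Fin (p+1)) :=
  if h : (insert zT.1.2 zT.2).card = p + 1 ∧ zT.1.1 ∈ insert zT.1.2 zT.2 then
    (insert zT.1.2 zT.2,
      (((insert zT.1.2 zT.2).orderIsoOfFin h.1).symm ⟨zT.1.1, h.2⟩,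
       ((insert zT.1.2 zT.2).orderIsoOfFin h.1).symm ⟨zT.1.2, Finset.mem_insert_self _ _⟩))
  else (∅, (0, 0))

noncomputable def jmapf (p q : ℕ) (Aw : Finset (Fin (p+q+1)) × (Fin (p+1) × Fin (p+1))) :
    (Fin (p+q+1) × Fin (p+q+1)) × Finset (Fin (p+q+1)) :=
  if h : Aw.1.card = p + 1 then
    ((Aw.1.orderEmbOfFin h Aw.2.1, Aw.1.orderEmbOfFin h Aw.2.2),
      Aw.1.erase (Aw.1.orderEmbOfFin h Aw.2.2))
  else ((0, 0), ∅)

theorem step2 (p q : ℕ) (br : L →ₗ[K] L →ₗ[K] L) (f : (Fin p → L) → K)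
    (g : (Fin q → L) → K) (x : Fin (p + q + 1) → L) :
    ∑ z ∈ Finset.univ.filter (fun z : Fin (p+q+1) × Fin (p+q+1) => z.1 < z.2),
      ∑ T : Finset (Fin (p+q+1)), mtf p q br f g x z T
      = cup K (p+1) q (p+q+1) (cdiff br (0 : L →ₗ[K] K →ₗ[K] K) p f) g x := by
  rw [cup_eq]
  rw [Finset.sum_congr rfl (fun A _ => step2a p q br f g x A)]
  rw [← Finset.sum_product', ← Finset.sum_product']
  have hL : ∑ zT ∈ (Finset.univ.filter
        (fun z : Fin (p+q+1) × Fin (p+q+1) => z.1 < z.2)) ×ˢ Finset.univ,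
        mtf p q br f g x zT.1 zT.2
      = ∑ zT ∈ (Finset.univ ×ˢ Finset.univ).filter
          (fun zT : (Fin (p+q+1) × Fin (p+q+1)) × Finset (Fin (p+q+1)) =>
            zT.1.1 < zT.1.2 ∧ zT.1.2 ∉ zT.2 ∧ zT.1.1 ∈ zT.2 ∧ zT.2.card = p
              ∧ (insert zT.1.2 zT.2)ᶜ.card = q),
        mtf p q br f g x zT.1 zT.2 := by
    refine (Finset.sum_subset (fun zT h => ?_) (fun zT _ h => ?_)).symm
    · have hc := (Finset.mem_filter.mp h).2
      exact Finset.mem_product.mpr ⟨Finset.mem_filter.mpr ⟨Finset.mem_univ _, hc.1⟩,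
        Finset.mem_univ _⟩
    · unfold mtf
      rw [dif_neg (fun hc => h (Finset.mem_filter.mpr
        ⟨Finset.mem_product.mpr ⟨Finset.mem_univ _, Finset.mem_univ _⟩, hc⟩))]
  have hR : ∑ Aw ∈ (Finset.univ : Finset (Finset (Fin (p+q+1)))) ×ˢ Finset.univ,
        tf p q br f g x Aw.1 Aw.2
      = ∑ Aw ∈ (Finset.univ ×ˢ Finset.univ).filter
          (fun Aw : Finset (Fin (p+q+1)) × (Fin (p+1) × Fin (p+1)) =>
            (Aw.1.card = p + 1 ∧ Aw.1ᶜ.card = q) ∧ Aw.2.1 < Aw.2.2),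
        tf p q br f g x Aw.1 Aw.2 := by
    refine (Finset.sum_subset (Finset.filter_subset _ _) (fun Aw _ h => ?_)).symm
    unfold tf
    rw [dif_neg (fun hc => h (Finset.mem_filter.mpr
      ⟨Finset.mem_product.mpr ⟨Finset.mem_univ _, Finset.mem_univ _⟩, hc⟩))]
  rw [hL, hR]
  refine Finset.sum_nbij' (imapf p q) (jmapf p q) ?_ ?_ ?_ ?_ ?_
  · -- maps into target filter
    rintro ⟨⟨z1, z2⟩, T⟩ h
    obtain ⟨hlt, h2T, h1T, hTp, hq⟩ := (Finset.mem_filter.mp h).2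
    have hcard : (insert z2 T).card = p + 1 := by
      rw [Finset.card_insert_of_notMem h2T, hTp]
    have h1A : z1 ∈ insert z2 T := Finset.mem_insert_of_mem h1T
    unfold imapf
    rw [dif_pos (⟨hcard, h1A⟩ : (insert ((z1,z2),T).1.2 ((z1,z2),T).2).card = p + 1
      ∧ ((z1,z2),T).1.1 ∈ insert ((z1,z2),T).1.2 ((z1,z2),T).2)]
    refine Finset.mem_filter.mpr ⟨Finset.mem_product.mpr ⟨Finset.mem_univ _,
      Finset.mem_univ _⟩, ⟨hcard, hq⟩, ?_⟩
    exact symm_lt _ hcard h1A (Finset.mem_insert_self _ _) hlt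
  · -- j maps into source filter
    rintro ⟨A, w1, w2⟩ h
    obtain ⟨⟨hA, hAc⟩, hwlt⟩ := (Finset.mem_filter.mp h).2
    unfold jmapf
    rw [dif_pos (hA : (A, (w1,w2)).1.card = p + 1)]
    have hne : A.orderEmbOfFin hA w1 ≠ A.orderEmbOfFin hA w2 :=
      (A.orderEmbOfFin hA).injective.ne (ne_of_lt hwlt)
    refine Finset.mem_filter.mpr ⟨Finset.mem_product.mpr ⟨Finset.mem_univ _,
      Finset.mem_univ _⟩, (A.orderEmbOfFin hA).strictMono hwlt,
      Finset.notMem_erase _ _,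
      Finset.mem_erase.mpr ⟨hne, Finset.orderEmbOfFin_mem A hA w1⟩, ?_, ?_⟩
    · rw [Finset.card_erase_of_mem (Finset.orderEmbOfFin_mem A hA w2), hA]
      omega
    · rw [Finset.insert_erase (Finset.orderEmbOfFin_mem A hA w2)]
      exact hAc
  · -- left inverse
    rintro ⟨⟨z1, z2⟩, T⟩ h
    obtain ⟨hlt, h2T, h1T, hTp, hq⟩ := (Finset.mem_filter.mp h).2
    have hcard : (insert z2 T).card = p + 1 := by
      rw [Finset.card_insert_of_notMem h2T, hTp]
    have h1A : z1 ∈ insert z2 T := Finset.mem_insert_of_mem h1T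
    unfold imapf
    rw [dif_pos (⟨hcard, h1A⟩ : (insert ((z1,z2),T).1.2 ((z1,z2),T).2).card = p + 1
      ∧ ((z1,z2),T).1.1 ∈ insert ((z1,z2),T).1.2 ((z1,z2),T).2)]
    unfold jmapf
    rw [dif_pos hcard]
    have he1 : (insert z2 T).orderEmbOfFin hcard
        (((insert z2 T).orderIsoOfFin hcard).symm ⟨z1, h1A⟩) = z1 := emb_symm _ _ _ _
    have he2 : (insert z2 T).orderEmbOfFin hcard
        (((insert z2 T).orderIsoOfFin hcard).symm
          ⟨z2, Finset.mem_insert_self _ _⟩) = z2 := emb_symm _ _ _ _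
    simp only [he1, he2]
    rw [Finset.erase_insert h2T]
  · -- right inverse
    rintro ⟨A, w1, w2⟩ h
    obtain ⟨⟨hA, hAc⟩, hwlt⟩ := (Finset.mem_filter.mp h).2
    unfold jmapf
    rw [dif_pos (hA : (A, (w1,w2)).1.card = p + 1)]
    have hmem2 := Finset.orderEmbOfFin_mem A hA w2
    have hins : insert (A.orderEmbOfFin hA w2)
        (A.erase (A.orderEmbOfFin hA w2)) = A := Finset.insert_erase hmem2
    have hcard' : (insert (A.orderEmbOfFin hA w2)
        (A.erase (A.orderEmbOfFin hA w2))).card = p + 1 := by rw [hins]; exact hA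
    have hne : A.orderEmbOfFin hA w1 ≠ A.orderEmbOfFin hA w2 :=
      (A.orderEmbOfFin hA).injective.ne (ne_of_lt hwlt)
    have h1mem : A.orderEmbOfFin hA w1 ∈ insert (A.orderEmbOfFin hA w2)
        (A.erase (A.orderEmbOfFin hA w2)) := by
      rw [hins]; exact Finset.orderEmbOfFin_mem A hA w1
    unfold imapf
    rw [dif_pos (⟨hcard', h1mem⟩ : _ ∧ _)]
    refine Prod.ext hins (Prod.ext ?_ ?_)
    · show ((insert (A.orderEmbOfFin hA w2) (A.erase (A.orderEmbOfFin hA w2))).orderIsoOfFin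
          hcard').symm ⟨A.orderEmbOfFin hA w1, h1mem⟩ = w1
      rw [symm_congr hins hcard' hA _ h1mem (Finset.orderEmbOfFin_mem A hA w1)]
      exact symm_emb A hA w1 _
    · show ((insert (A.orderEmbOfFin hA w2) (A.erase (A.orderEmbOfFin hA w2))).orderIsoOfFin
          hcard').symm ⟨A.orderEmbOfFin hA w2, Finset.mem_insert_self _ _⟩ = w2
      rw [symm_congr hins hcard' hA _ (Finset.mem_insert_self _ _) hmem2]
      exact symm_emb A hA w2 _
  · -- terms agree
    rintro ⟨⟨z1, z2⟩, T⟩ h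
    obtain ⟨hlt, h2T, h1T, hTp, hq⟩ := (Finset.mem_filter.mp h).2
    have hcard : (insert z2 T).card = p + 1 := by
      rw [Finset.card_insert_of_notMem h2T, hTp]
    have h1A : z1 ∈ insert z2 T := Finset.mem_insert_of_mem h1T
    unfold imapf
    rw [dif_pos (⟨hcard, h1A⟩ : (insert ((z1,z2),T).1.2 ((z1,z2),T).2).card = p + 1
      ∧ ((z1,z2),T).1.1 ∈ insert ((z1,z2),T).1.2 ((z1,z2),T).2)]
    unfold mtf tf
    rw [dif_pos (⟨hlt, h2T, h1T, hTp, hq⟩ :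
      ((z1,z2),T).1.1 < ((z1,z2),T).1.2 ∧ ((z1,z2),T).1.2 ∉ ((z1,z2),T).2
        ∧ ((z1,z2),T).1.1 ∈ ((z1,z2),T).2 ∧ ((z1,z2),T).2.card = p
        ∧ (insert ((z1,z2),T).1.2 ((z1,z2),T).2)ᶜ.card = q)]
    rw [dif_pos (⟨⟨hcard, hq⟩, symm_lt _ hcard h1A (Finset.mem_insert_self _ _) hlt⟩ :
      ((insert z2 T).card = p + 1 ∧ (insert z2 T)ᶜ.card = q) ∧ _ < _)]
    have he1 : (insert z2 T).orderEmbOfFin hcard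
        (((insert z2 T).orderIsoOfFin hcard).symm ⟨z1, h1A⟩) = z1 := emb_symm _ _ _ _
    have he2 : (insert z2 T).orderEmbOfFin hcard
        (((insert z2 T).orderIsoOfFin hcard).symm
          ⟨z2, Finset.mem_insert_self _ _⟩) = z2 := emb_symm _ _ _ _
    simp only [Function.comp_apply, he1, he2]
    congr 1
    rw [orderEmbOfFin_congr (Finset.erase_insert h2T) _ hTp]

noncomputable def imapg (p q : ℕ) (zT : (Fin (p+q+1) × Fin (p+q+1)) × Finset (Fin (p+q+1))) :
    Finset (Fin (p+q+1)) × (Fin (q+1) × Fin (q+1)) :=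
  if h : zT.2ᶜ.card = q + 1 ∧ zT.1.1 ∈ zT.2ᶜ ∧ zT.1.2 ∈ zT.2ᶜ then
    (zT.2,
      ((zT.2ᶜ.orderIsoOfFin h.1).symm ⟨zT.1.1, h.2.1⟩,
       (zT.2ᶜ.orderIsoOfFin h.1).symm ⟨zT.1.2, h.2.2⟩))
  else (∅, (0, 0))

noncomputable def jmapg (p q : ℕ) (Bw : Finset (Fin (p+q+1)) × (Fin (q+1) × Fin (q+1))) :
    (Fin (p+q+1) × Fin (p+q+1)) × Finset (Fin (p+q+1)) :=
  if h : Bw.1ᶜ.card = q + 1 then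
    ((Bw.1ᶜ.orderEmbOfFin h Bw.2.1, Bw.1ᶜ.orderEmbOfFin h Bw.2.2), Bw.1)
  else ((0, 0), ∅)

theorem step3 (p q : ℕ) (br : L →ₗ[K] L →ₗ[K] L) (f : (Fin p → L) → K)
    (g : (Fin q → L) → K) (x : Fin (p + q + 1) → L) :
    ∑ z ∈ Finset.univ.filter (fun z : Fin (p+q+1) × Fin (p+q+1) => z.1 < z.2),
      ∑ T : Finset (Fin (p+q+1)), mtg p q br f g x z T
      = cup K p (q+1) (p+q+1) f (cdiff br (0 : L →ₗ[K] K →ₗ[K] K) q g) x := by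
  rw [cup_eq]
  rw [Finset.sum_congr rfl (fun B _ => step3a p q br f g x B)]
  rw [← Finset.sum_product', ← Finset.sum_product']
  have hL : ∑ zT ∈ (Finset.univ.filter
        (fun z : Fin (p+q+1) × Fin (p+q+1) => z.1 < z.2)) ×ˢ Finset.univ,
        mtg p q br f g x zT.1 zT.2
      = ∑ zT ∈ (Finset.univ ×ˢ Finset.univ).filter
          (fun zT : (Fin (p+q+1) × Fin (p+q+1)) × Finset (Fin (p+q+1)) =>
            zT.1.1 < zT.1.2 ∧ zT.1.2 ∉ zT.2 ∧ zT.1.1 ∉ zT.2 ∧ zT.2.card = p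
              ∧ (insert zT.1.2 zT.2)ᶜ.card = q),
        mtg p q br f g x zT.1 zT.2 := by
    refine (Finset.sum_subset (fun zT h => ?_) (fun zT _ h => ?_)).symm
    · have hc := (Finset.mem_filter.mp h).2
      exact Finset.mem_product.mpr ⟨Finset.mem_filter.mpr ⟨Finset.mem_univ _, hc.1⟩,
        Finset.mem_univ _⟩
    · unfold mtg
      rw [dif_neg (fun hc => h (Finset.mem_filter.mpr
        ⟨Finset.mem_product.mpr ⟨Finset.mem_univ _, Finset.mem_univ _⟩, hc⟩))]
  have hR : ∑ Bw ∈ (Finset.univ : Finset (Finset (Fin (p+q+1)))) ×ˢ Finset.univ,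
        tg p q br f g x Bw.1 Bw.2
      = ∑ Bw ∈ (Finset.univ ×ˢ Finset.univ).filter
          (fun Bw : Finset (Fin (p+q+1)) × (Fin (q+1) × Fin (q+1)) =>
            (Bw.1.card = p ∧ Bw.1ᶜ.card = q + 1) ∧ Bw.2.1 < Bw.2.2),
        tg p q br f g x Bw.1 Bw.2 := by
    refine (Finset.sum_subset (Finset.filter_subset _ _) (fun Bw _ h => ?_)).symm
    unfold tg
    rw [dif_neg (fun hc => h (Finset.mem_filter.mpr
      ⟨Finset.mem_product.mpr ⟨Finset.mem_univ _, Finset.mem_univ _⟩, hc⟩))]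
  rw [hL, hR]
  refine Finset.sum_nbij' (imapg p q) (jmapg p q) ?_ ?_ ?_ ?_ ?_
  · rintro ⟨⟨z1, z2⟩, T⟩ h
    obtain ⟨hlt, h2T, h1T, hTp, hq⟩ := (Finset.mem_filter.mp h).2
    have h2c : z2 ∈ Tᶜ := Finset.mem_compl.mpr h2T
    have h1c : z1 ∈ Tᶜ := Finset.mem_compl.mpr h1T
    have hq1 : Tᶜ.card = q + 1 := by
      have h3 := Finset.card_erase_of_mem h2c
      rw [Finset.compl_insert, h3] at hq
      have := Finset.card_ne_zero_of_mem h2c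
      omega
    unfold imapg
    rw [dif_pos (⟨hq1, h1c, h2c⟩ : (((z1,z2),T).2)ᶜ.card = q + 1
      ∧ ((z1,z2),T).1.1 ∈ (((z1,z2),T).2)ᶜ ∧ ((z1,z2),T).1.2 ∈ (((z1,z2),T).2)ᶜ)]
    refine Finset.mem_filter.mpr ⟨Finset.mem_product.mpr ⟨Finset.mem_univ _,
      Finset.mem_univ _⟩, ⟨hTp, hq1⟩, ?_⟩
    exact symm_lt _ hq1 h1c h2c hlt
  · rintro ⟨B, w1, w2⟩ h
    obtain ⟨⟨hB, hBc⟩, hwlt⟩ := (Finset.mem_filter.mp h).2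
    unfold jmapg
    rw [dif_pos (hBc : ((B, (w1,w2)).1)ᶜ.card = q + 1)]
    have h2m := Finset.orderEmbOfFin_mem Bᶜ hBc w2
    have h1m := Finset.orderEmbOfFin_mem Bᶜ hBc w1
    refine Finset.mem_filter.mpr ⟨Finset.mem_product.mpr ⟨Finset.mem_univ _,
      Finset.mem_univ _⟩, (Bᶜ.orderEmbOfFin hBc).strictMono hwlt,
      Finset.mem_compl.mp h2m, Finset.mem_compl.mp h1m, hB, ?_⟩
    rw [Finset.compl_insert, Finset.card_erase_of_mem h2m, hBc]
    omega
  · rintro ⟨⟨z1, z2⟩, T⟩ h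
    obtain ⟨hlt, h2T, h1T, hTp, hq⟩ := (Finset.mem_filter.mp h).2
    have h2c : z2 ∈ Tᶜ := Finset.mem_compl.mpr h2T
    have h1c : z1 ∈ Tᶜ := Finset.mem_compl.mpr h1T
    have hq1 : Tᶜ.card = q + 1 := by
      have h3 := Finset.card_erase_of_mem h2c
      rw [Finset.compl_insert, h3] at hq
      have := Finset.card_ne_zero_of_mem h2c
      omega
    unfold imapg
    rw [dif_pos (⟨hq1, h1c, h2c⟩ : (((z1,z2),T).2)ᶜ.card = q + 1
      ∧ ((z1,z2),T).1.1 ∈ (((z1,z2),T).2)ᶜ ∧ ((z1,z2),T).1.2 ∈ (((z1,z2),T).2)ᶜ)]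
    unfold jmapg
    rw [dif_pos hq1]
    simp only [emb_symm]
  · rintro ⟨B, w1, w2⟩ h
    obtain ⟨⟨hB, hBc⟩, hwlt⟩ := (Finset.mem_filter.mp h).2
    unfold jmapg
    rw [dif_pos (hBc : ((B, (w1,w2)).1)ᶜ.card = q + 1)]
    have h2m := Finset.orderEmbOfFin_mem Bᶜ hBc w2
    have h1m := Finset.orderEmbOfFin_mem Bᶜ hBc w1
    unfold imapg
    rw [dif_pos (⟨hBc, h1m, h2m⟩ : _ ∧ _ ∧ _)]
    refine Prod.ext rfl (Prod.ext ?_ ?_)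
    · exact symm_emb Bᶜ hBc w1 _
    · exact symm_emb Bᶜ hBc w2 _
  · rintro ⟨⟨z1, z2⟩, T⟩ h
    obtain ⟨hlt, h2T, h1T, hTp, hq⟩ := (Finset.mem_filter.mp h).2
    have h2c : z2 ∈ Tᶜ := Finset.mem_compl.mpr h2T
    have h1c : z1 ∈ Tᶜ := Finset.mem_compl.mpr h1T
    have hq1 : Tᶜ.card = q + 1 := by
      have h3 := Finset.card_erase_of_mem h2c
      rw [Finset.compl_insert, h3] at hq
      have := Finset.card_ne_zero_of_mem h2c
      omega
    unfold imapg
    rw [dif_pos (⟨hq1, h1c, h2c⟩ : (((z1,z2),T).2)ᶜ.card = q + 1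
      ∧ ((z1,z2),T).1.1 ∈ (((z1,z2),T).2)ᶜ ∧ ((z1,z2),T).1.2 ∈ (((z1,z2),T).2)ᶜ)]
    unfold mtg tg
    rw [dif_pos (⟨hlt, h2T, h1T, hTp, hq⟩ :
      ((z1,z2),T).1.1 < ((z1,z2),T).1.2 ∧ ((z1,z2),T).1.2 ∉ ((z1,z2),T).2
        ∧ ((z1,z2),T).1.1 ∉ ((z1,z2),T).2 ∧ ((z1,z2),T).2.card = p
        ∧ (insert ((z1,z2),T).1.2 ((z1,z2),T).2)ᶜ.card = q)]
    rw [dif_pos (⟨⟨hTp, hq1⟩, symm_lt _ hq1 h1c h2c hlt⟩ :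
      (T.card = p ∧ Tᶜ.card = q + 1) ∧ _ < _)]
    have he1 : Tᶜ.orderEmbOfFin hq1 ((Tᶜ.orderIsoOfFin hq1).symm ⟨z1, h1c⟩) = z1 :=
      emb_symm _ _ _ _
    have he2 : Tᶜ.orderEmbOfFin hq1 ((Tᶜ.orderIsoOfFin hq1).symm ⟨z2, h2c⟩) = z2 :=
      emb_symm _ _ _ _
    simp only [Function.comp_apply, he1, he2]
    congr 1
    rw [orderEmbOfFin_congr (show Tᶜ.erase z2 = (insert z2 T)ᶜ from
      (Finset.compl_insert).symm) _ hq]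

theorem leibniz (p q : ℕ) (br : L →ₗ[K] L →ₗ[K] L) (f : (Fin p → L) → K)
    (g : (Fin q → L) → K) :
    cdiff br (0 : L →ₗ[K] K →ₗ[K] K) (p + q) (cup K p q (p + q) f g)
      = cup K (p+1) q (p+q+1) (cdiff br (0 : L →ₗ[K] K →ₗ[K] K) p f) g
        + cup K p (q+1) (p+q+1) f (cdiff br (0 : L →ₗ[K] K →ₗ[K] K) q g) := by
  funext x
  have hlhs : cdiff br (0 : L →ₗ[K] K →ₗ[K] K) (p + q) (cup K p q (p + q) f g) x
      = ∑ z ∈ Finset.univ.filter (fun z : Fin (p+q+1) × Fin (p+q+1) => z.1 < z.2),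
          cup K p q (p + q) f g
            (Function.update x z.1 (br (x z.1) (x z.2)) ∘ z.2.succAbove) := by
    unfold cdiff
    simp only [LinearMap.zero_apply, Finset.sum_const_zero, add_zero]
  rw [Pi.add_apply, hlhs]
  rw [Finset.sum_congr rfl
    (fun z hz => step1 p q br f g x z (Finset.mem_filter.mp hz).2)]
  rw [Finset.sum_congr rfl
    (fun z _ => Finset.sum_add_distrib (s := (Finset.univ : Finset (Finset (Fin (p+q+1)))))
      (f := mtf p q br f g x z) (g := mtg p q br f g x z))]
  rw [Finset.sum_add_distrib, step2, step3]


end Aux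

theorem cup_ring_structure {K L : Type*} [Field K] [CharP K 2]
    [AddCommGroup L] [Module K L]
    (br : L →ₗ[K] L →ₗ[K] L)
    (hcomm : ∀ x y : L, br x y = br y x)
    (hjac : ∀ x y z : L, br (br x y) z + br (br z x) y + br (br y z) x = 0) :
    -- (i) `Z^•_comm(L,K)` is closed under the cup product:
    (∀ (p q : ℕ) (f : (Fin p → L) → K) (g : (Fin q → L) → K),
      f ∈ Zc K L K br 0 p → g ∈ Zc K L K br 0 q →
      cup K p q (p + q) f g ∈ Zc K L K br 0 (p + q)) ∧
    -- (ii) `B^•_comm(L,K)` is a two-sided ideal of `Z^•_comm(L,K)`: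
    (∀ (p q : ℕ) (f : (Fin p → L) → K) (g : (Fin q → L) → K),
      f ∈ Zc K L K br 0 p → g ∈ Bc K L K br 0 q →
      cup K p q (p + q) f g ∈ Bc K L K br 0 (p + q) ∧
      cup K q p (q + p) g f ∈ Bc K L K br 0 (q + p)) ∧
    -- (iii) the cup product is associative (hence `H^•_comm(L,K)`, a quotient of the
    -- subring `Z` by the ideal `B`, is a graded associative ring):
    (∀ (p q r : ℕ) (f : (Fin p → L) → K) (g : (Fin q → L) → K) (h : (Fin r → L) → K),
      f ∈ Zc K L K br 0 p → g ∈ Zc K L K br 0 q → h ∈ Zc K L K br 0 r →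
      cup K (p + q) r (p + q + r) (cup K p q (p + q) f g) h
        = cup K p (q + r) (p + q + r) f (cup K q r (q + r) g h)) := by
  refine ⟨?_, ?_, ?_⟩
  · rintro p q f g ⟨hf1, hf2, hf3⟩ ⟨hg1, hg2, hg3⟩
    refine ⟨cup_multilin hf1 hg1, cup_sym hf2 hg2, ?_⟩
    rw [leibniz p q br f g, hf3, hg3, cup_zero_left, cup_zero_right, add_zero]
  · rintro p q f g ⟨hf1, hf2, hf3⟩ hg
    rcases q with _ | m
    · have hg0 : g = 0 := (Submodule.mem_bot K).mp hg
      subst hg0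
      constructor
      · rw [cup_zero_right]; exact Submodule.zero_mem _
      · rw [cup_zero_left]; exact Submodule.zero_mem _
    · refine Submodule.span_induction
        (p := fun (g' : (Fin (m+1) → L) → K) _ =>
          cup K p (m+1) (p+(m+1)) f g' ∈ Bc K L K br 0 (p+(m+1)) ∧
          cup K (m+1) p ((m+1)+p) g' f ∈ Bc K L K br 0 ((m+1)+p))
        ?_ ?_ ?_ ?_ hg
      · rintro g' ⟨h₀, h01, h02, rfl⟩
        constructor
        · have heq : cdiff br (0 : L →ₗ[K] K →ₗ[K] K) (p+m) (cup K p m (p+m) f h₀)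
              = cup K p (m+1) (p+m+1) f (cdiff br (0 : L →ₗ[K] K →ₗ[K] K) m h₀) := by
            rw [leibniz p m br f h₀, hf3, cup_zero_left, zero_add]
          exact Submodule.subset_span
            ⟨cup K p m (p+m) f h₀, cup_multilin hf1 h01, cup_sym hf2 h02, heq.symm⟩
        · rw [show (m+1)+p = m+p+1 from by omega]
          have heq : cdiff br (0 : L →ₗ[K] K →ₗ[K] K) (m+p) (cup K m p (m+p) h₀ f)
              = cup K (m+1) p (m+p+1) (cdiff br (0 : L →ₗ[K] K →ₗ[K] K) m h₀) f := by
            rw [leibniz m p br h₀ f, hf3, cup_zero_right, add_zero]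
          exact Submodule.subset_span
            ⟨cup K m p (m+p) h₀ f, cup_multilin h01 hf1, cup_sym h02 hf2, heq.symm⟩
      · exact ⟨by rw [cup_zero_right]; exact Submodule.zero_mem _,
          by rw [cup_zero_left]; exact Submodule.zero_mem _⟩
      · rintro a b _ _ ⟨ha1, ha2⟩ ⟨hb1, hb2⟩
        exact ⟨by rw [cup_add_right]; exact Submodule.add_mem _ ha1 hb1,
          by rw [cup_add_left]; exact Submodule.add_mem _ ha2 hb2⟩
      · rintro c a _ ⟨ha1, ha2⟩
        exact ⟨by rw [cup_smul_right]; exact Submodule.smul_mem _ c ha1,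
          by rw [cup_smul_left]; exact Submodule.smul_mem _ c ha2⟩
  · intro p q r f g h _ _ _
    exact cup_assoc p q r (p+q+r) f g h
end

section
/- Let L be the 2-dimensional nonabelian Lie algebra over a field K of characteristic 2 with basis {a,b} and multiplication [a,b] = [b,a] = a, [a,a] = [b,b] = 0. For p+q = n let χ_{pq} ∈ Sym^n(L,K) be the cochain with χ_{pq}(a,…,a,b,…,b) = 1 when a occurs p times and b occurs q times, and value 0 on all other basis tuples. Then δχ_{pq} = p(q+1)·χ_{p,q+1} (coefficients computed mod 2), and for each n the cohomology classes of the cocycles χ_{pq} with p+q = n and p even form a basis of H^n_comm(L,K); in particular dim_K H^n_comm(L,K) = ⌊n/2⌋ + 1. -/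
/-- The basis cochain `χ_{pq}` of `Sym^n(Fin 2 → K, K)` (nonzero only for `p + q = n`):
the symmetric multilinear map taking value 1 on the tuple with `p` copies of
`a = e₀` and `q` copies of `b = e₁`, and 0 on the other basis tuples. -/
def chi2 (K : Type*) [Field K] (p q n : ℕ) : (Fin n → (Fin 2 → K)) → K := fun x =>
  ∑ S : Finset (Fin n),
    if S.card = p ∧ Sᶜ.card = q then (∏ i ∈ S, x i 0) * (∏ j ∈ Sᶜ, x j 1) else 0

/-!
A symmetric multilinear cochain on `L = K²` is determined by its values on the sorted basis
tuples `aᵖ bⁿ⁻ᵖ`, so the `χ_{p,n-p}` form a basis of `Sym^n(L,K)`. Evaluating `δf` on a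
basis tuple, only the pairs of positions carrying `a` and `b` contribute; each gives `[a,b] = a`
and leaves a tuple with the same number of `a`s, so `δf(aᵖ bⁿ⁺¹⁻ᵖ) = p(n+1-p) f(aᵖ bⁿ⁻ᵖ)`,
which yields `δχ_{pq} = p(q+1) χ_{p,q+1}`. In characteristic 2 every coboundary vanishes on
`aᵖ bⁿ⁻ᵖ` for even `p`, a cocycle vanishes there for `p` odd and `n - p` even, and `χ_{p,n-p}`
is a coboundary for `p` and `n - p` odd. Hence evaluation at the tuples `a²ᵏ bⁿ⁻²ᵏ` is an
isomorphism `H^n_comm(L,K) ≃ K^{⌊n/2⌋+1}` sending the class of `χ_{2k,n-2k}` to the `k`-th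
unit vector.
-/

open Finset Function

section Multilinear

variable {K L M : Type*} [CommSemiring K] [AddCommMonoid L] [Module K L]
  [AddCommMonoid M] [Module K M] {n : ℕ}

theorem isMultilin_iff_forall_linearMap {f : (Fin n → L) → M} :
    IsMultilin K n f ↔
      ∀ (v : Fin n → L) (i : Fin n), ∃ ℓ : L →ₗ[K] M, ∀ a, f (update v i a) = ℓ a := by
  refine ⟨fun ⟨hadd, hsmul⟩ v i => ?_, fun h => ⟨fun v i a b => ?_, fun v i c a => ?_⟩⟩
  · exact ⟨⟨⟨fun a => f (update v i a), hadd v i⟩, hsmul v i⟩, fun _ => rfl⟩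
  all_goals obtain ⟨ℓ, hℓ⟩ := h v i; simp [hℓ]

theorem MultilinearMap.isMultilin (F : MultilinearMap K (fun _ : Fin n => L) M) :
    IsMultilin K n F :=
  ⟨fun v i a b => F.map_update_add v i a b, fun v i c a => F.map_update_smul v i c a⟩

theorem isMultilin_zero : IsMultilin K n (0 : (Fin n → L) → M) :=
  (0 : MultilinearMap K (fun _ : Fin n => L) M).isMultilin

namespace IsMultilin

variable {f g : (Fin n → L) → M}

def toMultilinearMap (hf : IsMultilin K n f) : MultilinearMap K (fun _ : Fin n => L) M where
  toFun := f
  map_update_add' := by intro _ v i a b; convert hf.1 v i a b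
  map_update_smul' := by intro _ v i c a; convert hf.2 v i c a

theorem add (hf : IsMultilin K n f) (hg : IsMultilin K n g) : IsMultilin K n (f + g) :=
  (hf.toMultilinearMap + hg.toMultilinearMap).isMultilin

theorem finset_sum {ι : Type*} (s : Finset ι) {φ : ι → (Fin n → L) → M}
    (hφ : ∀ a ∈ s, IsMultilin K n (φ a)) : IsMultilin K n (∑ a ∈ s, φ a) :=
  Finset.sum_induction φ _ (fun _ _ => add) isMultilin_zero hφ

theorem map_coord_zero (hf : IsMultilin K n f) {v : Fin n → L} (i : Fin n) (hv : v i = 0) :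
    f v = 0 := by
  have h := hf.2 v i 0 0
  rwa [zero_smul, zero_smul, ← hv, update_eq_self] at h

theorem ext_basis {ι : Type*} (b : Module.Basis ι K L) (hf : IsMultilin K n f)
    (hg : IsMultilin K n g) (h : ∀ m : Fin n → ι, f (b ∘ m) = g (b ∘ m)) : f = g :=
  congrArg DFunLike.coe
    (Module.Basis.ext_multilinear (fun _ => b) h : hf.toMultilinearMap = hg.toMultilinearMap)

theorem comp_perm (hf : IsMultilin K n f) (σ : Equiv.Perm (Fin n)) :
    IsMultilin K n (fun v => f (v ∘ σ)) :=
  (hf.toMultilinearMap.domDomCongr σ).isMultilin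

theorem isSym_of_basis {ι : Type*} (b : Module.Basis ι K L) (hf : IsMultilin K n f)
    (h : ∀ (σ : Equiv.Perm (Fin n)) (m : Fin n → ι), f (b ∘ m ∘ σ) = f (b ∘ m)) : IsSym n f :=
  fun σ => congrFun (ext_basis b (hf.comp_perm σ) hf (h σ))

theorem cdiff_bracket_term (hf : IsMultilin K n f) (br : L →ₗ[K] L →ₗ[K] L) {i j : Fin (n + 1)}
    (hij : i ≠ j) :
    IsMultilin K (n + 1) (fun x => f (update x i (br (x i) (x j)) ∘ j.succAbove)) := by
  obtain ⟨i, rfl⟩ := Fin.exists_succAbove_eq hij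
  simp only [update_comp_eq_of_injective _ (Fin.succAbove_right_injective)]
  rw [isMultilin_iff_forall_linearMap] at hf ⊢
  intro x l
  rcases Fin.eq_self_or_eq_succAbove j l with rfl | ⟨l, rfl⟩
  · obtain ⟨ℓ, hℓ⟩ := hf (x ∘ l.succAbove) i
    refine ⟨ℓ ∘ₗ br (x (l.succAbove i)), fun a => ?_⟩
    simp [update_comp_eq_of_notMem_range, hℓ]
  by_cases hli : l = i
  · subst hli
    obtain ⟨ℓ, hℓ⟩ := hf (x ∘ j.succAbove) l
    refine ⟨ℓ ∘ₗ br.flip (x j), fun a => ?_⟩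
    simp [update_comp_eq_of_injective _ (Fin.succAbove_right_injective), hℓ]
  · obtain ⟨ℓ, hℓ⟩ := hf (update (x ∘ j.succAbove) i (br (x (j.succAbove i)) (x j))) l
    refine ⟨ℓ, fun a => ?_⟩
    simp [update_comp_eq_of_injective _ (Fin.succAbove_right_injective),
      update_comm hli, Ne.symm hli, hℓ]

theorem cdiff_action_term (hf : IsMultilin K n f) (ρ : L →ₗ[K] M →ₗ[K] M) (i : Fin (n + 1)) :
    IsMultilin K (n + 1) (fun x => ρ (x i) (f (x ∘ i.succAbove))) := by
  rw [isMultilin_iff_forall_linearMap] at hf ⊢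
  intro x l
  rcases Fin.eq_self_or_eq_succAbove i l with rfl | ⟨l, rfl⟩
  · exact ⟨ρ.flip (f (x ∘ l.succAbove)), fun a => by simp [update_comp_eq_of_notMem_range]⟩
  · obtain ⟨ℓ, hℓ⟩ := hf (x ∘ i.succAbove) l
    exact ⟨ρ (x i) ∘ₗ ℓ, fun a => by
      simp [update_comp_eq_of_injective _ (Fin.succAbove_right_injective), hℓ]⟩

theorem cdiff (hf : IsMultilin K n f) (br : L →ₗ[K] L →ₗ[K] L) (ρ : L →ₗ[K] M →ₗ[K] M) :
    IsMultilin K (n + 1) (_root_.cdiff br ρ n f) := by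
  have h : _root_.cdiff br ρ n f =
      (∑ p ∈ univ.filter (fun p : Fin (n + 1) × Fin (n + 1) => p.1 < p.2),
        fun x => f (update x p.1 (br (x p.1) (x p.2)) ∘ p.2.succAbove)) +
      ∑ i, fun x => ρ (x i) (f (x ∘ i.succAbove)) := by
    funext x
    simp [_root_.cdiff, Finset.sum_apply]
  rw [h]
  exact (finset_sum _ fun p hp => hf.cdiff_bracket_term br (mem_filter.1 hp).2.ne).add
    (finset_sum _ fun i _ => hf.cdiff_action_term ρ i)

end IsMultilin

end Multilinear

theorem exists_perm_comp_eq_of_card_fiber {α β : Type*} [Fintype α] [DecidableEq β]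
    {m m' : α → β} (h : ∀ c, #{a | m a = c} = #{a | m' a = c}) :
    ∃ σ : Equiv.Perm α, m' ∘ σ = m :=
  ⟨Equiv.ofFiberEquiv fun c => Fintype.equivOfCardEq (by simp only [Fintype.card_subtype, h]),
    funext (Equiv.ofFiberEquiv_map _)⟩

theorem IsSym.apply_comp_eq_of_card_fiber {L M ι : Type*} [DecidableEq ι] {n : ℕ}
    {f : (Fin n → L) → M} (hf : IsSym n f) (b : ι → L) {m m' : Fin n → ι}
    (h : ∀ c, #{i | m i = c} = #{i | m' i = c}) : f (b ∘ m) = f (b ∘ m') := by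
  obtain ⟨σ, rfl⟩ := exists_perm_comp_eq_of_card_fiber h
  exact hf σ (b ∘ m')

section TwoDimensional

variable {K : Type*} [Field K]

-- With `0 ↦ a` and `1 ↦ b` this is `aᵖ bⁿ⁻ᵖ`, and `aⁿ` when `p > n`.
def sortedTuple (n p : ℕ) : Fin n → Fin 2 := fun i => if (i : ℕ) < p then 0 else 1

theorem card_filter_sortedTuple_eq_zero (n p : ℕ) : #{i | sortedTuple n p i = 0} = min n p := by
  simp [sortedTuple, Fin.card_filter_val_lt]

theorem card_filter_eq_one {α : Type*} [Fintype α] (m : α → Fin 2) :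
    #{a | m a = 1} = Fintype.card α - #{a | m a = 0} := by
  have h := card_filter_add_card_filter_not (s := univ) (fun a => m a = 0)
  have hne : ∀ a, ¬ m a = 0 ↔ m a = 1 := by omega
  simp only [hne, card_univ] at h
  omega

theorem IsSym.apply_comp_eq_sortedTuple {L M : Type*} {n : ℕ} {f : (Fin n → L) → M}
    (hf : IsSym n f) (b : Fin 2 → L) (m : Fin n → Fin 2) :
    f (b ∘ m) = f (b ∘ sortedTuple n #{i | m i = 0}) := by
  have hzero : #{i | sortedTuple n #{i | m i = 0} i = 0} = #{i | m i = 0} := by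
    rw [card_filter_sortedTuple_eq_zero, min_eq_right ((card_filter_le _ _).trans (by simp))]
  refine hf.apply_comp_eq_of_card_fiber b fun c => ?_
  fin_cases c
  · exact hzero.symm
  · simp only [Fin.mk_one, card_filter_eq_one, hzero]

theorem isMultilin_prod_mul_prod_compl {n : ℕ} (S : Finset (Fin n)) :
    IsMultilin K n (fun x : Fin n → Fin 2 → K => (∏ i ∈ S, x i 0) * ∏ j ∈ Sᶜ, x j 1) := by
  have h : (fun x : Fin n → Fin 2 → K => (∏ i ∈ S, x i 0) * ∏ j ∈ Sᶜ, x j 1) =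
      (MultilinearMap.mkPiAlgebra K (Fin n) K).compLinearMap
        fun i => if i ∈ S then (LinearMap.proj 0 : (Fin 2 → K) →ₗ[K] K) else LinearMap.proj 1 := by
    funext x
    rw [MultilinearMap.compLinearMap_apply, MultilinearMap.mkPiAlgebra_apply,
      ← prod_mul_prod_compl S]
    congr 1 <;> exact prod_congr rfl fun i hi => by simp_all
  rw [h]
  exact MultilinearMap.isMultilin _

theorem isMultilin_chi2 (p q n : ℕ) : IsMultilin K n (chi2 K p q n) := by
  have h : chi2 K p q n = ∑ S : Finset (Fin n), fun x =>
      if S.card = p ∧ Sᶜ.card = q then (∏ i ∈ S, x i 0) * (∏ j ∈ Sᶜ, x j 1) else 0 := by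
    funext x
    simp only [chi2, Finset.sum_apply]
  rw [h]
  refine IsMultilin.finset_sum _ fun S _ => ?_
  by_cases hS : S.card = p ∧ Sᶜ.card = q
  · simpa only [hS, and_self, if_true] using isMultilin_prod_mul_prod_compl S
  · simp only [hS, if_false]
    exact isMultilin_zero

theorem chi2_apply_basisFun (p q n : ℕ) (m : Fin n → Fin 2) :
    chi2 K p q n (Pi.basisFun K (Fin 2) ∘ m) =
      if #{i | m i = 0} = p ∧ n - #{i | m i = 0} = q then 1 else 0 := by
  have hmono : ∀ S : Finset (Fin n), (∏ i ∈ S, (Pi.basisFun K (Fin 2) ∘ m) i 0) *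
      ∏ j ∈ Sᶜ, (Pi.basisFun K (Fin 2) ∘ m) j 1 =
        if S = ({i | m i = 0} : Finset (Fin n)) then 1 else 0 := by
    intro S
    simp only [comp_apply, Pi.basisFun_apply, Pi.single_apply, prod_boole, ite_zero_mul_ite_zero,
      mul_one]
    congr 1
    simp only [Finset.ext_iff, mem_compl, mem_filter, mem_univ, true_and]
    refine propext ⟨fun ⟨h0, h1⟩ i => ⟨fun hi => (h0 i hi).symm, fun hi => ?_⟩, fun h => ?_⟩
    · by_contra hS
      have := h1 i hS
      omega
    · exact ⟨fun i hi => ((h i).1 hi).symm, fun i hi => by have := (h i).not.1 hi; omega⟩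
  simp only [chi2, hmono, ← ite_and, and_comm (b := _ = ({i | m i = 0} : Finset (Fin n)))]
  simp only [ite_and, sum_ite_eq', mem_univ, if_true, card_compl, Fintype.card_fin]

theorem isSym_chi2 (p q n : ℕ) : IsSym n (chi2 K p q n) := by
  refine (isMultilin_chi2 p q n).isSym_of_basis (Pi.basisFun K (Fin 2)) fun σ m => ?_
  have hcard : #{i | (m ∘ σ) i = 0} = #{i | m i = 0} := by
    rw [card_filter, card_filter]
    exact Equiv.sum_comp σ (fun i => if m i = 0 then 1 else 0)
  rw [chi2_apply_basisFun, chi2_apply_basisFun, hcard]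

theorem chi2_mem_Sc (p q n : ℕ) : chi2 K p q n ∈ Sc K (Fin 2 → K) K n :=
  ⟨isMultilin_chi2 p q n, isSym_chi2 p q n⟩

def IsNonabelianBracket (br : (Fin 2 → K) →ₗ[K] (Fin 2 → K) →ₗ[K] (Fin 2 → K)) : Prop :=
  ∀ s t, br (Pi.basisFun K (Fin 2) s) (Pi.basisFun K (Fin 2) t) =
    if s = t then 0 else Pi.basisFun K (Fin 2) 0

theorem isNonabelianBracket_of_apply (br : (Fin 2 → K) →ₗ[K] (Fin 2 → K) →ₗ[K] (Fin 2 → K))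
    (hab : br ![1, 0] ![0, 1] = ![1, 0]) (hba : br ![0, 1] ![1, 0] = ![1, 0])
    (haa : br ![1, 0] ![1, 0] = 0) (hbb : br ![0, 1] ![0, 1] = 0) : IsNonabelianBracket br := by
  have h0 : Pi.basisFun K (Fin 2) 0 = ![1, 0] := by ext j; fin_cases j <;> simp
  have h1 : Pi.basisFun K (Fin 2) 1 = ![0, 1] := by ext j; fin_cases j <;> simp
  intro s t
  fin_cases s <;> fin_cases t <;> simp [h0, h1, hab, hba, haa, hbb]

theorem card_pairs_lt_ne {ι : Type*} [Fintype ι] [LinearOrder ι] (m : ι → Fin 2) :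
    #{x : ι × ι | x.1 < x.2 ∧ m x.1 ≠ m x.2} = #{i | m i = 0} * #{i | m i = 1} := by
  rw [← card_product]
  refine card_nbij' (fun x => if m x.1 = 0 then x else x.swap)
    (fun x => if x.1 < x.2 then x else x.swap) ?_ ?_ ?_ ?_ <;>
  · rintro ⟨i, j⟩ h
    simp only [coe_filter, coe_product, Set.mem_ofPred_eq, Set.mem_prod, mem_univ,
      true_and] at h ⊢
    split_ifs <;> grind

theorem card_filter_update_comp_succAbove {n : ℕ} {m : Fin (n + 1) → Fin 2}
    {i j : Fin (n + 1)} (hij : i ≠ j) (hm : m i ≠ m j) :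
    #{k | (update m i 0 ∘ j.succAbove) k = 0} = #{k | m k = 0} := by
  have hj := Fin.sum_univ_succAbove (fun k => if update m i 0 k = 0 then 1 else 0) j
  have hi := Fin.sum_univ_succAbove (fun k => if update m i 0 k = 0 then 1 else 0) i
  have hi' := Fin.sum_univ_succAbove (fun k => if m k = 0 then 1 else 0) i
  simp only [update_self, update_of_ne hij.symm, ne_eq, Fin.succAbove_ne, not_false_eq_true,
    update_of_ne, if_true] at hj hi hi'
  simp only [card_filter, comp_apply]
  have : (if m i = 0 then 1 else 0) + (if m j = 0 then 1 else 0) = 1 := by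
    split_ifs <;> omega
  omega

theorem cdiff_apply_basisFun {br : (Fin 2 → K) →ₗ[K] (Fin 2 → K) →ₗ[K] (Fin 2 → K)}
    (hbr : IsNonabelianBracket br) {n : ℕ} {f : (Fin n → Fin 2 → K) → K}
    (hf : f ∈ Sc K (Fin 2 → K) K n) (m : Fin (n + 1) → Fin 2) :
    cdiff br 0 n f (Pi.basisFun K (Fin 2) ∘ m) =
      (#{i | m i = 0} * (n + 1 - #{i | m i = 0})) •
        f (Pi.basisFun K (Fin 2) ∘ sortedTuple n #{i | m i = 0}) := by
  have hterm : ∀ x ∈ univ.filter (fun x : Fin (n + 1) × Fin (n + 1) => x.1 < x.2),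
      f (update (Pi.basisFun K (Fin 2) ∘ m) x.1 (br ((Pi.basisFun K (Fin 2) ∘ m) x.1)
        ((Pi.basisFun K (Fin 2) ∘ m) x.2)) ∘ x.2.succAbove) =
      if m x.1 ≠ m x.2 then f (Pi.basisFun K (Fin 2) ∘ sortedTuple n #{i | m i = 0})
      else 0 := by
    rintro ⟨i, j⟩ hij
    replace hij : i ≠ j := (mem_filter.1 hij).2.ne
    simp only [comp_apply]
    rw [hbr (m i) (m j)]
    by_cases hm : m i = m j
    · obtain ⟨k, hk⟩ := Fin.exists_succAbove_eq hij
      rw [if_pos hm, if_neg (not_not.2 hm)]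
      exact hf.1.map_coord_zero k (by simp [hk])
    · rw [if_neg hm, if_pos hm, ← comp_update, comp_assoc, hf.2.apply_comp_eq_sortedTuple,
        card_filter_update_comp_succAbove hij hm]
  simp only [cdiff, LinearMap.zero_apply, sum_const_zero, add_zero]
  rw [sum_congr rfl hterm, ← sum_filter, sum_const, filter_filter, card_pairs_lt_ne,
    card_filter_eq_one, Fintype.card_fin]

theorem cdiff_chi2 {br : (Fin 2 → K) →ₗ[K] (Fin 2 → K) →ₗ[K] (Fin 2 → K)}
    (hbr : IsNonabelianBracket br) (p q : ℕ) :
    cdiff br 0 (p + q) (chi2 K p q (p + q)) = (p * (q + 1)) • chi2 K p (q + 1) (p + q + 1) := by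
  refine IsMultilin.ext_basis (Pi.basisFun K (Fin 2)) ((chi2_mem_Sc p q _).1.cdiff br 0)
    (nsmul_mem (chi2_mem_Sc p (q + 1) _) _).1 fun m => ?_
  have hz : #{i | m i = 0} ≤ p + q + 1 := (card_filter_le _ _).trans (by simp)
  rw [cdiff_apply_basisFun hbr (chi2_mem_Sc p q _), Pi.smul_apply, chi2_apply_basisFun,
    chi2_apply_basisFun, card_filter_sortedTuple_eq_zero]
  generalize #{i | m i = 0} = z at hz ⊢
  rcases eq_or_ne z p with rfl | hzp
  · rw [if_pos ⟨by omega, by omega⟩, if_pos ⟨rfl, by omega⟩,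
      show z + q + 1 - z = q + 1 by omega]
  · rw [if_neg (show ¬(z = p ∧ _) from fun h => hzp h.1), smul_zero]
    split_ifs with h
    · rw [show z = p + q + 1 by omega, Nat.sub_self, mul_zero, zero_smul]
    · rw [smul_zero]

theorem eq_sum_smul_chi2 {n : ℕ} {f : (Fin n → Fin 2 → K) → K}
    (hf : f ∈ Sc K (Fin 2 → K) K n) :
    f = ∑ p ∈ range (n + 1),
      f (Pi.basisFun K (Fin 2) ∘ sortedTuple n p) • chi2 K p (n - p) n := by
  refine IsMultilin.ext_basis (Pi.basisFun K (Fin 2)) hf.1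
    (sum_mem fun p _ => Submodule.smul_mem _ _ (chi2_mem_Sc p (n - p) n)).1 fun m => ?_
  have hz : #{i | m i = 0} < n + 1 := Nat.lt_succ_of_le ((card_filter_le _ _).trans (by simp))
  simp only [Finset.sum_apply, Pi.smul_apply, chi2_apply_basisFun, smul_eq_mul, mul_ite, mul_one,
    mul_zero]
  have hcond : ∀ p, #{i | m i = 0} = p ∧ n - #{i | m i = 0} = n - p ↔ p = #{i | m i = 0} :=
    fun p => ⟨fun h => h.1.symm, fun h => ⟨h.symm, h ▸ rfl⟩⟩
  simp only [hcond, sum_ite_eq', mem_range, if_pos hz]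
  exact hf.2.apply_comp_eq_sortedTuple _ m

theorem cdiff_apply_sortedTuple {br : (Fin 2 → K) →ₗ[K] (Fin 2 → K) →ₗ[K] (Fin 2 → K)}
    (hbr : IsNonabelianBracket br) {n p : ℕ} (hp : p ≤ n + 1) {f : (Fin n → Fin 2 → K) → K}
    (hf : f ∈ Sc K (Fin 2 → K) K n) :
    cdiff br 0 n f (Pi.basisFun K (Fin 2) ∘ sortedTuple (n + 1) p) =
      (p * (n + 1 - p)) • f (Pi.basisFun K (Fin 2) ∘ sortedTuple n p) := by
  rw [cdiff_apply_basisFun hbr hf, card_filter_sortedTuple_eq_zero, min_eq_right hp]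

variable [CharP K 2]

theorem nsmul_eq_zero_of_even {V : Type*} [AddCommMonoid V] [Module K V] {c : ℕ}
    (hc : Even c) (v : V) : c • v = 0 := by
  rw [← Nat.cast_smul_eq_nsmul K, (CharP.cast_eq_zero_iff K 2 c).2 hc.two_dvd, zero_smul]

theorem nsmul_eq_self_of_odd {V : Type*} [AddCommMonoid V] [Module K V] {c : ℕ} (hc : Odd c)
    (v : V) : c • v = v := by
  obtain ⟨t, rfl⟩ := hc
  rw [add_nsmul, nsmul_eq_zero_of_even (K := K) (even_two_mul t), one_nsmul, zero_add]

variable {br : (Fin 2 → K) →ₗ[K] (Fin 2 → K) →ₗ[K] (Fin 2 → K)}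

theorem chi2_mem_Zc (hbr : IsNonabelianBracket br) {n p : ℕ} (hp : Even p) (hpn : p ≤ n) :
    chi2 K p (n - p) n ∈ Zc K (Fin 2 → K) K br 0 n := by
  obtain ⟨q, rfl⟩ := Nat.exists_eq_add_of_le hpn
  rw [Nat.add_sub_cancel_left]
  exact ⟨(chi2_mem_Sc p q _).1, (chi2_mem_Sc p q _).2,
    by rw [cdiff_chi2 hbr, nsmul_eq_zero_of_even (K := K) (hp.mul_right _)]⟩

theorem chi2_mem_Bc (hbr : IsNonabelianBracket br) {n p : ℕ} (hp : Odd p) (hq : Odd (n - p)) :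
    chi2 K p (n - p) n ∈ Bc K (Fin 2 → K) K br 0 n := by
  obtain ⟨q, rfl⟩ : ∃ q, n = p + q + 1 := ⟨n - p - 1, by have := hq.pos; omega⟩
  rw [show p + q + 1 - p = q + 1 by omega] at hq ⊢
  refine Submodule.subset_span
    ⟨chi2 K p q (p + q), (chi2_mem_Sc p q _).1, (chi2_mem_Sc p q _).2, ?_⟩
  rw [cdiff_chi2 hbr, nsmul_eq_self_of_odd (K := K) (hp.mul hq)]

theorem apply_sortedTuple_eq_zero_of_mem_Bc (hbr : IsNonabelianBracket br) {n p : ℕ}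
    (hp : Even p) (hpn : p ≤ n) {g : (Fin n → Fin 2 → K) → K}
    (hg : g ∈ Bc K (Fin 2 → K) K br 0 n) : g (Pi.basisFun K (Fin 2) ∘ sortedTuple n p) = 0 := by
  cases n with
  | zero => rw [(Submodule.mem_bot K).1 hg, Pi.zero_apply]
  | succ n =>
    refine (Submodule.span_le (p := LinearMap.ker (LinearMap.proj _)).2 ?_ hg :)
    rintro _ ⟨f, hf, hf', rfl⟩
    rw [SetLike.mem_coe, LinearMap.mem_ker, LinearMap.proj_apply,
      cdiff_apply_sortedTuple hbr hpn ⟨hf, hf'⟩, nsmul_eq_zero_of_even (K := K) (hp.mul_right _)]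

theorem apply_sortedTuple_eq_zero_of_mem_Zc (hbr : IsNonabelianBracket br) {n p : ℕ}
    (hp : Odd p) (hq : Even (n - p)) (hpn : p ≤ n) {z : (Fin n → Fin 2 → K) → K}
    (hz : z ∈ Zc K (Fin 2 → K) K br 0 n) : z (Pi.basisFun K (Fin 2) ∘ sortedTuple n p) = 0 := by
  have h := congrFun hz.2.2 (Pi.basisFun K (Fin 2) ∘ sortedTuple (n + 1) p)
  rwa [cdiff_apply_sortedTuple hbr (by omega) ⟨hz.1, hz.2.1⟩,
    nsmul_eq_self_of_odd (K := K) (hp.mul (by rw [Nat.sub_add_comm hpn]; exact hq.add_one))] at h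

theorem mem_Bc_of_apply_sortedTuple_even_eq_zero (hbr : IsNonabelianBracket br) {n : ℕ}
    {z : (Fin n → Fin 2 → K) → K} (hz : z ∈ Zc K (Fin 2 → K) K br 0 n)
    (h : ∀ p ≤ n, Even p → z (Pi.basisFun K (Fin 2) ∘ sortedTuple n p) = 0) :
    z ∈ Bc K (Fin 2 → K) K br 0 n := by
  rw [eq_sum_smul_chi2 ⟨hz.1, hz.2.1⟩]
  refine sum_mem fun p hp => ?_
  have hpn : p ≤ n := Nat.lt_succ_iff.1 (mem_range.1 hp)
  rcases Nat.even_or_odd p with hp | hp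
  · rw [h p hpn hp, zero_smul]
    exact zero_mem _
  rcases Nat.even_or_odd (n - p) with hq | hq
  · rw [apply_sortedTuple_eq_zero_of_mem_Zc hbr hp hq hpn hz, zero_smul]
    exact zero_mem _
  · exact Submodule.smul_mem _ _ (chi2_mem_Bc hbr hp hq)

end TwoDimensional

section Basis

variable {K : Type*} [Field K] [CharP K 2]
  {br : (Fin 2 → K) →ₗ[K] (Fin 2 → K) →ₗ[K] (Fin 2 → K)} (hbr : IsNonabelianBracket br)
  (n : ℕ)

def chi2Class (k : Fin (n / 2 + 1)) : Hcomm K (Fin 2 → K) K br 0 n :=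
  Submodule.Quotient.mk
    ⟨chi2 K (2 * k) (n - 2 * k) n, chi2_mem_Zc hbr (even_two_mul _) (by omega)⟩

noncomputable def evalEven : Hcomm K (Fin 2 → K) K br 0 n →ₗ[K] (Fin (n / 2 + 1) → K) :=
  Submodule.liftQ _ (LinearMap.pi fun k => (LinearMap.proj (Pi.basisFun K (Fin 2) ∘
      sortedTuple n (2 * k)) : ((Fin n → Fin 2 → K) → K) →ₗ[K] K) ∘ₗ
        (Zc K (Fin 2 → K) K br 0 n).subtype)
    fun z hz => LinearMap.mem_ker.2 <| funext fun k =>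
      (apply_sortedTuple_eq_zero_of_mem_Bc hbr (even_two_mul k.1) (by omega) hz :
        z.1 (Pi.basisFun K (Fin 2) ∘ sortedTuple n (2 * k)) = 0)

theorem evalEven_mk (z : Zc K (Fin 2 → K) K br 0 n) :
    evalEven hbr n (Submodule.Quotient.mk z) =
      fun k : Fin (n / 2 + 1) => z.1 (Pi.basisFun K (Fin 2) ∘ sortedTuple n (2 * k)) :=
  rfl

theorem evalEven_chi2Class (k : Fin (n / 2 + 1)) :
    evalEven hbr n (chi2Class hbr n k) = Pi.single k 1 := by
  funext j
  simp only [chi2Class, evalEven_mk]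
  rw [chi2_apply_basisFun, card_filter_sortedTuple_eq_zero,
    min_eq_right (by omega), Pi.single_apply]
  congr 1
  simp only [Fin.ext_iff]
  exact propext ⟨fun h => by omega, fun h => by omega⟩

theorem evalEven_injective : Injective (evalEven hbr n) := by
  refine (injective_iff_map_eq_zero _).2 fun c hc => ?_
  obtain ⟨z, rfl⟩ := Submodule.Quotient.mk_surjective _ c
  refine (Submodule.Quotient.mk_eq_zero _).2
    (mem_Bc_of_apply_sortedTuple_even_eq_zero hbr z.2 ?_)
  rintro p hpn ⟨k, rfl⟩
  simpa [evalEven_mk, two_mul] using congrFun hc ⟨k, by omega⟩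

theorem evalEven_surjective : Surjective (evalEven hbr n) := by
  refine LinearMap.range_eq_top.1 (eq_top_iff.2 ?_)
  rw [← (Pi.basisFun K (Fin (n / 2 + 1))).span_eq, Submodule.span_le]
  rintro _ ⟨k, rfl⟩
  exact ⟨chi2Class hbr n k, by rw [evalEven_chi2Class, Pi.basisFun_apply]⟩

noncomputable def chi2Basis :
    Module.Basis (Fin (n / 2 + 1)) K (Hcomm K (Fin 2 → K) K br 0 n) :=
  (Pi.basisFun K _).map
    (LinearEquiv.ofBijective _ ⟨evalEven_injective hbr n, evalEven_surjective hbr n⟩).symm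

theorem coe_chi2Basis : ⇑(chi2Basis hbr n) = chi2Class hbr n := by
  funext k
  rw [chi2Basis, Module.Basis.map_apply, LinearEquiv.symm_apply_eq, Pi.basisFun_apply]
  exact (evalEven_chi2Class hbr n k).symm

end Basis

theorem two_dimensional_cohomology {K : Type*} [Field K] [CharP K 2]
    (br : (Fin 2 → K) →ₗ[K] (Fin 2 → K) →ₗ[K] (Fin 2 → K))
    (hab : br ![1, 0] ![0, 1] = ![1, 0]) (hba : br ![0, 1] ![1, 0] = ![1, 0])
    (haa : br ![1, 0] ![1, 0] = 0) (hbb : br ![0, 1] ![0, 1] = 0) :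
    -- `δχ_{pq} = p(q+1)·χ_{p,q+1}`:
    (∀ p q : ℕ, cdiff br (0 : (Fin 2 → K) →ₗ[K] K →ₗ[K] K) (p + q) (chi2 K p q (p + q))
      = (p * (q + 1)) • chi2 K p (q + 1) (p + q + 1)) ∧
    -- the classes of the `χ_{pq}`, `p + q = n`, `p = 2k` even, form a basis of `H^n`:
    (∀ n : ℕ, ∃ hmem : ∀ k : Fin (n / 2 + 1),
        chi2 K (2 * (k : ℕ)) (n - 2 * (k : ℕ)) n ∈ Zc K (Fin 2 → K) K br 0 n,
      LinearIndependent K (fun k : Fin (n / 2 + 1) =>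
        (Submodule.Quotient.mk ⟨chi2 K (2 * (k : ℕ)) (n - 2 * (k : ℕ)) n, hmem k⟩ :
          Hcomm K (Fin 2 → K) K br 0 n)) ∧
      Submodule.span K (Set.range (fun k : Fin (n / 2 + 1) =>
        (Submodule.Quotient.mk ⟨chi2 K (2 * (k : ℕ)) (n - 2 * (k : ℕ)) n, hmem k⟩ :
          Hcomm K (Fin 2 → K) K br 0 n))) = ⊤) ∧
    -- in particular `dim H^n_comm(L,K) = ⌊n/2⌋ + 1`:
    (∀ n : ℕ, Module.finrank K (Hcomm K (Fin 2 → K) K br 0 n) = n / 2 + 1) := by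
  have hbr := isNonabelianBracket_of_apply br hab hba haa hbb
  refine ⟨cdiff_chi2 hbr, fun n => ⟨fun k => chi2_mem_Zc hbr (even_two_mul _) (by omega), ?_⟩,
    fun n => by rw [Module.finrank_eq_card_basis (chi2Basis hbr n), Fintype.card_fin]⟩
  obtain ⟨hli, hspan⟩ : LinearIndependent K (chi2Class hbr n) ∧
      Submodule.span K (Set.range (chi2Class hbr n)) = ⊤ := by
    rw [← coe_chi2Basis hbr n]
    exact ⟨(chi2Basis hbr n).linearIndependent, (chi2Basis hbr n).span_eq⟩
  exact ⟨hli, hspan⟩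
end

section
/- Let K be a field of characteristic 2, n ≥ 1, and let W₁'(n) be the Zassenhaus algebra with basis {e_i : −1 ≤ i ≤ 2^n − 3} and multiplication [e_i,e_j] = (C(i+j+2, i+1) mod 2)·e_{i+j} when −1 ≤ i+j ≤ 2^n − 3 and 0 otherwise. Then every alternating 2-cocycle on W₁'(n) with trivial coefficients is a coboundary, i.e. H²(W₁'(n), K) = 0, where H² denotes the second Chevalley–Eilenberg cohomology with trivial coefficients. -/
private lemma cast_odd_char2 {K : Type*} [Field K] [CharP K 2] {x : ℕ} (h : x % 2 = 1) :
    (x : K) = 1 := by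
  have h2 : (2 : K) = 0 := by exact_mod_cast CharP.cast_eq_zero K 2
  have hx : x = 2 * (x / 2) + 1 := by omega
  rw [hx]
  push_cast
  rw [h2]
  ring

private lemma pascal_char2 {K : Type*} [Field K] [CharP K 2] (m a : ℕ) :
    ((Nat.choose m a : K)) + ((Nat.choose (m+1) (a+1) : K)) = (Nat.choose m (a+1) : K) := by
  have h2 : (2 : K) = 0 := by exact_mod_cast CharP.cast_eq_zero K 2
  rw [Nat.choose_succ_succ]
  push_cast
  linear_combination (Nat.choose m a : K) * h2

private lemma choose_two_pow_sub_one_mod_two (m : ℕ) :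
    ∀ a, a ≤ 2 ^ m - 1 → Nat.choose (2 ^ m - 1) a % 2 = 1 := by
  induction m with
  | zero =>
    intro a ha
    have h0 : (2:ℕ) ^ 0 = 1 := pow_zero 2
    have : a = 0 := by omega
    subst this
    norm_num
  | succ m ih =>
    intro a ha
    have h2m : 1 ≤ (2:ℕ) ^ m := Nat.one_le_two_pow
    have hps : (2:ℕ) ^ (m+1) = 2 * 2 ^ m := by rw [pow_succ]; ring
    have hmod : Nat.choose (2 ^ (m+1) - 1) a % 2 =
        (Nat.choose ((2 ^ (m+1) - 1) % 2) (a % 2) * Nat.choose ((2 ^ (m+1) - 1) / 2) (a / 2)) % 2 :=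
      Choose.choose_modEq_choose_mod_mul_choose_div_nat
    have hp : (2 ^ (m+1) - 1) % 2 = 1 := by omega
    have hd : (2 ^ (m+1) - 1) / 2 = 2 ^ m - 1 := by omega
    rw [hp, hd] at hmod
    have hc1 : Nat.choose 1 (a % 2) = 1 := by
      rcases Nat.mod_two_eq_zero_or_one a with h | h <;> simp [h]
    rw [hc1, one_mul] at hmod
    rw [hmod]
    exact ih (a / 2) (by omega)

private theorem zass_aux {K : Type*} [Field K] [CharP K 2] (N : ℕ) (hN1 : 1 ≤ N)
    (hluc : ∀ a, a ≤ N → Nat.choose N a % 2 = 1)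
    (br : (Fin N → K) →ₗ[K] (Fin N → K) →ₗ[K] (Fin N → K))
    (hbr : ∀ r s : Fin N,
      br (Pi.single r 1) (Pi.single s 1) =
        if h : 1 ≤ (r : ℕ) + (s : ℕ) ∧ (r : ℕ) + (s : ℕ) ≤ N then
          (Nat.choose ((r : ℕ) + (s : ℕ)) (r : ℕ) : K) •
            (Pi.single (⟨(r : ℕ) + (s : ℕ) - 1, by omega⟩ : Fin N) 1 : Fin N → K)
        else 0)
    (φ : (Fin N → K) →ₗ[K] (Fin N → K) →ₗ[K] K)
    (halt : ∀ x, φ x x = 0)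
    (hcoc : ∀ x y z, φ (br x y) z + φ (br z x) y + φ (br y z) x = 0) :
    ∃ ψ : (Fin N → K) →ₗ[K] K, ∀ x y, φ x y = ψ (br x y) := by
  classical
  have h2 : (2 : K) = 0 := by exact_mod_cast CharP.cast_eq_zero K 2
  -- the structure constants as a ℕ-indexed function
  obtain ⟨F, hF⟩ : ∃ F : ℕ → ℕ → K, ∀ a b (ha : a < N) (hb : b < N),
      F a b = φ (Pi.single (⟨a, ha⟩ : Fin N) 1) (Pi.single (⟨b, hb⟩ : Fin N) 1) := by
    refine ⟨fun a b => if h : a < N ∧ b < N then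
      φ (Pi.single (⟨a, h.1⟩ : Fin N) 1) (Pi.single (⟨b, h.2⟩ : Fin N) 1) else 0, ?_⟩
    intro a b ha hb
    exact dif_pos ⟨ha, hb⟩
  have halt' : ∀ a (ha : a < N), F a a = 0 := by
    intro a ha; rw [hF a a ha ha]; exact halt _
  have hsym : ∀ a b, a < N → b < N → F b a = F a b := by
    intro a b ha hb
    have h0 := halt (Pi.single (⟨a, ha⟩ : Fin N) 1 + Pi.single (⟨b, hb⟩ : Fin N) 1)
    simp only [map_add, LinearMap.add_apply] at h0
    rw [halt (Pi.single ⟨a, ha⟩ 1), halt (Pi.single ⟨b, hb⟩ 1)] at h0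
    rw [← hF a b ha hb, ← hF b a hb ha] at h0
    linear_combination h0 - F a b * h2
  -- bracket evaluation on basis
  have key : ∀ a b c : ℕ, ∀ (ha : a < N) (hb : b < N) (hc : c < N),
      φ (br (Pi.single (⟨a, ha⟩ : Fin N) 1) (Pi.single (⟨b, hb⟩ : Fin N) 1))
        (Pi.single (⟨c, hc⟩ : Fin N) 1) =
      if 1 ≤ a + b ∧ a + b ≤ N then (Nat.choose (a + b) a : K) * F (a + b - 1) c else 0 := by
    intro a b c ha hb hc
    rw [hbr ⟨a, ha⟩ ⟨b, hb⟩]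
    by_cases h : 1 ≤ a + b ∧ a + b ≤ N
    · rw [dif_pos h, if_pos h, map_smul, LinearMap.smul_apply, smul_eq_mul,
        hF (a + b - 1) c (by omega) hc]
    · rw [dif_neg h, if_neg h, map_zero, LinearMap.zero_apply]
  -- the cocycle identity on basis vectors
  have R : ∀ a b c : ℕ, a < N → b < N → c < N →
      (if 1 ≤ a + b ∧ a + b ≤ N then (Nat.choose (a + b) a : K) * F (a + b - 1) c else 0)
    + (if 1 ≤ c + a ∧ c + a ≤ N then (Nat.choose (c + a) c : K) * F (c + a - 1) b else 0)
    + (if 1 ≤ b + c ∧ b + c ≤ N then (Nat.choose (b + c) b : K) * F (b + c - 1) a else 0)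
      = 0 := by
    intro a b c ha hb hc
    have h := hcoc (Pi.single (⟨a, ha⟩ : Fin N) 1) (Pi.single (⟨b, hb⟩ : Fin N) 1)
      (Pi.single (⟨c, hc⟩ : Fin N) 1)
    rw [key a b c ha hb hc, key c a b hc ha hb, key b c a hb hc ha] at h
    exact h
  -- relation D1 : obtained from the cocycle identity with first entry ε₀
  have D1 : ∀ a b : ℕ, a + 1 < N → 1 ≤ b → b < N →
      F a b + F (b - 1) (a + 1)
        + (if 1 ≤ a + 1 + b ∧ a + 1 + b ≤ N then
            (Nat.choose (a + 1 + b) (a + 1) : K) * F (a + b) 0 else 0) = 0 := by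
    intro a b ha hb1 hb
    have h := R 0 (a + 1) b (by omega) ha hb
    rw [if_pos (show 1 ≤ 0 + (a + 1) ∧ 0 + (a + 1) ≤ N by omega),
        if_pos (show 1 ≤ b + 0 ∧ b + 0 ≤ N by omega)] at h
    simp only [Nat.zero_add, Nat.add_zero, Nat.add_sub_cancel, Nat.choose_zero_right,
      Nat.choose_self, Nat.cast_one, one_mul] at h
    rw [show a + 1 + b - 1 = a + b from by omega] at h
    exact h
  -- the linear functional data G
  obtain ⟨G, hG1, hG2⟩ : ∃ G : ℕ → K,
      (∀ k, k + 2 ≤ N → G k = F 0 (k + 1)) ∧ (2 ≤ N → G (N - 1) = F 1 (N - 1)) := by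
    refine ⟨fun k => if k + 2 ≤ N then F 0 (k + 1) else F 1 (N - 1), ?_, ?_⟩
    · intro k hk; exact if_pos hk
    · intro hN2; exact if_neg (by omega)
  -- levels 1 ≤ m ≤ N-1
  have C1 : ∀ m, 1 ≤ m → m + 1 ≤ N → ∀ a, a ≤ m →
      F a (m - a) = (Nat.choose m a : K) * G (m - 1) := by
    intro m hm1 hmN a
    induction a with
    | zero =>
      intro _
      rw [Nat.sub_zero, Nat.choose_zero_right, Nat.cast_one, one_mul, hG1 (m - 1) (by omega),
        show m - 1 + 1 = m from by omega]
    | succ a ih =>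
      intro ha
      have iha := ih (by omega)
      have h := D1 a (m - a) (by omega) (by omega) (by omega)
      rw [if_pos (show 1 ≤ a + 1 + (m - a) ∧ a + 1 + (m - a) ≤ N by omega)] at h
      rw [show a + (m - a) = m from by omega, show m - a - 1 = m - (a + 1) from by omega,
        show a + 1 + (m - a) = m + 1 from by omega] at h
      rw [hsym (a+1) (m - (a+1)) (by omega) (by omega)] at h
      have hFm : F m 0 = G (m - 1) := by
        rw [hsym 0 m (by omega) (by omega), hG1 (m - 1) (by omega),
          show m - 1 + 1 = m from by omega]
      linear_combination h - iha - (((m+1).choose (a+1) : K)) * hFm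
        - G (m - 1) * pascal_char2 (K := K) m a - ((m.choose (a+1) : K)) * G (m - 1) * h2
  -- level N
  have C2 : 2 ≤ N → ∀ a, 1 ≤ a → a ≤ N - 1 → F a (N - a) = G (N - 1) := by
    intro hN2 a
    induction a with
    | zero => intro h1 _; exact absurd h1 (by omega)
    | succ a ih =>
      intro _ ha2
      rcases Nat.eq_zero_or_pos a with rfl | hpos
      · rw [hG2 hN2]
      · have iha := ih (by omega) (by omega)
        have h := D1 a (N - a) (by omega) (by omega) (by omega)
        rw [if_neg (by omega)] at h
        rw [show N - a - 1 = N - (a + 1) from by omega] at h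
        rw [hsym (a + 1) (N - (a + 1)) (by omega) (by omega)] at h
        linear_combination h - iha - G (N - 1) * h2
  -- high odd levels vanish
  have C3 : ∀ a b : ℕ, a < N → b < N → N < a + b → (a + b) % 2 = 1 → F a b = 0 := by
    intro a b ha hb hab hpar
    have h := R 1 a b (by omega) ha hb
    rw [if_pos (show 1 ≤ 1 + a ∧ 1 + a ≤ N by omega),
        if_pos (show 1 ≤ b + 1 ∧ b + 1 ≤ N by omega),
        if_neg (by omega)] at h
    rw [show 1 + a - 1 = a from by omega, show b + 1 - 1 = b from by omega,
        show 1 + a = a + 1 from by omega, Nat.choose_one_right,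
        Nat.choose_succ_self_right] at h
    rw [hsym a b ha hb] at h
    have hcoef : ((a + 1 : ℕ) : K) + ((b + 1 : ℕ) : K) = 1 := by
      rw [← Nat.cast_add]; exact cast_odd_char2 (by omega)
    linear_combination h - F a b * hcoef
  -- high even levels vanish
  have C4 : ∀ k a b : ℕ, a < N → b < N → N < a + b → b = a + 2 * k → F a b = 0 := by
    intro k
    induction k with
    | zero =>
      intro a b ha _ _ hba
      rw [show b = a from by omega]
      exact halt' a ha
    | succ k ih =>
      intro a b ha hb hab hba
      have h := D1 a b (by omega) (by omega) hb
      rw [if_neg (by omega)] at h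
      have hsba := hsym (a + 1) (b - 1) (by omega) (by omega)
      have hih := ih (a + 1) (b - 1) (by omega) (by omega) (by omega) (by omega)
      linear_combination h - hsba - hih
  -- the main combinatorial identity
  have MAIN : ∀ a b : ℕ, a < N → b < N →
      F a b = if 1 ≤ a + b ∧ a + b ≤ N then (Nat.choose (a + b) a : K) * G (a + b - 1) else 0 := by
    intro a b ha hb
    by_cases h0 : a + b = 0
    · rw [if_neg (by omega), show a = 0 from by omega, show b = 0 from by omega]
      exact halt' 0 (by omega)
    by_cases hle : a + b ≤ N
    · rw [if_pos (by omega)]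
      by_cases hN' : a + b = N
      · have hC2 := C2 (by omega) a (by omega) (by omega)
        rw [show N - a = b from by omega] at hC2
        have hlu : ((Nat.choose (a + b) a : K)) = 1 := by
          rw [hN']; exact cast_odd_char2 (hluc a (by omega))
        rw [hC2, hlu, one_mul, hN']
      · have hC1 := C1 (a + b) (by omega) (by omega) a (by omega)
        rw [show a + b - a = b from by omega] at hC1
        exact hC1
    · rw [if_neg (by omega)]
      rcases Nat.mod_two_eq_zero_or_one (a + b) with hpar | hpar
      · rcases le_or_gt a b with hab | hab
        · exact C4 ((b - a) / 2) a b ha hb (by omega) (by omega)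
        · rw [hsym b a hb ha]
          exact C4 ((a - b) / 2) b a hb ha (by omega) (by omega)
      · exact C3 a b ha hb (by omega) hpar
  -- the linear functional ψ
  set ψ : (Fin N → K) →ₗ[K] K := ∑ k : Fin N, G (k : ℕ) • LinearMap.proj k with hψdef
  have hψ : ∀ t : Fin N, ψ (Pi.single t 1) = G (t : ℕ) := by
    intro t
    rw [hψdef, LinearMap.sum_apply]
    rw [Finset.sum_eq_single t]
    · simp
    · intro k _ hk
      simp [LinearMap.proj_apply, Pi.single_apply, hk]
    · simp
  refine ⟨ψ, ?_⟩
  have heq : φ = br.compr₂ ψ := by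
    apply LinearMap.ext_basis (Pi.basisFun K (Fin N)) (Pi.basisFun K (Fin N))
    intro r s
    rw [Pi.basisFun_apply, Pi.basisFun_apply, LinearMap.compr₂_apply, hbr r s]
    have hφ : φ (Pi.single r 1) (Pi.single s 1) = F (r : ℕ) (s : ℕ) :=
      (hF (r : ℕ) (s : ℕ) r.isLt s.isLt).symm
    rw [hφ, MAIN (r : ℕ) (s : ℕ) r.isLt s.isLt]
    by_cases hc : 1 ≤ (r : ℕ) + (s : ℕ) ∧ (r : ℕ) + (s : ℕ) ≤ N
    · rw [if_pos hc, dif_pos hc, map_smul, smul_eq_mul, hψ]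
    · rw [if_neg hc, dif_neg hc, map_zero]
  intro x y
  rw [heq, LinearMap.compr₂_apply]


/-!
STATEMENT 19: for the Zassenhaus algebra `W₁'(n)` over a field `K` of characteristic 2
(basis `{e_i : -1 ≤ i ≤ 2^n - 3}`, `[e_i,e_j] = C(i+j+2, i+1)·e_{i+j}` for
`-1 ≤ i+j ≤ 2^n - 3` and 0 otherwise; realized on `Fin (2^n - 1)` with the index `r`
standing for `i = r - 1`, so `[ε_r,ε_s] = C(r+s, r)·ε_{r+s-1}` for `1 ≤ r+s ≤ 2^n - 1`),
every alternating 2-cocycle with trivial coefficients is a 2-coboundary, i.e.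
`H²(W₁'(n),K) = 0` (Chevalley–Eilenberg cohomology), stated elementwise.
-/

theorem zassenhaus_H2_vanishes {K : Type*} [Field K] [CharP K 2] (n : ℕ) (hn : 1 ≤ n)
    (br : (Fin (2 ^ n - 1) → K) →ₗ[K] (Fin (2 ^ n - 1) → K) →ₗ[K] (Fin (2 ^ n - 1) → K))
    (hbr : ∀ r s : Fin (2 ^ n - 1),
      br (Pi.single r 1) (Pi.single s 1) =
        if h : 1 ≤ (r : ℕ) + (s : ℕ) ∧ (r : ℕ) + (s : ℕ) ≤ 2 ^ n - 1 then
          (Nat.choose ((r : ℕ) + (s : ℕ)) (r : ℕ) : K) •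
            (Pi.single (⟨(r : ℕ) + (s : ℕ) - 1, by have := r.isLt; omega⟩ :
              Fin (2 ^ n - 1)) 1 : Fin (2 ^ n - 1) → K)
        else 0) :
    ∀ φ : (Fin (2 ^ n - 1) → K) →ₗ[K] (Fin (2 ^ n - 1) → K) →ₗ[K] K,
      -- `φ` alternating:
      (∀ x, φ x x = 0) →
      -- `φ` a 2-cocycle:
      (∀ x y z, φ (br x y) z + φ (br z x) y + φ (br y z) x = 0) →
      -- `φ` is a 2-coboundary:
      ∃ ψ : (Fin (2 ^ n - 1) → K) →ₗ[K] K, ∀ x y, φ x y = ψ (br x y) := by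
  intro φ halt hcoc
  have hN1 : 1 ≤ 2 ^ n - 1 := by
    have h2 : 2 ≤ 2 ^ n := by
      calc (2:ℕ) = 2 ^ 1 := (pow_one 2).symm
      _ ≤ 2 ^ n := Nat.pow_le_pow_right (by norm_num) hn
    omega
  exact zass_aux (2 ^ n - 1) hN1 (choose_two_pow_sub_one_mod_two n) br hbr φ halt hcoc
end
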